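/- arXiv:0707.1381 — 11 statements merged into one kernel-verified Lean document; each statement's English description precedes it below -/
import Mathlib

section
/- Let S be an m×n integer matrix with no zero column and let ρ₀ = lcm{e(J) : ∅ ≠ J ⊆ [n]} be its lcm period. Then for every positive integer q with gcd(q, ρ₀) = 1, the number of points z ∈ (ℤ/qℤ)^m such that every entry of zS is nonzero equals Σ_{J⊆[n]} (−1)^{|J|} q^{m−ℓ(J)} (the value at q of the ordinary characteristic polynomial of the real hyperplane arrangement defined by the columns of S). -/
/-!
Inclusion–exclusion over the columns reduces `χ_S(q)` to counting, for each `J`, the solutions of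
`z S_J = 0` in `(ℤ/qℤ)^m`, and by the Chinese remainder theorem it suffices to count modulo a prime
power `p^k`. As `q` is prime to `ρ₀`, it is prime to `e_{J,1} ⋯ e_{J,ℓ(J)}`, the gcd of the
`ℓ(J)`-minors of `S_J`, so some `ℓ(J)`-minor `A` is a unit mod `p^k`. All larger minors vanish, so
`S_J = P A⁻¹ Q` with `P`, `Q` the columns and rows through `A`; the solutions are then the kernel
of the surjection `z ↦ z P` onto `(ℤ/p^kℤ)^ℓ(J)`, which has `p^(k (m - ℓ(J)))` elements.
-/

/-- The number of points of the complement of the mod-`q` reduction of the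
integral arrangement defined by the columns of `S`. -/
noncomputable def chiCount (m n q : ℕ) (S : Matrix (Fin m) (Fin n) ℤ) : ℕ :=
  Nat.card {z : Fin m → ZMod q //
    ∀ j, Matrix.vecMul z (S.map (fun a => (a : ZMod q))) j ≠ 0}

/-- The `k`-th determinantal divisor of the submatrix `S_J`; one has
`detDivisor S J k = e_{J,1} ⋯ e_{J,k}` for `k ≤ rank S_J`, where the `e_{J,j}`
are the elementary divisors of `S_J`. -/
def detDivisor {m n : ℕ} (S : Matrix (Fin m) (Fin n) ℤ) (J : Finset (Fin n)) (k : ℕ) : ℕ :=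
  Finset.gcd Finset.univ
    (fun p : (Fin k → Fin m) × (Fin k → {j : Fin n // j ∈ J}) =>
      (Matrix.det (Matrix.of fun a b => S (p.1 a) (p.2 b).1)).natAbs)

open Matrix Finset

namespace Matrix

variable {R ι ν : Type*}

theorem det_submatrix_eq_zero_of_rank_lt [CommRing R] [IsDomain R] [Fintype ν] (M : Matrix ι ν R)
    {k : ℕ} (f : Fin k → ι) (g : Fin k → ν) (h : M.rank < k) : (M.submatrix f g).det = 0 := by
  by_contra hdet
  have := rank_submatrix_le M f g
  rw [rank_of_det_ne_zero hdet, Fintype.card_fin] at this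
  omega

variable [CommRing R]

theorem eq_submatrix_mul_inv_mul_submatrix (M : Matrix ι ν R) {r : ℕ}
    (hminor : ∀ (f : Fin (r + 1) → ι) (g : Fin (r + 1) → ν), (M.submatrix f g).det = 0)
    (f : Fin r → ι) (g : Fin r → ν) (hu : IsUnit (M.submatrix f g).det) :
    M = M.submatrix id g * (M.submatrix f g)⁻¹ * M.submatrix f id := by
  ext i j
  set A := M.submatrix f g
  have := A.invertibleOfIsUnitDet hu
  -- The minor bordering `A` by row `i` and column `j` vanishes, and its Schur complement with
  -- respect to `A` is `M i j - (M.submatrix id g * A⁻¹ * M.submatrix f id) i j`.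
  have hblock : fromBlocks A (of fun a (_ : Fin 1) => M (f a) j) (of fun (_ : Fin 1) b => M i (g b))
      (of fun _ _ => M i j) = M.submatrix (Sum.elim f fun _ => i) (Sum.elim g fun _ => j) := by
    ext (_ | _) (_ | _) <;> rfl
  have hdet := hminor (Sum.elim f (fun _ => i) ∘ finSumFinEquiv.symm)
    (Sum.elim g (fun _ => j) ∘ finSumFinEquiv.symm)
  rw [← submatrix_submatrix, det_submatrix_equiv_self, ← hblock, det_fromBlocks₁₁,
    hu.mul_right_eq_zero, det_unique] at hdet
  simpa [sub_eq_zero, mul_apply, invOf_eq_nonsing_inv] using hdet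

theorem card_ker_vecMulLinear_of_isUnit_det_submatrix [Fintype R] [Fintype ι] (M : Matrix ι ν R)
    {r : ℕ} (hr : r ≤ Fintype.card ι)
    (hminor : ∀ (f : Fin (r + 1) → ι) (g : Fin (r + 1) → ν), (M.submatrix f g).det = 0)
    (f : Fin r → ι) (g : Fin r → ν) (hu : IsUnit (M.submatrix f g).det) :
    Nat.card (LinearMap.ker M.vecMulLinear) = Fintype.card R ^ (Fintype.card ι - r) := by
  classical
  set A := M.submatrix f g
  set P := M.submatrix id g
  have hfactor := eq_submatrix_mul_inv_mul_submatrix M hminor f g hu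
  have hker : LinearMap.ker M.vecMulLinear = LinearMap.ker P.vecMulLinear := by
    ext z
    simp only [LinearMap.mem_ker, vecMulLinear_apply]
    refine ⟨fun h => ?_, fun h => ?_⟩
    · rw [show z ᵥ* P = (z ᵥ* M) ∘ g from rfl, h]
      rfl
    · rw [hfactor, ← vecMul_vecMul, ← vecMul_vecMul, h, zero_vecMul, zero_vecMul]
  have hsurj : Function.Surjective P.vecMulLinear := by
    intro w
    refine ⟨w ᵥ* A⁻¹ ᵥ* (1 : Matrix ι ι R).submatrix f id, ?_⟩
    rw [vecMulLinear_apply, vecMul_vecMul, vecMul_vecMul,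
      ← submatrix_mul _ _ _ _ _ Function.bijective_id, Matrix.one_mul, nonsing_inv_mul _ hu,
      vecMul_one]
  have hcard := (LinearMap.ker P.vecMulLinear).card_eq_card_quotient_mul_card
  rw [Nat.card_congr (P.vecMulLinear.quotKerEquivOfSurjective hsurj).toEquiv, Nat.card_fun,
    Nat.card_fun, Nat.card_eq_fintype_card, Nat.card_eq_fintype_card (α := ι), Nat.card_fin,
    ← pow_sub_mul_pow _ hr] at hcard
  rw [hker]
  exact (Nat.eq_of_mul_eq_mul_right (pow_pos Fintype.card_pos r) hcard).symm

theorem vecMul_map_intCast_comp {S : Type*} [CommRing S] [Fintype ι] (ψ : R →+* S)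
    (T : Matrix ι ν ℤ) (z : ι → R) :
    ψ ∘ (z ᵥ* T.map (Int.cast : ℤ → R)) = (ψ ∘ z) ᵥ* T.map (Int.cast : ℤ → S) := by
  ext j
  rw [Function.comp_apply, RingHom.map_vecMul, map_map]
  congr 2
  ext a
  simp

theorem card_ker_vecMulLinear_map_intCast_of_ringEquiv_prod {R₁ R₂ : Type*} [CommRing R₁]
    [CommRing R₂] [Fintype ι] (φ : R ≃+* R₁ × R₂) (T : Matrix ι ν ℤ) :
    Nat.card (LinearMap.ker (T.map (Int.cast : ℤ → R)).vecMulLinear) =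
      Nat.card (LinearMap.ker (T.map (Int.cast : ℤ → R₁)).vecMulLinear) *
        Nat.card (LinearMap.ker (T.map (Int.cast : ℤ → R₂)).vecMulLinear) := by
  let ψ₁ := (RingHom.fst R₁ R₂).comp φ.toRingHom
  let ψ₂ := (RingHom.snd R₁ R₂).comp φ.toRingHom
  have hsplit : ∀ z : ι → R, z ᵥ* T.map Int.cast = 0 ↔
      (ψ₁ ∘ z) ᵥ* T.map Int.cast = 0 ∧ (ψ₂ ∘ z) ᵥ* T.map Int.cast = 0 := by
    intro z
    rw [← vecMul_map_intCast_comp, ← vecMul_map_intCast_comp]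
    simp only [funext_iff, ← forall_and]
    exact forall_congr' fun j => (map_eq_zero_iff φ φ.injective).symm.trans Prod.ext_iff
  let E : (ι → R) ≃ (ι → R₁) × (ι → R₂) :=
    (Equiv.piCongrRight fun _ => φ.toEquiv).trans (Equiv.arrowProdEquivProdArrow _ _ _)
  rw [← Nat.card_prod]
  exact Nat.card_congr ((E.subtypeEquiv fun z => hsplit z).trans
    (Equiv.subtypeProdEquivProd ..))

theorem det_submatrix_map_intCast {k : ℕ} (T : Matrix ι ν ℤ) (f : Fin k → ι) (g : Fin k → ν) :
    ((T.map (Int.cast : ℤ → R)).submatrix f g).det = ((T.submatrix f g).det : R) :=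
  (RingHom.map_det (Int.castRingHom R) (T.submatrix f g)).symm

variable [Fintype ι] [Fintype ν]

def minorGcd (T : Matrix ι ν ℤ) (k : ℕ) : ℕ :=
  univ.gcd fun p : (Fin k → ι) × (Fin k → ν) => (T.submatrix p.1 p.2).det.natAbs

theorem exists_isUnit_det_submatrix_of_not_dvd_minorGcd (T : Matrix ι ν ℤ) {p k r : ℕ}
    (hp : p.Prime) (hpT : ¬ p ∣ T.minorGcd r) :
    ∃ (f : Fin r → ι) (g : Fin r → ν), IsUnit ((T.submatrix f g).det : ZMod (p ^ k)) := by
  by_contra! hnu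
  refine hpT (dvd_gcd fun ⟨f, g⟩ _ => ?_)
  by_contra hndvd
  exact hnu f g ((ZMod.coe_int_isUnit_iff_isCoprime _ _).mpr
    (Int.isCoprime_iff_gcd_eq_one.mpr ((hp.coprime_iff_not_dvd.mpr hndvd).pow_left k)))

theorem card_ker_vecMulLinear_map_intCast (T : Matrix ι ν ℤ) {q : ℕ} (hq : 0 < q)
    (hco : q.Coprime (T.minorGcd T.rank)) :
    Nat.card (LinearMap.ker (T.map (Int.cast : ℤ → ZMod q)).vecMulLinear) =
      q ^ (Fintype.card ι - T.rank) := by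
  induction q using Nat.recOnPosPrimePosCoprime with
  | zero => exact absurd hq (lt_irrefl 0)
  | one => rw [one_pow]; exact Nat.card_of_subsingleton 0
  | prime_pow p k hp hk =>
    have : NeZero (p ^ k) := ⟨hq.ne'⟩
    obtain ⟨f, g, hu⟩ := T.exists_isUnit_det_submatrix_of_not_dvd_minorGcd (k := k) hp
      (hp.coprime_iff_not_dvd.mp (hco.coprime_dvd_left (dvd_pow_self p hk.ne')))
    rw [card_ker_vecMulLinear_of_isUnit_det_submatrix _ T.rank_le_card_height (fun f g => ?_) f g
      (by rwa [det_submatrix_map_intCast]), ZMod.card]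
    rw [det_submatrix_map_intCast, det_submatrix_eq_zero_of_rank_lt T f g (Nat.lt_succ_self _),
      Int.cast_zero]
  | coprime a b ha hb hab iha ihb =>
    rw [card_ker_vecMulLinear_map_intCast_of_ringEquiv_prod (ZMod.chineseRemainder hab),
      iha (by omega) hco.coprime_mul_right, ihb (by omega) hco.coprime_mul_left, mul_pow]

end Matrix

theorem card_forall_ne_zero_eq_sum_powerset {α ι M : Type*} [Finite α] [Fintype ι] [Zero M]
    (φ : α → ι → M) :
    (Nat.card {a // ∀ i, φ a i ≠ 0} : ℤ) =
      ∑ J ∈ univ.powerset, (-1) ^ #J * (Nat.card {a // ∀ i ∈ J, φ a i = 0} : ℤ) := by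
  classical
  have := Fintype.ofFinite α
  have hinf (J : Finset ι) : J.inf (fun i => univ.filter (φ · i = 0)) =
      univ.filter fun a => ∀ i ∈ J, φ a i = 0 := by
    ext a
    simp [mem_inf]
  have hcompl : univ.inf (fun i => (univ.filter (φ · i = 0))ᶜ) =
      univ.filter fun a => ∀ i, φ a i ≠ 0 := by
    ext a
    simp [mem_inf]
  simp only [Nat.card_eq_fintype_card, Fintype.card_subtype, ← hinf, ← hcompl]
  exact inclusion_exclusion_card_inf_compl _ _

theorem dvd_of_forall_dvd_succ {e : ℕ → ℕ} {l : ℕ}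
    (h : ∀ j, 1 ≤ j → j + 1 ≤ l → e j ∣ e (j + 1)) {i : ℕ} (hi : 1 ≤ i) (hil : i ≤ l) :
    e i ∣ e l :=
  Nat.le_induction (P := fun k _ => k ≤ l → e i ∣ e k) (fun _ => dvd_rfl)
    (fun k hik ih hk => (ih (by omega)).trans (h k (by omega) hk)) l hil le_rfl

theorem detDivisor_eq_minorGcd {m n : ℕ} (S : Matrix (Fin m) (Fin n) ℤ) (J : Finset (Fin n))
    (k : ℕ) :
    detDivisor S J k = (Matrix.of fun i (j : {j : Fin n // j ∈ J}) => S i j.1).minorGcd k :=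
  rfl

theorem stmt_1_general (m n : ℕ)
    (S : Matrix (Fin m) (Fin n) ℤ)
    (ℓ : Finset (Fin n) → ℕ)
    (hℓ : ∀ J, ℓ J = (Matrix.of fun i (j : {j : Fin n // j ∈ J}) => S i j.1).rank)
    (e : Finset (Fin n) → ℕ → ℕ)
    (hchain : ∀ J, ∀ j, 1 ≤ j → j + 1 ≤ ℓ J → e J j ∣ e J (j + 1))
    (hsnf : ∀ J, ∀ k ≤ ℓ J, ∏ j ∈ Finset.Icc 1 k, e J j = detDivisor S J k)
    (ρ : ℕ)
    (hρ : ρ = Finset.lcm ((Finset.univ : Finset (Fin n)).powerset.filter (· ≠ ∅))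
      (fun J => e J (ℓ J)))
    (q : ℕ) (hq : 0 < q) (hco : Nat.gcd q ρ = 1) :
    (chiCount m n q S : ℤ) =
      ∑ J ∈ (Finset.univ : Finset (Fin n)).powerset,
        (-1) ^ J.card * (q : ℤ) ^ (m - ℓ J) := by
  have : NeZero q := ⟨hq.ne'⟩
  rw [chiCount, card_forall_ne_zero_eq_sum_powerset]
  refine sum_congr rfl fun J _ => ?_
  set T := Matrix.of fun i (j : {j : Fin n // j ∈ J}) => S i j.1
  have hcop : q.Coprime (T.minorGcd T.rank) := by
    rw [← hℓ, ← detDivisor_eq_minorGcd, ← hsnf J _ le_rfl]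
    refine Nat.Coprime.prod_right fun i hi => Nat.Coprime.coprime_dvd_right ?_ hco
    obtain ⟨hi1, hiℓ⟩ := mem_Icc.mp hi
    -- `ρ` only sees nonempty `J`, and `ℓ J ≥ 1` rules out `J = ∅`.
    have hJ : J ≠ ∅ := by
      rw [← nonempty_iff_ne_empty, ← card_pos, ← Fintype.card_coe]
      exact (hi1.trans hiℓ).trans ((hℓ J).trans_le T.rank_le_card_width)
    exact (dvd_of_forall_dvd_succ (hchain J) hi1 hiℓ).trans
      (hρ ▸ dvd_lcm (mem_filter.mpr ⟨mem_powerset.mpr (subset_univ J), hJ⟩))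
  have hker :
      Nat.card {z : Fin m → ZMod q // ∀ j ∈ J, (z ᵥ* S.map (fun a => (a : ZMod q))) j = 0} =
        Nat.card (LinearMap.ker (T.map (Int.cast : ℤ → ZMod q)).vecMulLinear) :=
    Nat.card_congr <| Equiv.subtypeEquivRight fun z => by
      simp only [LinearMap.mem_ker, vecMulLinear_apply, funext_iff, Subtype.forall]
      rfl
  rw [hker, Matrix.card_ker_vecMulLinear_map_intCast T hq hcop, ← hℓ, Fintype.card_fin,
    Nat.cast_pow]

/-- If `gcd(q, ρ₀) = 1`, where `ρ₀ = lcm{e(J) : ∅ ≠ J ⊆ [n]}` is the lcm period of `S`,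
then the number of `z ∈ (ℤ/qℤ)^m` with all entries of `z S` nonzero equals
`Σ_{J ⊆ [n]} (−1)^{|J|} q^{m−ℓ(J)}`, the value at `q` of the characteristic polynomial
of the real arrangement defined by the columns of `S`. -/
theorem stmt_1 (m n : ℕ) (hm : 0 < m) (hn : 0 < n)
    (S : Matrix (Fin m) (Fin n) ℤ) (hS : ∀ j, ∃ i, S i j ≠ 0)
    (ℓ : Finset (Fin n) → ℕ)
    (hℓ : ∀ J, ℓ J = (Matrix.of fun i (j : {j : Fin n // j ∈ J}) => S i j.1).rank)
    (e : Finset (Fin n) → ℕ → ℕ)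
    (hpos : ∀ J, ∀ j ∈ Finset.Icc 1 (ℓ J), 0 < e J j)
    (hchain : ∀ J, ∀ j, 1 ≤ j → j + 1 ≤ ℓ J → e J j ∣ e J (j + 1))
    (hsnf : ∀ J, ∀ k ≤ ℓ J, ∏ j ∈ Finset.Icc 1 k, e J j = detDivisor S J k)
    (ρ : ℕ)
    (hρ : ρ = Finset.lcm ((Finset.univ : Finset (Fin n)).powerset.filter (· ≠ ∅))
      (fun J => e J (ℓ J)))
    (q : ℕ) (hq : 0 < q) (hco : Nat.gcd q ρ = 1) :
    (chiCount m n q S : ℤ) =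
      ∑ J ∈ (Finset.univ : Finset (Fin n)).powerset,
        (-1) ^ J.card * (q : ℤ) ^ (m - ℓ J) :=
  stmt_1_general m n S ℓ hℓ e hchain hsnf ρ hρ q hq hco
end

section
/- (Corollary 2.3) Let S be an m×n integer matrix with no zero column, with lcm period ρ₀, and let d, d' be positive divisors of ρ₀. Suppose that for some positive integer s one has gcd(e(J), d) = gcd(e(J), d') for all nonempty J ⊆ [n] with |J| ≤ s. Then the polynomial P_d(t) − P_{d'}(t) has degree strictly less than m − s. In particular, if gcd(e(J), d) = 1 for all nonempty J with |J| ≤ s, then deg(P_d(t) − P_1(t)) < m − s. -/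
/-- The constituent `P_d(t) = Σ_{J ⊆ [n]} (−1)^{|J|} e(J, d) t^{m−ℓ(J)}` of the
characteristic quasi-polynomial, where `e(J, d) = ∏_{j=1}^{ℓ(J)} gcd(e_{J,j}, d)`. -/
noncomputable def Ppoly (m n : ℕ) (ℓ : Finset (Fin n) → ℕ)
    (e : Finset (Fin n) → ℕ → ℕ) (d : ℕ) : Polynomial ℤ :=
  ∑ J ∈ (Finset.univ : Finset (Fin n)).powerset,
    Polynomial.C ((-1) ^ J.card * ∏ j ∈ Finset.Icc 1 (ℓ J), (Nat.gcd (e J j) d : ℤ)) *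
      Polynomial.X ^ (m - ℓ J)

open Module Submodule

namespace Matrix

variable {m n K : Type*}

theorem le_rank_of_det_submatrix_ne_zero [Fintype n] {R : Type*} [CommRing R] [IsDomain R]
    {A : Matrix m n R} {k : ℕ} (r : Fin k → m) (c : Fin k → n)
    (h : (A.submatrix r c).det ≠ 0) : k ≤ A.rank := by
  simpa using (rank_of_det_ne_zero h).symm.le.trans (A.rank_submatrix_le r c)

theorem exists_linearIndependent_col_of_le_rank [Fintype n] [Field K] {A : Matrix m n K} {k : ℕ}
    (h : k ≤ A.rank) : ∃ c : Fin k → n, LinearIndependent K (A.submatrix id c).col := by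
  obtain ⟨κ, a, ha, hspan, hli⟩ := exists_linearIndependent' K A.col
  have : Fintype κ := have := Finite.of_injective a ha; Fintype.ofFinite κ
  rw [rank_eq_finrank_span_cols, ← hspan, finrank_span_eq_card hli] at h
  obtain ⟨f⟩ := Function.Embedding.nonempty_of_card_le (α := Fin k) (β := κ) (by simpa using h)
  exact ⟨a ∘ f, hli.comp f f.injective⟩

theorem exists_det_submatrix_ne_zero_of_le_rank [Fintype m] [Fintype n] [Field K]
    {A : Matrix m n K} {k : ℕ}
    (h : k ≤ A.rank) : ∃ (r : Fin k → m) (c : Fin k → n), (A.submatrix r c).det ≠ 0 := by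
  obtain ⟨c, hc⟩ := exists_linearIndependent_col_of_le_rank h
  have hcT : k ≤ (A.submatrix id c)ᵀ.rank := by
    rw [LinearIndependent.rank_matrix (by rwa [row_transpose]), Fintype.card_fin]
  obtain ⟨r, hr⟩ := exists_linearIndependent_col_of_le_rank hcT
  refine ⟨r, c, ?_⟩
  rw [← isUnit_iff_ne_zero, ← isUnit_iff_isUnit_det]
  exact linearIndependent_rows_iff_isUnit.mp hr

theorem le_rank_iff_exists_det_submatrix_ne_zero [Fintype m] [Fintype n] [Field K]
    {A : Matrix m n K} {k : ℕ} :
    k ≤ A.rank ↔ ∃ (r : Fin k → m) (c : Fin k → n), (A.submatrix r c).det ≠ 0 :=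
  ⟨exists_det_submatrix_ne_zero_of_le_rank,
    fun ⟨r, c, h⟩ => le_rank_of_det_submatrix_ne_zero r c h⟩

theorem finrank_span_col_image [Field K] (A : Matrix m n K) (J : Finset n) :
    finrank K (span K (A.col '' J)) = (A.submatrix id ((↑) : J → n)).rank := by
  rw [rank_eq_finrank_span_cols, Set.image_eq_range]
  rfl

end Matrix

theorem exists_mem_finrank_span_image_insert {K V ι : Type*} [DivisionRing K] [AddCommGroup V]
    [Module K V] [FiniteDimensional K V] (v : ι → V) {s t : Set ι}
    (h : finrank K (span K (v '' s)) < finrank K (span K (v '' t))) :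
    ∃ j ∈ t, finrank K (span K (v '' s)) < finrank K (span K (v '' insert j s)) := by
  by_contra! hle
  have hmem : ∀ j ∈ t, v j ∈ span K (v '' s) := fun j hj => by
    have hsub : span K (v '' s) ≤ span K (v '' insert j s) :=
      span_mono (Set.image_mono (Set.subset_insert j s))
    rw [eq_of_le_of_finrank_le hsub (hle j hj)]
    exact subset_span (Set.mem_image_of_mem v (Set.mem_insert j s))
  have hspan : span K (v '' t) ≤ span K (v '' s) := span_le.mpr (Set.image_subset_iff.mpr hmem)
  exact (finrank_mono hspan).not_gt h

theorem dvd_of_forall_dvd_succ_s2 {α : Type*} [Monoid α] {f : ℕ → α} {a b : ℕ}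
    (h : ∀ j, a ≤ j → j + 1 ≤ b → f j ∣ f (j + 1)) {i : ℕ} (hai : a ≤ i) (hib : i ≤ b) :
    f i ∣ f b := by
  induction b, hib using Nat.le_induction with
  | base => rfl
  | succ b hib ih =>
    exact (ih fun j hj hjb => h j hj (by omega)).trans (h b (hai.trans hib) le_rfl)

open Matrix

section detDivisor

variable {m n : ℕ} (S : Matrix (Fin m) (Fin n) ℤ)

theorem detDivisor_ne_zero_iff_exists {J : Finset (Fin n)} {k : ℕ} :
    detDivisor S J k ≠ 0 ↔ ∃ (r : Fin k → Fin m) (c : Fin k → J),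
      (S.submatrix r (Subtype.val ∘ c)).det ≠ 0 := by
  simp only [detDivisor, ne_eq, Finset.gcd_eq_zero_iff, Finset.mem_univ, Int.natAbs_eq_zero,
    forall_const, Prod.forall, not_forall]
  rfl

theorem detDivisor_ne_zero_iff_le_finrank {J : Finset (Fin n)} {k : ℕ} :
    detDivisor S J k ≠ 0 ↔ k ≤ finrank ℚ (span ℚ ((S.map (Int.cast : ℤ → ℚ)).col '' J)) := by
  rw [finrank_span_col_image, le_rank_iff_exists_det_submatrix_ne_zero,
    detDivisor_ne_zero_iff_exists]
  refine exists_congr fun r => exists_congr fun c => ?_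
  rw [submatrix_submatrix, Function.id_comp, submatrix_map,
    ← Int.cast_det, Int.cast_ne_zero]

theorem detDivisor_dvd_det {J : Finset (Fin n)} {k : ℕ} (r : Fin k → Fin m) (c : Fin k → Fin n)
    (hc : ∀ b, c b ∈ J) : detDivisor S J k ∣ (S.submatrix r c).det.natAbs :=
  Finset.gcd_dvd (Finset.mem_univ (r, fun b => (⟨c b, hc b⟩ : J)))

theorem detDivisor_ne_zero_of_le {J : Finset (Fin n)} {k l : ℕ} (hkl : k ≤ l)
    (h : detDivisor S J l ≠ 0) : detDivisor S J k ≠ 0 :=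
  (detDivisor_ne_zero_iff_le_finrank S).2 (hkl.trans ((detDivisor_ne_zero_iff_le_finrank S).1 h))

theorem detDivisor_dvd_of_subset {J J' : Finset (Fin n)} (h : J ⊆ J') (k : ℕ) :
    detDivisor S J' k ∣ detDivisor S J k :=
  Finset.dvd_gcd fun x _ => detDivisor_dvd_det S x.1 _ fun b => h (x.2 b).2

theorem exists_subset_factorization_detDivisor_le {p : ℕ} (hp : p.Prime) {J : Finset (Fin n)}
    {k : ℕ} (hJ : detDivisor S J (k + 1) ≠ 0) :
    ∃ J' ⊆ J, J'.card ≤ k + 1 ∧ detDivisor S J' (k + 1) ≠ 0 ∧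
      (detDivisor S J (k + 1)).factorization p + (detDivisor S J' k).factorization p ≤
        (detDivisor S J' (k + 1)).factorization p + (detDivisor S J k).factorization p := by
  classical
  have hJk : detDivisor S J k ≠ 0 := detDivisor_ne_zero_of_le S k.le_succ hJ
  obtain ⟨r, c, hmin⟩ : ∃ (r : Fin k → Fin m) (c : Fin k → J),
      ¬ p ^ ((detDivisor S J k).factorization p + 1) ∣
        (S.submatrix r (Subtype.val ∘ c)).det.natAbs := by
    by_contra! h
    exact Nat.pow_succ_factorization_not_dvd hJk hp (Finset.dvd_gcd fun x _ => h x.1 x.2)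
  let J'' := Finset.univ.image (Subtype.val ∘ c)
  have hJ''J : J'' ⊆ J := Finset.image_subset_iff.2 fun b _ => (c b).2
  have hJ''dvd : detDivisor S J'' k ∣ (S.submatrix r (Subtype.val ∘ c)).det.natAbs :=
    detDivisor_dvd_det S r _ fun b => Finset.mem_image_of_mem _ (Finset.mem_univ b)
  have hJ'' : detDivisor S J'' k ≠ 0 := by
    intro h0
    rw [h0, zero_dvd_iff] at hJ''dvd
    exact hmin (hJ''dvd ▸ dvd_zero _)
  have hvJ'' : (detDivisor S J'' k).factorization p ≤ (detDivisor S J k).factorization p := by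
    by_contra! h
    exact hmin (((hp.pow_dvd_iff_le_factorization hJ'').2 h).trans hJ''dvd)
  have hcardJ'' : J''.card ≤ k := Finset.card_image_le.trans (by simp)
  have hrankJ'' := (detDivisor_ne_zero_iff_le_finrank S).1 hJ''
  have hrank : finrank ℚ (span ℚ ((S.map (Int.cast : ℤ → ℚ)).col '' J'')) <
      finrank ℚ (span ℚ ((S.map (Int.cast : ℤ → ℚ)).col '' J)) := by
    have hle :=
      ((S.map (Int.cast : ℤ → ℚ)).submatrix id ((↑) : J'' → Fin n)).rank_le_card_width
    rw [Fintype.card_coe, ← finrank_span_col_image] at hle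
    have := (detDivisor_ne_zero_iff_le_finrank S).1 hJ
    omega
  obtain ⟨j, hj, hlt⟩ := exists_mem_finrank_span_image_insert _ hrank
  have hJ'J : insert j J'' ⊆ J := Finset.insert_subset hj hJ''J
  have hJ' : detDivisor S (insert j J'') (k + 1) ≠ 0 := by
    rw [detDivisor_ne_zero_iff_le_finrank, Finset.coe_insert]
    omega
  have hJ'k := detDivisor_ne_zero_of_le S k.le_succ hJ'
  have h₁ := (Nat.factorization_le_iff_dvd hJ hJ').2 (detDivisor_dvd_of_subset S hJ'J _) p
  have h₂ := (Nat.factorization_le_iff_dvd hJ'k hJ'').2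
    (detDivisor_dvd_of_subset S (Finset.subset_insert j J'') k) p
  exact ⟨insert j J'', hJ'J, (Finset.card_insert_le j J'').trans (by omega), hJ', by omega⟩

theorem rank_submatrix_eq_of_card_le {J : Finset (Fin n)} {k : ℕ} (hcard : J.card ≤ k)
    (h : detDivisor S J k ≠ 0) :
    (S.submatrix id ((↑) : J → Fin n)).rank = k := by
  obtain ⟨r, c, hrc⟩ := (detDivisor_ne_zero_iff_exists S).1 h
  refine le_antisymm ?_ (le_rank_of_det_submatrix_ne_zero r c hrc)
  exact (rank_le_card_width _).trans (by simpa using hcard)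

end detDivisor

section ElementaryDivisors

variable {m n : ℕ} {S : Matrix (Fin m) (Fin n) ℤ} {ℓ : Finset (Fin n) → ℕ}
  {e : Finset (Fin n) → ℕ → ℕ}

theorem detDivisor_ne_zero_of_le_rank (hpos : ∀ J, ∀ j ∈ Finset.Icc 1 (ℓ J), 0 < e J j)
    (hsnf : ∀ J, ∀ k ≤ ℓ J, ∏ j ∈ Finset.Icc 1 k, e J j = detDivisor S J k)
    {J : Finset (Fin n)} {k : ℕ} (hk : k ≤ ℓ J) : detDivisor S J k ≠ 0 := by
  rw [← hsnf J k hk]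
  exact Finset.prod_ne_zero_iff.2 fun j hj =>
    (hpos J j (Finset.Icc_subset_Icc_right hk hj)).ne'

theorem detDivisor_succ (hsnf : ∀ J, ∀ k ≤ ℓ J, ∏ j ∈ Finset.Icc 1 k, e J j = detDivisor S J k)
    {J : Finset (Fin n)} {k : ℕ} (hk : k + 1 ≤ ℓ J) :
    detDivisor S J (k + 1) = detDivisor S J k * e J (k + 1) := by
  rw [← hsnf J _ hk, ← hsnf J k (by omega), Finset.prod_Icc_succ_top (by omega)]

theorem exists_factorization_le_elementaryDivisor
    (hℓ : ∀ J, ℓ J = (Matrix.of fun i (j : {j : Fin n // j ∈ J}) => S i j.1).rank)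
    (hpos : ∀ J, ∀ j ∈ Finset.Icc 1 (ℓ J), 0 < e J j)
    (hsnf : ∀ J, ∀ k ≤ ℓ J, ∏ j ∈ Finset.Icc 1 k, e J j = detDivisor S J k)
    {p : ℕ} (hp : p.Prime) {J : Finset (Fin n)} (hJ : 0 < ℓ J) :
    ∃ J' : Finset (Fin n), J'.Nonempty ∧ J'.card ≤ ℓ J ∧ ℓ J' = ℓ J ∧
      (e J (ℓ J)).factorization p ≤ (e J' (ℓ J')).factorization p := by
  obtain ⟨k, hk⟩ : ∃ k, ℓ J = k + 1 := ⟨ℓ J - 1, by omega⟩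
  obtain ⟨J', -, hcard, hJ'ne, hval⟩ := exists_subset_factorization_detDivisor_le S hp
    (detDivisor_ne_zero_of_le_rank hpos hsnf hk.ge)
  have hk' : ℓ J' = k + 1 := (hℓ J').trans (rank_submatrix_eq_of_card_le S hcard hJ'ne)
  have hcard' : ℓ J' ≤ J'.card := (hℓ J').trans_le
    ((S.submatrix id ((↑) : J' → Fin n)).rank_le_card_width.trans_eq (Fintype.card_coe J'))
  refine ⟨J', Finset.card_pos.1 (by omega), hk ▸ hcard, hk'.trans hk.symm, ?_⟩
  rw [detDivisor_succ hsnf hk.ge, detDivisor_succ hsnf hk'.ge,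
    Nat.factorization_mul (detDivisor_ne_zero_of_le_rank hpos hsnf (by omega))
      (hpos J _ (by simp [hk])).ne',
    Nat.factorization_mul (detDivisor_ne_zero_of_le_rank hpos hsnf (by omega))
      (hpos J' _ (by simp [hk'])).ne'] at hval
  simp only [Finsupp.add_apply] at hval
  rw [hk, hk']
  omega

theorem gcd_elementaryDivisor_eq_of_rank_le
    (hℓ : ∀ J, ℓ J = (Matrix.of fun i (j : {j : Fin n // j ∈ J}) => S i j.1).rank)
    (hpos : ∀ J, ∀ j ∈ Finset.Icc 1 (ℓ J), 0 < e J j)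
    (hsnf : ∀ J, ∀ k ≤ ℓ J, ∏ j ∈ Finset.Icc 1 k, e J j = detDivisor S J k)
    {d d' s : ℕ} (hd : 0 < d) (hd' : 0 < d')
    (H : ∀ J : Finset (Fin n), J.Nonempty → J.card ≤ s →
      Nat.gcd (e J (ℓ J)) d = Nat.gcd (e J (ℓ J)) d')
    {J : Finset (Fin n)} (hJ : 0 < ℓ J) (hs : ℓ J ≤ s) :
    Nat.gcd (e J (ℓ J)) d = Nat.gcd (e J (ℓ J)) d' := by
  have he : ∀ K, 0 < ℓ K → e K (ℓ K) ≠ 0 := fun K hK => (hpos K _ (by simp; omega)).ne'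
  refine Nat.eq_of_factorization_eq (Nat.gcd_pos_of_pos_right _ hd).ne'
    (Nat.gcd_pos_of_pos_right _ hd').ne' fun p => ?_
  by_cases hp : p.Prime
  swap
  · simp [Nat.factorization_eq_zero_of_not_prime _ hp]
  obtain ⟨J', hJ', hcard, hJJ', hle⟩ :=
    exists_factorization_le_elementaryDivisor hℓ hpos hsnf hp hJ
  have hJ'e := he J' (hJJ' ▸ hJ)
  have hgcd := congrArg (·.factorization p) (H J' hJ' (hcard.trans hs))
  simp only [Nat.factorization_gcd (he J hJ) hd.ne', Nat.factorization_gcd (he J hJ) hd'.ne',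
    Nat.factorization_gcd hJ'e hd.ne', Nat.factorization_gcd hJ'e hd'.ne',
    Finsupp.inf_apply] at hgcd ⊢
  omega

end ElementaryDivisors

theorem prod_gcd_elementaryDivisor_eq {n : ℕ} {ℓ : Finset (Fin n) → ℕ}
    {e : Finset (Fin n) → ℕ → ℕ} (hchain : ∀ J, ∀ j, 1 ≤ j → j + 1 ≤ ℓ J → e J j ∣ e J (j + 1))
    {d d' : ℕ} {J : Finset (Fin n)}
    (htop : 0 < ℓ J → Nat.gcd (e J (ℓ J)) d = Nat.gcd (e J (ℓ J)) d') :
    ∏ j ∈ Finset.Icc 1 (ℓ J), (Nat.gcd (e J j) d : ℤ) =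
      ∏ j ∈ Finset.Icc 1 (ℓ J), (Nat.gcd (e J j) d' : ℤ) := by
  refine Finset.prod_congr rfl fun j hj => ?_
  rw [Finset.mem_Icc] at hj
  have hdvd : e J j ∣ e J (ℓ J) := dvd_of_forall_dvd_succ_s2 (hchain J) hj.1 hj.2
  rw [← Nat.gcd_eq_left hdvd, Nat.gcd_assoc, Nat.gcd_assoc, htop (by omega)]

open Polynomial in
theorem degree_Ppoly_sub_lt {m n : ℕ} {ℓ : Finset (Fin n) → ℕ} {e : Finset (Fin n) → ℕ → ℕ}
    {d d' s : ℕ} (hℓm : ∀ J, ℓ J ≤ m)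
    (h : ∀ J, ℓ J ≤ s → ∏ j ∈ Finset.Icc 1 (ℓ J), (Nat.gcd (e J j) d : ℤ) =
      ∏ j ∈ Finset.Icc 1 (ℓ J), (Nat.gcd (e J j) d' : ℤ)) :
    (Ppoly m n ℓ e d - Ppoly m n ℓ e d').degree < ((m - s : ℕ) : WithBot ℕ) := by
  rw [Ppoly, Ppoly, ← Finset.sum_sub_distrib]
  refine (degree_sum_le _ _).trans_lt
    ((Finset.sup_lt_iff (WithBot.bot_lt_coe _)).2 fun J _ => ?_)
  rw [← sub_mul, ← C_sub]
  by_cases hJ : ℓ J ≤ s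
  · rw [h J hJ, sub_self, C_0, zero_mul, degree_zero]
    exact WithBot.bot_lt_coe _
  · refine (degree_C_mul_X_pow_le _ _).trans_lt ?_
    have := hℓm J
    exact_mod_cast (by omega : m - ℓ J < m - s)

theorem stmt_2_general (m n : ℕ)
    (S : Matrix (Fin m) (Fin n) ℤ)
    (ℓ : Finset (Fin n) → ℕ)
    (hℓ : ∀ J, ℓ J = (Matrix.of fun i (j : {j : Fin n // j ∈ J}) => S i j.1).rank)
    (e : Finset (Fin n) → ℕ → ℕ)
    (hpos : ∀ J, ∀ j ∈ Finset.Icc 1 (ℓ J), 0 < e J j)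
    (hchain : ∀ J, ∀ j, 1 ≤ j → j + 1 ≤ ℓ J → e J j ∣ e J (j + 1))
    (hsnf : ∀ J, ∀ k ≤ ℓ J, ∏ j ∈ Finset.Icc 1 k, e J j = detDivisor S J k)
    (d d' : ℕ) (hd : 0 < d) (hd' : 0 < d')
    (s : ℕ) :
    ((∀ J : Finset (Fin n), J.Nonempty → J.card ≤ s →
        Nat.gcd (e J (ℓ J)) d = Nat.gcd (e J (ℓ J)) d') →
      (Ppoly m n ℓ e d - Ppoly m n ℓ e d').degree < ((m - s : ℕ) : WithBot ℕ)) ∧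
    ((∀ J : Finset (Fin n), J.Nonempty → J.card ≤ s → Nat.gcd (e J (ℓ J)) d = 1) →
      (Ppoly m n ℓ e d - Ppoly m n ℓ e 1).degree < ((m - s : ℕ) : WithBot ℕ)) := by
  have hℓm : ∀ J, ℓ J ≤ m := fun J =>
    (hℓ J).trans_le ((rank_le_card_height _).trans_eq (Fintype.card_fin m))
  have key : ∀ d₁ d₂ : ℕ, 0 < d₁ → 0 < d₂ →
      (∀ J : Finset (Fin n), J.Nonempty → J.card ≤ s →
        Nat.gcd (e J (ℓ J)) d₁ = Nat.gcd (e J (ℓ J)) d₂) →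
      (Ppoly m n ℓ e d₁ - Ppoly m n ℓ e d₂).degree < ((m - s : ℕ) : WithBot ℕ) :=
    fun d₁ d₂ h₁ h₂ H => degree_Ppoly_sub_lt hℓm fun _ hs => prod_gcd_elementaryDivisor_eq hchain
      fun h0 => gcd_elementaryDivisor_eq_of_rank_le hℓ hpos hsnf h₁ h₂ H h0 hs
  refine ⟨key d d' hd hd', fun H => key d 1 hd one_pos fun J hJ hcard => ?_⟩
  rw [H J hJ hcard, Nat.gcd_one_right]

/-- Corollary 2.3: if `d, d'` are positive divisors of the lcm period `ρ₀` and, for some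
positive integer `s`, `gcd(e(J), d) = gcd(e(J), d')` for all nonempty `J` with `|J| ≤ s`,
then `deg (P_d − P_{d'}) < m − s`.  In particular, if `gcd(e(J), d) = 1` for all nonempty
`J` with `|J| ≤ s`, then `deg (P_d − P_1) < m − s`. -/
theorem stmt_2 (m n : ℕ) (hm : 0 < m) (hn : 0 < n)
    (S : Matrix (Fin m) (Fin n) ℤ) (hS : ∀ j, ∃ i, S i j ≠ 0)
    (ℓ : Finset (Fin n) → ℕ)
    (hℓ : ∀ J, ℓ J = (Matrix.of fun i (j : {j : Fin n // j ∈ J}) => S i j.1).rank)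
    (e : Finset (Fin n) → ℕ → ℕ)
    (hpos : ∀ J, ∀ j ∈ Finset.Icc 1 (ℓ J), 0 < e J j)
    (hchain : ∀ J, ∀ j, 1 ≤ j → j + 1 ≤ ℓ J → e J j ∣ e J (j + 1))
    (hsnf : ∀ J, ∀ k ≤ ℓ J, ∏ j ∈ Finset.Icc 1 k, e J j = detDivisor S J k)
    (ρ : ℕ)
    (hρ : ρ = Finset.lcm ((Finset.univ : Finset (Fin n)).powerset.filter (· ≠ ∅))
      (fun J => e J (ℓ J)))
    (d d' : ℕ) (hd : 0 < d) (hd' : 0 < d') (hdρ : d ∣ ρ) (hd'ρ : d' ∣ ρ)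
    (s : ℕ) (hs : 0 < s) :
    ((∀ J : Finset (Fin n), J.Nonempty → J.card ≤ s →
        Nat.gcd (e J (ℓ J)) d = Nat.gcd (e J (ℓ J)) d') →
      (Ppoly m n ℓ e d - Ppoly m n ℓ e d').degree < ((m - s : ℕ) : WithBot ℕ)) ∧
    ((∀ J : Finset (Fin n), J.Nonempty → J.card ≤ s → Nat.gcd (e J (ℓ J)) d = 1) →
      (Ppoly m n ℓ e d - Ppoly m n ℓ e 1).degree < ((m - s : ℕ) : WithBot ℕ)) :=
  stmt_2_general m n S ℓ hℓ e hpos hchain hsnf d d' hd hd' s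
end

section
/- (Corollary 2.5) Let S be an m×n integer matrix with no zero column, with lcm period ρ₀, and let d, d' be positive divisors of ρ₀ with gcd(d, d') = 1. If e(J) is a prime power or equal to 1 for every nonempty J ⊆ [n], then P_{dd'}(t) = P_d(t) + P_{d'}(t) − P_1(t). -/
/-!
The elementary divisors `e_{J,j}` all divide `e(J)`. If `e(J)` is a prime power (or `1`) and
`d, d'` are coprime, then `e(J)` is coprime to one of them, say `d`; hence `gcd(e_{J,j}, d) = 1`
and `gcd(e_{J,j}, dd') = gcd(e_{J,j}, d')`, so `e(J, dd') = e(J, d) + e(J, d') − e(J, 1)` with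
`e(J, d) = e(J, 1) = 1`. Summing over `J` gives the identity of the constituents.
-/

open Finset

lemma dvd_of_le_of_forall_dvd_succ {e : ℕ → ℕ} {L : ℕ}
    (he : ∀ j, 1 ≤ j → j + 1 ≤ L → e j ∣ e (j + 1)) {i : ℕ} (hi : i ∈ Icc 1 L) :
    e i ∣ e L := by
  obtain ⟨hi1, hiL⟩ := mem_Icc.mp hi
  suffices ∀ k, i ≤ k → k ≤ L → e i ∣ e k from this L hiL le_rfl
  intro k hik
  induction k, hik using Nat.le_induction with
  | base => exact fun _ => dvd_rfl
  | succ k hik ih => exact fun hkL => (ih (by omega)).trans (he k (hi1.trans hik) hkL)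

lemma Nat.Coprime.coprime_left_or_coprime_left {q d d' : ℕ} (hq : IsPrimePow q ∨ q = 1)
    (hco : Nat.Coprime d d') : Nat.Coprime q d ∨ Nat.Coprime q d' := by
  rcases hq with ⟨p, k, hp, -, rfl⟩ | rfl
  · have hp := hp.nat_prime
    have hndvd : ¬ p ∣ d ∨ ¬ p ∣ d' := by
      by_contra! h
      exact hp.not_dvd_one (hco ▸ Nat.dvd_gcd h.1 h.2)
    exact hndvd.imp (fun h => (hp.coprime_iff_not_dvd.2 h).pow_left k)
      (fun h => (hp.coprime_iff_not_dvd.2 h).pow_left k)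
  · exact Or.inl (Nat.coprime_one_left d)

lemma prod_gcd_mul_eq_add_sub_one {ι : Type*} {s : Finset ι} {f : ι → ℕ} {q d d' : ℕ}
    (hq : IsPrimePow q ∨ q = 1) (hco : Nat.Coprime d d') (hf : ∀ i ∈ s, f i ∣ q) :
    (∏ i ∈ s, (Nat.gcd (f i) (d * d') : ℤ)) =
      (∏ i ∈ s, (Nat.gcd (f i) d : ℤ)) + (∏ i ∈ s, (Nat.gcd (f i) d' : ℤ)) - 1 := by
  wlog hqd : Nat.Coprime q d generalizing d d'
  · have hqd' := (hco.coprime_left_or_coprime_left hq).resolve_left hqd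
    rw [mul_comm, add_comm]
    exact this hco.symm hqd'
  have hcop : ∀ i ∈ s, Nat.Coprime (f i) d := fun i hi => hqd.coprime_dvd_left (hf i hi)
  have hone : ∏ i ∈ s, (Nat.gcd (f i) d : ℤ) = 1 :=
    prod_eq_one fun i hi => by simp [(hcop i hi).gcd_eq_one]
  have hmul : ∏ i ∈ s, (Nat.gcd (f i) (d * d') : ℤ) = ∏ i ∈ s, (Nat.gcd (f i) d' : ℤ) :=
    prod_congr rfl fun i hi => by rw [(hcop i hi).symm.gcd_mul_left_cancel_right]
  rw [hone, hmul]
  ring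

lemma Ppoly_eq_add_sub {m n : ℕ} {ℓ : Finset (Fin n) → ℕ} {e : Finset (Fin n) → ℕ → ℕ}
    {d₁ d₂ d₃ d₄ : ℕ}
    (h : ∀ J, (∏ j ∈ Icc 1 (ℓ J), (Nat.gcd (e J j) d₁ : ℤ)) =
      (∏ j ∈ Icc 1 (ℓ J), (Nat.gcd (e J j) d₂ : ℤ)) +
        (∏ j ∈ Icc 1 (ℓ J), (Nat.gcd (e J j) d₃ : ℤ)) -
        ∏ j ∈ Icc 1 (ℓ J), (Nat.gcd (e J j) d₄ : ℤ)) :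
    Ppoly m n ℓ e d₁ = Ppoly m n ℓ e d₂ + Ppoly m n ℓ e d₃ - Ppoly m n ℓ e d₄ := by
  simp only [Ppoly, ← sum_add_distrib, ← sum_sub_distrib, h, mul_add, mul_sub, map_add,
    map_sub, add_mul, sub_mul]

theorem stmt_4_general (m n : ℕ)
    (S : Matrix (Fin m) (Fin n) ℤ)
    (ℓ : Finset (Fin n) → ℕ)
    (hℓ : ∀ J, ℓ J = (Matrix.of fun i (j : {j : Fin n // j ∈ J}) => S i j.1).rank)
    (e : Finset (Fin n) → ℕ → ℕ)
    (hchain : ∀ J, ∀ j, 1 ≤ j → j + 1 ≤ ℓ J → e J j ∣ e J (j + 1))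
    (d d' : ℕ)
    (hco : Nat.gcd d d' = 1)
    (hpp : ∀ J : Finset (Fin n), J.Nonempty →
      IsPrimePow (e J (ℓ J)) ∨ e J (ℓ J) = 1) :
    Ppoly m n ℓ e (d * d') =
      Ppoly m n ℓ e d + Ppoly m n ℓ e d' - Ppoly m n ℓ e 1 := by
  have hℓ_empty : ℓ ∅ = 0 := by
    simpa [← hℓ] using Matrix.rank_le_card_width
      (Matrix.of fun i (j : {j : Fin n // j ∈ (∅ : Finset (Fin n))}) => S i j.1)
  refine Ppoly_eq_add_sub fun J => ?_
  simp only [Nat.gcd_one_right, Nat.cast_one, prod_const_one]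
  rcases J.eq_empty_or_nonempty with rfl | hJ
  · simp [hℓ_empty]
  · exact prod_gcd_mul_eq_add_sub_one (hpp J hJ) hco
      fun j hj => dvd_of_le_of_forall_dvd_succ (hchain J) hj

/-- Corollary 2.5: if `d, d'` are coprime positive divisors of the lcm period `ρ₀` and
`e(J)` is a prime power or `1` for every nonempty `J`, then
`P_{dd'} = P_d + P_{d'} − P_1`. -/
theorem stmt_4 (m n : ℕ) (hm : 0 < m) (hn : 0 < n)
    (S : Matrix (Fin m) (Fin n) ℤ) (hS : ∀ j, ∃ i, S i j ≠ 0)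
    (ℓ : Finset (Fin n) → ℕ)
    (hℓ : ∀ J, ℓ J = (Matrix.of fun i (j : {j : Fin n // j ∈ J}) => S i j.1).rank)
    (e : Finset (Fin n) → ℕ → ℕ)
    (hpos : ∀ J, ∀ j ∈ Finset.Icc 1 (ℓ J), 0 < e J j)
    (hchain : ∀ J, ∀ j, 1 ≤ j → j + 1 ≤ ℓ J → e J j ∣ e J (j + 1))
    (hsnf : ∀ J, ∀ k ≤ ℓ J, ∏ j ∈ Finset.Icc 1 k, e J j = detDivisor S J k)
    (ρ : ℕ)
    (hρ : ρ = Finset.lcm ((Finset.univ : Finset (Fin n)).powerset.filter (· ≠ ∅))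
      (fun J => e J (ℓ J)))
    (d d' : ℕ) (hd : 0 < d) (hd' : 0 < d') (hdρ : d ∣ ρ) (hd'ρ : d' ∣ ρ)
    (hco : Nat.gcd d d' = 1)
    (hpp : ∀ J : Finset (Fin n), J.Nonempty →
      IsPrimePow (e J (ℓ J)) ∨ e J (ℓ J) = 1) :
    Ppoly m n ℓ e (d * d') =
      Ppoly m n ℓ e d + Ppoly m n ℓ e d' - Ppoly m n ℓ e 1 :=
  stmt_4_general m n S ℓ hℓ e hchain d d' hco hpp
end

section
/- (Proposition 2.6) Fix integers ρ₀ ≥ 1 and k ≥ 0. For each d with 1 ≤ d ≤ ρ₀, the formal power series (1 − t^{ρ₀})^{k+1} · Σ_{s=0}^{∞} (d + ρ₀ s)^k t^{d + ρ₀ s} is a polynomial q_{d,k}(t), and for every j with 0 ≤ j ≤ k, the j-th derivative values at t = 1 satisfy q_{1,k}^{(j)}(1) = q_{2,k}^{(j)}(1) = ⋯ = q_{ρ₀,k}^{(j)}(1), and this common value is nonzero. -/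
/-!
Write `θ = X d/dX` and `v = 1 - X^ρ`. The series `F_{d,k} = Σ N^k X^N` over `N ≡ d [MOD ρ]`,
`N ≥ d`, satisfies `F_{d,0} = X^d / v` and `F_{d,k+1} = θ F_{d,k}`, and
`v^(k+2) θF = v θ(v^(k+1) F) - (k+1) (θv) v^(k+1) F`. So `q_{d,k} = v^(k+1) F_{d,k}` is obtained
from `X^d` by `k` applications of the polynomial operator `thetaStep v`.

Since `X - 1` divides `v`, each application raises the order of vanishing at `1` of
`q_{d,k} - q_{d',k}` by one, starting from `X^d - X^{d'}`; hence the first `k` derivatives of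
`q_{d,k}` at `1` do not depend on `d`. On coefficients the step reads
`c_{k+1}(M) = M c_k(M) + ((k+2)ρ - M) c_k(M - ρ)`. As `q_{d,k}` has degree at most
`d + kρ ≤ (k+1)ρ`, this keeps all coefficients nonnegative and keeps a positive coefficient in some
degree `≥ k`, so every derivative of order `≤ k` is positive at `1`.
-/

open Polynomial

namespace Polynomial

section CommSemiring

variable {R : Type*} [CommSemiring R]

theorem coeff_X_mul_derivative (p : R[X]) (n : ℕ) :
    (X * derivative p).coeff n = n * p.coeff n := by
  cases n with
  | zero => simp
  | succ n => rw [coeff_X_mul, coeff_derivative]; push_cast; ring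

theorem X_mul_derivative_X_pow (n : ℕ) : X * derivative (X ^ n : R[X]) = C (n : R) * X ^ n := by
  cases n with
  | zero => simp
  | succ n => rw [derivative_X_pow, pow_succ' X n, Nat.add_sub_cancel]; ring

variable [PartialOrder R] [IsStrictOrderedRing R]

theorem eval_one_pos_of_coeff_nonneg {p : R[X]} (hp : ∀ m, 0 ≤ p.coeff m) {n : ℕ}
    (hn : 0 < p.coeff n) : 0 < p.eval 1 := by
  rw [eval_eq_sum_range]
  simp only [one_pow, mul_one]
  exact Finset.sum_pos' (fun m _ => hp m)
    ⟨n, Finset.mem_range_succ_iff.mpr (le_natDegree_of_ne_zero hn.ne'), hn⟩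

theorem eval_one_iterate_derivative_pos_of_coeff_nonneg {p : R[X]} (hp : ∀ m, 0 ≤ p.coeff m)
    {j n : ℕ} (hjn : j ≤ n) (hn : 0 < p.coeff n) : 0 < (derivative^[j] p).eval 1 := by
  refine eval_one_pos_of_coeff_nonneg (fun m => ?_) (n := n - j) ?_
  · rw [coeff_iterate_derivative]
    exact nsmul_nonneg (hp _) _
  · rw [coeff_iterate_derivative, Nat.sub_add_cancel hjn]
    exact nsmul_pos hn (Nat.descFactorial_pos.mpr hjn).ne'

end CommSemiring

section CommRing

variable {R : Type*} [CommRing R]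

noncomputable def thetaStep (v : R[X]) (k : ℕ) (p : R[X]) : R[X] :=
  v * (X * derivative p) - C ((k : R) + 1) * (X * derivative v) * p

theorem thetaStep_sub (v : R[X]) (k : ℕ) (p q : R[X]) :
    thetaStep v k (p - q) = thetaStep v k p - thetaStep v k q := by
  simp only [thetaStep, derivative_sub]
  ring

theorem coe_thetaStep {v p : R[X]} {k : ℕ} {F : PowerSeries R}
    (h : (p : PowerSeries R) = (v : PowerSeries R) ^ (k + 1) * F) :
    (thetaStep v k p : PowerSeries R) =
      (v : PowerSeries R) ^ (k + 2) * (PowerSeries.X * PowerSeries.derivative R F) := by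
  have hd := congrArg (PowerSeries.derivative R) h
  rw [Derivation.leibniz, Derivation.leibniz_pow, PowerSeries.derivative_coe,
    PowerSeries.derivative_coe, smul_eq_mul, smul_eq_mul, smul_eq_mul, nsmul_eq_mul] at hd
  simp only [thetaStep, coe_sub, coe_mul, coe_C, coe_X]
  simp only [map_add, map_one, map_natCast]
  push_cast at hd
  linear_combination (v : PowerSeries R) * PowerSeries.X * hd -
    ((k : PowerSeries R) + 1) * PowerSeries.X * (derivative v : PowerSeries R) * h

theorem X_sub_C_pow_dvd_thetaStep {a : R} {v p : R[X]} {k : ℕ} (hv : X - C a ∣ v)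
    (hp : (X - C a) ^ (k + 1) ∣ p) : (X - C a) ^ (k + 2) ∣ thetaStep v k p := by
  obtain ⟨w, rfl⟩ := hv
  obtain ⟨g, rfl⟩ := hp
  refine ⟨X * (w * derivative g - C ((k : R) + 1) * derivative w * g), ?_⟩
  simp only [thetaStep, derivative_mul, derivative_pow, derivative_sub, derivative_X,
    derivative_C, sub_zero, mul_one]
  push_cast
  ring

theorem eval_iterate_derivative_eq_of_X_sub_C_pow_dvd {a : R} {p q : R[X]} {j k : ℕ}
    (hjk : j ≤ k) (h : (X - C a) ^ (k + 1) ∣ p - q) :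
    (derivative^[j] p).eval a = (derivative^[j] q).eval a := by
  have hdvd : X - C a ∣ derivative^[j] (p - q) :=
    (dvd_pow_self _ (by lia)).trans (pow_sub_dvd_iterate_derivative_of_pow_dvd j h)
  rw [dvd_iff_isRoot, IsRoot, iterate_derivative_sub, eval_sub] at hdvd
  exact sub_eq_zero.mp hdvd

end CommRing

end Polynomial

namespace PowerSeries

variable {R : Type*} [CommRing R]

theorem X_mul_derivative_mk (f : ℕ → R) :
    X * derivative R (mk f) = mk fun n => n * f n := by
  ext (_ | n)
  · simp
  · rw [coeff_succ_X_mul, coeff_derivative, coeff_mk, coeff_mk]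
    push_cast
    ring

theorem one_sub_X_pow_mul_mk_ite_dvd {ρ : ℕ} (hρ : 0 < ρ) :
    (1 - X ^ ρ : R⟦X⟧) * mk (fun n => if ρ ∣ n then 1 else 0) = 1 := by
  ext n
  rw [sub_mul, one_mul, map_sub, coeff_X_pow_mul', coeff_mk, coeff_one]
  by_cases hn : ρ ≤ n
  · simp [hn, Nat.dvd_sub_iff_left hn dvd_rfl, show n ≠ 0 by lia]
  · have : ρ ∣ n ↔ n = 0 := ⟨fun h => Nat.eq_zero_of_dvd_of_lt h (by lia), by rintro rfl; simp⟩
    simp [hn, this]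

theorem mk_modEq_eq_X_pow_mul (ρ d : ℕ) :
    (mk fun N => if N % ρ = d % ρ ∧ d ≤ N then 1 else 0 : R⟦X⟧) =
      X ^ d * mk fun n => if ρ ∣ n then 1 else 0 := by
  ext N
  rw [coeff_X_pow_mul', coeff_mk, coeff_mk]
  by_cases h : d ≤ N
  · simp [h, ← Nat.modEq_iff_dvd' h, Nat.ModEq, eq_comm]
  · simp [h]

end PowerSeries

noncomputable def qPoly (ρ d : ℕ) : ℕ → ℚ[X]
  | 0 => X ^ d
  | k + 1 => thetaStep (1 - X ^ ρ) k (qPoly ρ d k)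

theorem coe_qPoly {ρ : ℕ} (hρ : 0 < ρ) (d k : ℕ) :
    (qPoly ρ d k : PowerSeries ℚ) = (1 - PowerSeries.X ^ ρ) ^ (k + 1) *
      PowerSeries.mk (fun N => if N % ρ = d % ρ ∧ d ≤ N then (N : ℚ) ^ k else 0) := by
  have hv : ((1 - X ^ ρ : ℚ[X]) : PowerSeries ℚ) = 1 - PowerSeries.X ^ ρ := by simp
  induction k with
  | zero =>
    simp only [qPoly, pow_zero, zero_add, pow_one, PowerSeries.mk_modEq_eq_X_pow_mul, coe_pow,
      coe_X]
    rw [mul_left_comm, PowerSeries.one_sub_X_pow_mul_mk_ite_dvd hρ, mul_one]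
  | succ k ih =>
    rw [qPoly, coe_thetaStep (by rwa [hv]), hv, PowerSeries.X_mul_derivative_mk]
    congr 2
    ext N
    split_ifs <;> ring

theorem X_sub_C_one_pow_dvd_qPoly_sub (ρ d d' k : ℕ) :
    (X - C 1) ^ (k + 1) ∣ qPoly ρ d k - qPoly ρ d' k := by
  induction k with
  | zero =>
    simpa [qPoly] using (sub_dvd_pow_sub_pow (X : ℚ[X]) 1 d).sub (sub_dvd_pow_sub_pow X 1 d')
  | succ k ih =>
    rw [qPoly, qPoly, ← thetaStep_sub]
    refine X_sub_C_pow_dvd_thetaStep ?_ ih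
    have h : X - C (1 : ℚ) ∣ X ^ ρ - 1 := by simpa using sub_dvd_pow_sub_pow (X : ℚ[X]) 1 ρ
    simpa only [neg_sub] using h.neg_right

theorem coeff_qPoly_succ (ρ d k M : ℕ) :
    (qPoly ρ d (k + 1)).coeff M = M * (qPoly ρ d k).coeff M +
      if ρ ≤ M then ((k + 2) * ρ - M) * (qPoly ρ d k).coeff (M - ρ) else 0 := by
  have hstep : qPoly ρ d (k + 1) = X * derivative (qPoly ρ d k)
      - X ^ ρ * (X * derivative (qPoly ρ d k))
      + X ^ ρ * (C (((k : ℚ) + 1) * ρ) * qPoly ρ d k) := by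
    rw [qPoly, thetaStep, derivative_sub, derivative_one, zero_sub, mul_neg,
      X_mul_derivative_X_pow, C_mul]
    ring
  rw [hstep, coeff_add, coeff_sub, coeff_X_pow_mul', coeff_X_pow_mul', coeff_X_mul_derivative,
    coeff_C_mul, coeff_X_mul_derivative]
  split_ifs with h
  · rw [Nat.cast_sub h]
    ring
  · ring

theorem coeff_qPoly_succ_of_lt {ρ M : ℕ} (d k : ℕ) (h : M < ρ) :
    (qPoly ρ d (k + 1)).coeff M = M * (qPoly ρ d k).coeff M := by
  rw [coeff_qPoly_succ, if_neg h.not_ge, add_zero]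

theorem coeff_qPoly_succ_add (ρ d k M : ℕ) :
    (qPoly ρ d (k + 1)).coeff (M + ρ) = (M + ρ) * (qPoly ρ d k).coeff (M + ρ) +
      ((k + 1) * ρ - M) * (qPoly ρ d k).coeff M := by
  rw [coeff_qPoly_succ, if_pos (Nat.le_add_left ρ M), Nat.add_sub_cancel]
  push_cast
  ring

theorem coeff_qPoly_eq_zero_of_lt {ρ d k M : ℕ} (hM : d + k * ρ < M) :
    (qPoly ρ d k).coeff M = 0 := by
  induction k generalizing M with
  | zero => simp [qPoly, coeff_X_pow, show M ≠ d by lia]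
  | succ k ih =>
    rw [coeff_qPoly_succ, ih (by lia)]
    split_ifs
    · rw [ih (by lia)]
      ring
    · ring

theorem sub_mul_coeff_qPoly_nonneg {ρ d : ℕ} (hd : d ≤ ρ) {k M : ℕ}
    (h : 0 ≤ (qPoly ρ d k).coeff M) : 0 ≤ ((k + 1) * ρ - M) * (qPoly ρ d k).coeff M := by
  rcases le_or_gt M ((k + 1) * ρ) with hM | hM
  · refine mul_nonneg (sub_nonneg.mpr ?_) h
    exact_mod_cast hM
  · rw [coeff_qPoly_eq_zero_of_lt (by lia), mul_zero]

theorem coeff_qPoly_nonneg {ρ d : ℕ} (hd : d ≤ ρ) (k M : ℕ) : 0 ≤ (qPoly ρ d k).coeff M := by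
  induction k generalizing M with
  | zero =>
    simp only [qPoly, coeff_X_pow]
    split_ifs <;> norm_num
  | succ k ih =>
    rcases lt_or_ge M ρ with h | h
    · rw [coeff_qPoly_succ_of_lt d k h]
      exact mul_nonneg M.cast_nonneg (ih M)
    · obtain ⟨M, rfl⟩ := Nat.exists_eq_add_of_le' h
      rw [coeff_qPoly_succ_add]
      exact add_nonneg (mul_nonneg (by positivity) (ih _)) (sub_mul_coeff_qPoly_nonneg hd (ih M))

theorem mul_coeff_qPoly_le_coeff_qPoly_succ {ρ d : ℕ} (hd : d ≤ ρ) (k M : ℕ) :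
    M * (qPoly ρ d k).coeff M ≤ (qPoly ρ d (k + 1)).coeff M := by
  rcases lt_or_ge M ρ with h | h
  · rw [coeff_qPoly_succ_of_lt d k h]
  · obtain ⟨M, rfl⟩ := Nat.exists_eq_add_of_le' h
    rw [coeff_qPoly_succ_add, Nat.cast_add]
    exact le_add_of_nonneg_right (sub_mul_coeff_qPoly_nonneg hd (coeff_qPoly_nonneg hd k M))

theorem exists_le_coeff_qPoly_pos {ρ d : ℕ} (hρ : 0 < ρ) (hd : d ≤ ρ) (k : ℕ) :
    ∃ M, k ≤ M ∧ 0 < (qPoly ρ d k).coeff M := by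
  induction k with
  | zero => exact ⟨d, d.zero_le, by simp [qPoly]⟩
  | succ k ih =>
    obtain ⟨M, hkM, hM⟩ := ih
    rcases hkM.lt_or_eq with hkM | rfl
    · have hM0 : (0 : ℚ) < M := by exact_mod_cast k.zero_le.trans_lt hkM
      exact ⟨M, hkM, (mul_pos hM0 hM).trans_le (mul_coeff_qPoly_le_coeff_qPoly_succ hd k M)⟩
    · refine ⟨k + ρ, by lia, ?_⟩
      have hρ' : (1 : ℚ) ≤ ρ := by exact_mod_cast hρ
      rw [coeff_qPoly_succ_add]
      exact add_pos_of_nonneg_of_pos (mul_nonneg (by positivity) (coeff_qPoly_nonneg hd k _))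
        (mul_pos (by nlinarith) hM)

/-- Proposition 2.6: for `1 ≤ d ≤ ρ₀` the power series
`(1 − t^{ρ₀})^{k+1} Σ_{s≥0} (d + ρ₀ s)^k t^{d + ρ₀ s}` is a polynomial `q_{d,k}(t)`
(the coefficient of `t^N` of the sum is `N^k` if `N ≡ d (mod ρ₀)` and `d ≤ N`, else `0`),
and for every `0 ≤ j ≤ k` the `j`-th derivatives of these polynomials at `t = 1` are all
equal for `d = 1, …, ρ₀`, and nonzero. -/
theorem stmt_7 (ρ k : ℕ) (hρ : 1 ≤ ρ) :
    (∀ d ∈ Finset.Icc 1 ρ, ∃ p : Polynomial ℚ,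
        (p : PowerSeries ℚ) =
          (1 - PowerSeries.X ^ ρ) ^ (k + 1) *
            PowerSeries.mk (fun N => if N % ρ = d % ρ ∧ d ≤ N then (N : ℚ) ^ k else 0)) ∧
    (∀ Q : ℕ → Polynomial ℚ,
      (∀ d ∈ Finset.Icc 1 ρ,
          ((Q d : Polynomial ℚ) : PowerSeries ℚ) =
            (1 - PowerSeries.X ^ ρ) ^ (k + 1) *
              PowerSeries.mk (fun N => if N % ρ = d % ρ ∧ d ≤ N then (N : ℚ) ^ k else 0)) →
      ∀ j ≤ k, ∀ d ∈ Finset.Icc 1 ρ, ∀ d' ∈ Finset.Icc 1 ρ,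
        (Polynomial.derivative^[j] (Q d)).eval 1 =
            (Polynomial.derivative^[j] (Q d')).eval 1 ∧
          (Polynomial.derivative^[j] (Q d)).eval 1 ≠ 0) := by
  refine ⟨fun d _ => ⟨qPoly ρ d k, coe_qPoly hρ d k⟩, fun Q hQ j hjk d hd d' hd' => ?_⟩
  have hQ_eq : ∀ e ∈ Finset.Icc 1 ρ, Q e = qPoly ρ e k := fun e he =>
    coe_inj.mp ((hQ e he).trans (coe_qPoly hρ e k).symm)
  rw [hQ_eq d hd, hQ_eq d' hd']
  have hdρ := (Finset.mem_Icc.mp hd).2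
  obtain ⟨M, hkM, hM⟩ := exists_le_coeff_qPoly_pos hρ hdρ k
  exact ⟨eval_iterate_derivative_eq_of_X_sub_C_pow_dvd hjk
      (X_sub_C_one_pow_dvd_qPoly_sub ρ d d' k),
    (eval_one_iterate_derivative_pos_of_coeff_nonneg (coeff_qPoly_nonneg hdρ k)
      (hjk.trans hkM) hM).ne'⟩
end

section
/- (Corollary 3.4) Let R be an irreducible reduced crystallographic root system of rank m in a Euclidean space, let B = {α_1, …, α_m} be a base with associated positive system R_+, let n = |R_+|, let S be the m×n integer matrix whose columns are the coefficient vectors of the positive roots with respect to α_1, …, α_m, and let h be the Coxeter number of R. Then for every positive integer q, χ_S(q) > 0 if and only if q ≥ h. -/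
open scoped RealInnerProductSpace

/-- A finite subset `R` of a Euclidean space is an irreducible reduced crystallographic
root system. -/
structure IsIrredRootSystem {V : Type*} [NormedAddCommGroup V] [InnerProductSpace ℝ V]
    (R : Finset V) : Prop where
  nonempty : R.Nonempty
  zero_not_mem : (0 : V) ∉ R
  span_eq_top : Submodule.span ℝ (R : Set V) = ⊤
  reduced : ∀ α ∈ R, ∀ c : ℝ, c • α ∈ (R : Set V) → c = 1 ∨ c = -1
  crystallographic : ∀ α ∈ R, ∀ β ∈ R, ∃ z : ℤ, 2 * ⟪β, α⟫ = (z : ℝ) * ⟪α, α⟫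
  reflect_mem : ∀ α ∈ R, ∀ β ∈ R, β - (2 * ⟪β, α⟫ / ⟪α, α⟫) • α ∈ R
  irreducible : ∀ R₁ R₂ : Finset V, (R₁ : Set V) ∪ (R₂ : Set V) = (R : Set V) →
    (∀ a ∈ R₁, ∀ b ∈ R₂, ⟪a, b⟫ = 0) → R₁ = ∅ ∨ R₂ = ∅

/-!
For `q ≥ h` take `z = (1, …, 1)`: the entries of `zS` are the heights of the positive roots,
which lie strictly between `0` and `h`.

Conversely, lift a point `z` counted by `χ_S(q)` to `x ∈ V` with `⟪x, αᵢ⟫ = zᵢ`, so that every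
`⟪x, β⟫` is an integer outside `qℤ`. The reflections in the walls `⟪·, β⟫ = qt` preserve this
property, and reflecting across a wall that separates `x` from a point `p` of the alcove
`{⟪·, αᵢ⟫ > 0, ⟪·, θ⟫ < q}` shortens `‖x - p‖²` by a uniform amount, so finitely many such
reflections move `x` into the alcove. There `⟪x, αᵢ⟫ ≥ 1` and `⟪x, θ⟫ ≤ q - 1`, whence
`h - 1 = ∑ nᵢ ≤ ⟪x, θ⟫ ≤ q - 1`.
-/

theorem exists_of_forall_or_exists_le_sub {X : Type*} {Q G : X → Prop} (f : X → ℝ)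
    (hf : ∀ x, 0 ≤ f x) {δ : ℝ} (hδ : 0 < δ)
    (step : ∀ x, Q x → G x ∨ ∃ y, Q y ∧ f y ≤ f x - δ) {x : X} (hx : Q x) :
    ∃ y, Q y ∧ G y := by
  obtain ⟨N, hN⟩ : ∃ N : ℕ, f x ≤ N * δ :=
    ⟨⌈f x / δ⌉₊, (div_le_iff₀ hδ).mp (Nat.le_ceil _)⟩
  induction N generalizing x with
  | zero =>
    rcases step x hx with hG | ⟨y, -, hy⟩
    · exact ⟨x, hx, hG⟩
    · linarith [hf y, show f x ≤ 0 by simpa using hN]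
  | succ N ih =>
    rcases step x hx with hG | ⟨y, hQy, hy⟩
    · exact ⟨x, hx, hG⟩
    · exact ih hQy (by push_cast at hN; linarith)

section RootSystem

variable {V : Type*} [NormedAddCommGroup V] [InnerProductSpace ℝ V]

theorem exists_inner_eq_of_linearIndependent {ι : Type*} [Finite ι] {α : ι → V}
    (hα : LinearIndependent ℝ α) (c : ι → ℝ) : ∃ x : V, ∀ i, ⟪x, α i⟫ = c i := by
  let W := Submodule.span ℝ (Set.range α)
  let b : Module.Basis ι ℝ W := Module.Basis.span hα
  have : FiniteDimensional ℝ W := Module.Finite.of_basis b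
  let f := LinearMap.toContinuousLinearMap (b.constr ℝ c)
  refine ⟨((InnerProductSpace.toDual ℝ W).symm f : V), fun i => ?_⟩
  have hbi : (b i : V) = α i := congrArg Subtype.val (Module.Basis.span_apply hα i)
  rw [← hbi, ← Submodule.coe_inner, InnerProductSpace.toDual_symm_apply]
  exact b.constr_basis ℝ c i

/-- The reflection in the affine hyperplane `⟪·, v⟫ = r`. -/
noncomputable def hyperplaneReflection (v : V) (r : ℝ) (x : V) : V :=
  x - (2 * (⟪x, v⟫ - r) / ⟪v, v⟫) • v

theorem inner_hyperplaneReflection (v : V) (r : ℝ) (x y : V) :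
    ⟪hyperplaneReflection v r x, y⟫ =
      ⟪x, y - (2 * ⟪y, v⟫ / ⟪v, v⟫) • v⟫ + r * (2 * ⟪y, v⟫ / ⟪v, v⟫) := by
  simp only [hyperplaneReflection, inner_sub_left, inner_sub_right, real_inner_smul_left,
    real_inner_smul_right, real_inner_comm v x, real_inner_comm v y]
  ring

theorem norm_hyperplaneReflection_sub_sq {v : V} (hv : ⟪v, v⟫ ≠ 0) (r : ℝ) (x p : V) :
    ‖hyperplaneReflection v r x - p‖ ^ 2 =
      ‖x - p‖ ^ 2 + 4 * (⟪x, v⟫ - r) * (⟪p, v⟫ - r) / ⟪v, v⟫ := by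
  have hsub : hyperplaneReflection v r x - p = (x - p) - (2 * (⟪x, v⟫ - r) / ⟪v, v⟫) • v := by
    rw [hyperplaneReflection]; abel
  rw [hsub, norm_sub_sq_real, norm_smul, mul_pow, Real.norm_eq_abs, sq_abs,
    ← real_inner_self_eq_norm_sq v, real_inner_smul_right, inner_sub_left]
  field_simp
  ring

def IsRegularMod (R : Finset V) (q : ℕ) (x : V) : Prop :=
  ∀ β ∈ R, ∃ k : ℤ, ⟪x, β⟫ = k ∧ ¬ (q : ℤ) ∣ k

theorem IsIrredRootSystem.inner_self_pos {R : Finset V} (hR : IsIrredRootSystem R) {β : V}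
    (hβ : β ∈ R) : 0 < ⟪β, β⟫ :=
  real_inner_self_pos.mpr (ne_of_mem_of_not_mem hβ hR.zero_not_mem)

theorem IsRegularMod.of_forall_mem_or_neg_mem {R P : Finset V} {q : ℕ} {x : V}
    (hP : ∀ β ∈ R, β ∈ P ∨ -β ∈ P) (hx : IsRegularMod P q x) : IsRegularMod R q x := by
  intro β hβ
  rcases hP β hβ with hβP | hβP
  · exact hx β hβP
  · obtain ⟨k, hk, hkq⟩ := hx _ hβP
    refine ⟨-k, ?_, fun h => hkq (dvd_neg.mp h)⟩
    rw [inner_neg_right] at hk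
    push_cast
    linarith

theorem IsRegularMod.one_le_abs_inner_sub {R : Finset V} {q : ℕ} {x β : V}
    (hx : IsRegularMod R q x) (hβ : β ∈ R) (t : ℤ) : 1 ≤ |⟪x, β⟫ - q * t| := by
  obtain ⟨k, hk, hkq⟩ := hx β hβ
  have hne : k - q * t ≠ 0 := fun h0 => hkq ⟨t, by linarith⟩
  rw [hk]
  exact_mod_cast Int.one_le_abs hne

theorem IsRegularMod.hyperplaneReflection {R : Finset V} (hR : IsIrredRootSystem R) {q : ℕ}
    {x v : V} (hx : IsRegularMod R q x) (hv : v ∈ R) (t : ℤ) :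
    IsRegularMod R q (hyperplaneReflection v (q * t) x) := by
  intro β hβ
  obtain ⟨k, hk, hkq⟩ := hx _ (hR.reflect_mem v hv β hβ)
  obtain ⟨z, hz⟩ := hR.crystallographic v hv β hβ
  have hcoroot : 2 * ⟪β, v⟫ / ⟪v, v⟫ = z := by
    rw [hz, mul_div_assoc, div_self (hR.inner_self_pos hv).ne', mul_one]
  refine ⟨k + q * t * z, ?_, fun hdvd => hkq ?_⟩
  · rw [inner_hyperplaneReflection, hk, hcoroot]
    push_cast
    ring
  · exact (dvd_add_left (dvd_mul_of_dvd_left (dvd_mul_right _ _) _)).mp hdvd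

theorem IsRegularMod.exists_norm_sub_sq_le {R : Finset V} (hR : IsIrredRootSystem R) {q : ℕ}
    {x v p : V} (hx : IsRegularMod R q x) (hv : v ∈ R) (t : ℤ) {c : ℝ} (hc : 0 ≤ c)
    (hsep : (⟪x, v⟫ - q * t) * (⟪p, v⟫ - q * t) ≤ 0) (hpc : c ≤ |⟪p, v⟫ - q * t|) :
    ∃ y, IsRegularMod R q y ∧ ‖y - p‖ ^ 2 ≤ ‖x - p‖ ^ 2 - 4 * c / ∑ β ∈ R, ⟪β, β⟫ := by
  have hvv := hR.inner_self_pos hv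
  have hvM : ⟪v, v⟫ ≤ ∑ β ∈ R, ⟪β, β⟫ :=
    Finset.single_le_sum (fun β hβ => (hR.inner_self_pos hβ).le) hv
  have hprod : (⟪x, v⟫ - q * t) * (⟪p, v⟫ - q * t) ≤ -c := by
    have habs := abs_of_nonpos hsep
    rw [abs_mul] at habs
    nlinarith [hx.one_le_abs_inner_sub hv t]
  refine ⟨_, hx.hyperplaneReflection hR hv t, ?_⟩
  rw [norm_hyperplaneReflection_sub_sq hvv.ne']
  have hdiv : 4 * c / ∑ β ∈ R, ⟪β, β⟫ ≤ 4 * c / ⟪v, v⟫ :=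
    div_le_div_of_nonneg_left (by positivity) hvv hvM
  have : 4 * (⟪x, v⟫ - q * t) * (⟪p, v⟫ - q * t) / ⟪v, v⟫ ≤ -(4 * c / ⟪v, v⟫) := by
    rw [← neg_div, div_le_div_iff_of_pos_right hvv]
    linarith
  linarith

theorem IsRegularMod.exists_mem_alcove {R : Finset V} (hR : IsIrredRootSystem R) {ι : Type*}
    {α : ι → V} (hαR : ∀ i, α i ∈ R) {θ : V} (hθ : θ ∈ R) {q : ℕ} {p : V} {c : ℝ}
    (hc : 0 < c) (hpα : ∀ i, c ≤ ⟪p, α i⟫) (hpθ : ⟪p, θ⟫ ≤ q - c) {x : V}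
    (hx : IsRegularMod R q x) :
    ∃ y, IsRegularMod R q y ∧ (∀ i, 1 ≤ ⟪y, α i⟫) ∧ ⟪y, θ⟫ ≤ q - 1 := by
  have hM : 0 < ∑ β ∈ R, ⟪β, β⟫ :=
    Finset.sum_pos (fun β hβ => hR.inner_self_pos hβ) hR.nonempty
  refine exists_of_forall_or_exists_le_sub (fun y => ‖y - p‖ ^ 2) (fun y => sq_nonneg _)
    (by positivity : 0 < 4 * c / ∑ β ∈ R, ⟪β, β⟫) (fun y hy => ?_) hx
  by_cases hα : ∃ i, ⟪y, α i⟫ ≤ 0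
  · obtain ⟨i, hi⟩ := hα
    refine .inr (hy.exists_norm_sub_sq_le hR (hαR i) 0 hc.le ?_ ?_) <;>
      simp only [Int.cast_zero, mul_zero, sub_zero]
    · exact mul_nonpos_of_nonpos_of_nonneg hi (hc.le.trans (hpα i))
    · exact (hpα i).trans (le_abs_self _)
  by_cases hθq : ⟪y, θ⟫ < q
  · refine .inl ⟨fun i => ?_, ?_⟩
    · have := hy.one_le_abs_inner_sub (hαR i) 0
      simp only [not_exists, not_le] at hα
      rwa [Int.cast_zero, mul_zero, sub_zero, abs_of_pos (hα i)] at this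
    · have := hy.one_le_abs_inner_sub hθ 1
      rw [Int.cast_one, mul_one, abs_of_neg (sub_neg.mpr hθq)] at this
      linarith
  refine .inr (hy.exists_norm_sub_sq_le hR hθ 1 hc.le ?_ ?_) <;> simp only [Int.cast_one, mul_one]
  · exact mul_nonpos_of_nonneg_of_nonpos (by linarith) (by linarith)
  · rw [abs_of_neg (by linarith)]
    linarith

theorem IsIrredRootSystem.sum_pos_of_eq_sum_smul {R : Finset V} (hR : IsIrredRootSystem R)
    {ι : Type*} [Fintype ι] {α : ι → V} {s : ι → ℤ} (hs : ∀ i, 0 ≤ s i) {β : V} (hβ : β ∈ R)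
    (hβα : β = ∑ i, (s i : ℝ) • α i) : 0 < ∑ i, s i := by
  refine (Finset.sum_nonneg fun i _ => hs i).lt_of_ne fun h0 => hR.zero_not_mem ?_
  have hs0 := (Finset.sum_eq_zero_iff_of_nonneg fun i _ => hs i).mp h0.symm
  simpa [hβα, hs0] using hβ

theorem IsRegularMod.one_add_sum_le {R : Finset V} (hR : IsIrredRootSystem R) {ι : Type*}
    [Fintype ι] {α : ι → V} (hind : LinearIndependent ℝ α) (hαR : ∀ i, α i ∈ R) {θ : V}
    (hθR : θ ∈ R) {a : ι → ℕ} (hθ : θ = ∑ i, (a i : ℝ) • α i) {q : ℕ} (hq : 0 < q)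
    {x : V} (hx : IsRegularMod R q x) : 1 + ∑ i, a i ≤ q := by
  set h := 1 + ∑ i, a i
  have hθpair : ∀ y, ⟪y, θ⟫ = ∑ i, (a i : ℝ) * ⟪y, α i⟫ := fun y => by
    simp only [hθ, inner_sum, real_inner_smul_right]
  have ha : (∑ i, a i : ℝ) = h - 1 := by simp [h]
  have hh0 : (0 : ℝ) < h := by positivity
  obtain ⟨p, hp⟩ := exists_inner_eq_of_linearIndependent hind (fun _ => (q : ℝ) / h)
  obtain ⟨y, -, hyα, hyθ⟩ := hx.exists_mem_alcove hR hαR hθR (by positivity)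
    (fun i => (hp i).ge) (by rw [hθpair]; simp only [hp, ← Finset.sum_mul, ha]; field_simp; rfl)
  have : (h : ℝ) - 1 ≤ q - 1 := by
    calc (h : ℝ) - 1 = ∑ i, (a i : ℝ) * 1 := by simp [ha]
      _ ≤ ⟪y, θ⟫ := by rw [hθpair]; gcongr with i; exact hyα i
      _ ≤ q - 1 := hyθ
  exact_mod_cast (by linarith : (h : ℝ) ≤ q)

end RootSystem

theorem chiCount_pos_iff {m n q : ℕ} [NeZero q] (S : Matrix (Fin m) (Fin n) ℤ) :
    0 < chiCount m n q S ↔ ∃ w : Fin m → ℤ, ∀ j, ¬ (q : ℤ) ∣ Matrix.vecMul w S j := by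
  have hcast : ∀ (w : Fin m → ℤ) j, ((Matrix.vecMul w S j : ℤ) : ZMod q) =
      Matrix.vecMul (fun i => (w i : ZMod q)) (S.map (fun a => (a : ZMod q))) j :=
    fun w j => (Int.castRingHom (ZMod q)).map_vecMul S w j
  simp only [chiCount, Nat.card_pos_iff, and_iff_left (inferInstance : Finite _),
    ← ZMod.intCast_zmod_eq_zero_iff_dvd, hcast]
  constructor
  · rintro ⟨z, hz⟩
    exact ⟨fun i => (z i).val, by simpa using hz⟩
  · rintro ⟨w, hw⟩
    exact ⟨⟨_, hw⟩⟩

theorem stmt_10_general {V : Type*} [NormedAddCommGroup V] [InnerProductSpace ℝ V]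
    (m : ℕ)
    (R : Finset V) (hR : IsIrredRootSystem R)
    (α : Fin m → V) (hind : LinearIndependent ℝ α)
    (P : Finset V) (hPR : P ⊆ R)
    (hPpos : ∀ β ∈ R, β ∈ P ∨ -β ∈ P)
    (hαP : ∀ i, α i ∈ P)
    (n : ℕ)
    (S : Matrix (Fin m) (Fin n) ℤ) (hSnn : ∀ i j, 0 ≤ S i j)
    (ρ : Fin n ≃ {β : V // β ∈ P})
    (hScol : ∀ j : Fin n, (ρ j : V) = ∑ i, (S i j : ℝ) • α i)
    (nvec : Fin m → ℕ)
    (hhigh_mem : ∃ j : Fin n, ∀ i, S i j = (nvec i : ℤ))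
    (hhighest : ∀ (j : Fin n) (i : Fin m), S i j ≤ (nvec i : ℤ))
    (h : ℕ) (hh : h = 1 + ∑ i, nvec i) :
    ∀ q : ℕ, 0 < q → (0 < chiCount m n q S ↔ h ≤ q) := by
  intro q hq
  have : NeZero q := ⟨hq.ne'⟩
  rw [chiCount_pos_iff, hh]
  constructor
  · rintro ⟨w, hw⟩
    obtain ⟨x, hx⟩ := exists_inner_eq_of_linearIndependent hind (fun i => w i)
    have hxP : IsRegularMod P q x := fun β hβ => by
      obtain ⟨j, hj⟩ := ρ.surjective ⟨β, hβ⟩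
      refine ⟨Matrix.vecMul w S j, ?_, hw j⟩
      rw [← show (ρ j : V) = β from congrArg Subtype.val hj, hScol]
      simp [inner_sum, real_inner_smul_right, hx, Matrix.vecMul, dotProduct, mul_comm]
    obtain ⟨jθ, hjθ⟩ := hhigh_mem
    exact (hxP.of_forall_mem_or_neg_mem hPpos).one_add_sum_le hR hind (fun i => hPR (hαP i))
      (hPR (ρ jθ).2) (by simp [hScol, hjθ]) hq
  · intro hhq
    refine ⟨1, fun j hdvd => ?_⟩
    have hsum : Matrix.vecMul 1 S j = ∑ i, S i j := by simp [Matrix.vecMul, dotProduct]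
    have hpos := hR.sum_pos_of_eq_sum_smul (hSnn · j) (hPR (ρ j).2) (hScol j)
    have hlt : ∑ i, S i j < q := by
      calc ∑ i, S i j ≤ ∑ i, (nvec i : ℤ) := Finset.sum_le_sum fun i _ => hhighest j i
        _ < q := by rw [← Nat.cast_sum]; omega
    rw [hsum] at hdvd
    exact hpos.ne' (Int.eq_zero_of_dvd_of_nonneg_of_lt hpos.le hlt hdvd)

/-- Corollary 3.4: for an irreducible reduced crystallographic root system `R` of rank
`m` with base `α`, positive system `P` enumerated by the columns of the coefficient
matrix `S`, and Coxeter number `h`, one has `χ_S(q) > 0` if and only if `q ≥ h`. -/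
theorem stmt_10 {V : Type*} [NormedAddCommGroup V] [InnerProductSpace ℝ V]
    [FiniteDimensional ℝ V]
    (m : ℕ) (hm : 0 < m) (hdim : Module.finrank ℝ V = m)
    (R : Finset V) (hR : IsIrredRootSystem R)
    (α : Fin m → V) (hind : LinearIndependent ℝ α)
    (P : Finset V) (hPR : P ⊆ R)
    (hPpos : ∀ β ∈ R, β ∈ P ∨ -β ∈ P)
    (hPnn : ∀ β ∈ P, -β ∉ P)
    (hαP : ∀ i, α i ∈ P)
    (n : ℕ) (hn : 2 * n = R.card)
    (S : Matrix (Fin m) (Fin n) ℤ) (hSnn : ∀ i j, 0 ≤ S i j)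
    (ρ : Fin n ≃ {β : V // β ∈ P})
    (hScol : ∀ j : Fin n, (ρ j : V) = ∑ i, (S i j : ℝ) • α i)
    (nvec : Fin m → ℕ) (hnvec : ∀ i, 0 < nvec i)
    (hhigh_mem : ∃ j : Fin n, ∀ i, S i j = (nvec i : ℤ))
    (hhighest : ∀ (j : Fin n) (i : Fin m), S i j ≤ (nvec i : ℤ))
    (h : ℕ) (hh : h = 1 + ∑ i, nvec i) :
    ∀ q : ℕ, 0 < q → (0 < chiCount m n q S ↔ h ≤ q) :=
  stmt_10_general m R hR α hind P hPR hPpos hαP n S hSnn ρ hScol nvec hhigh_mem hhighest h hh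
end

section
/- Let m ≥ 2 and let q be a positive integer. Then the number χ_{B_m}(q) of points z ∈ (ℤ/qℤ)^m satisfying z_i ≠ 0 for all 1 ≤ i ≤ m, and z_i − z_j ≠ 0 and z_i + z_j ≠ 0 for all 1 ≤ i < j ≤ m, equals (q−1)(q−3)⋯(q−2m+1) if q is odd, and equals (q−2)(q−4)⋯(q−2m+2)·(q−m) if q is even. -/
/-!
A point is a tuple over `S = (ℤ/qℤ) ∖ {0}` with `z i ≠ ± z j` for `i ≠ j`. When negation has no
fixed point on `S`, such tuples are built one coordinate at a time, each new coordinate avoiding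
the `2i` values `± z j` already used, so there are `∏_{i<m} (|S| − 2i)` of them; for odd `q` this
is the formula. For even `q`, `q/2` is the only nonzero fixed point of negation. It occupies at most
one of the `m` coordinates, and deleting it leaves a tuple over `S ∖ {q/2}`, so the count is
`N(m) + m N(m − 1)` with `N(k) = ∏_{i<k} (q − 2 − 2i)`.
-/

open Finset

section SignedInjections

variable {G : Type*} [InvolutiveNeg G] [DecidableEq G] {S : Finset G} {m : ℕ}

def signedInjections (S : Finset G) (m : ℕ) : Finset (Fin m → G) :=
  {z ∈ Fintype.piFinset fun _ => S | ∀ i j, i ≠ j → z i ≠ z j ∧ z i ≠ -z j}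

def signedRange (w : Fin m → G) : Finset G := univ.image w ∪ univ.image (-w)

lemma mem_signedInjections {z : Fin m → G} :
    z ∈ signedInjections S m ↔ (∀ i, z i ∈ S) ∧ ∀ i j, i ≠ j → z i ≠ z j ∧ z i ≠ -z j := by
  simp [signedInjections]

lemma mem_signedRange {w : Fin m → G} {a : G} :
    a ∈ signedRange w ↔ ∃ i, w i = a ∨ -w i = a := by
  simp [signedRange, exists_or]

lemma injective_of_mem_signedInjections {z : Fin m → G} (hz : z ∈ signedInjections S m) :
    Function.Injective z :=
  fun i j h => by_contra fun hne => ((mem_signedInjections.1 hz).2 i j hne).1 h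

lemma mem_signedInjections_iff_removeNth (k : Fin (m + 1)) {z : Fin (m + 1) → G} :
    z ∈ signedInjections S (m + 1) ↔
      k.removeNth z ∈ signedInjections S m ∧ z k ∈ S ∧ z k ∉ signedRange (k.removeNth z) := by
  simp only [mem_signedInjections, mem_signedRange, Fin.removeNth, not_exists, not_or]
  simp_rw [Fin.forall_iff_succAbove k]
  simp only [ne_eq, not_true_eq_false, false_imp_iff, true_and, Fin.succAbove_ne,
    (Fin.succAbove_ne _ _).symm, not_false_eq_true, forall_const, Fin.succAbove_right_inj,
    ← neg_eq_iff_eq_neg, eq_comm (a := z k), forall_and]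
  tauto

lemma signedRange_subset (hneg : ∀ x ∈ S, -x ∈ S) {w : Fin m → G}
    (hw : w ∈ signedInjections S m) : signedRange w ⊆ S := by
  intro a ha
  obtain ⟨i, rfl | rfl⟩ := mem_signedRange.1 ha
  exacts [(mem_signedInjections.1 hw).1 i, hneg _ ((mem_signedInjections.1 hw).1 i)]

lemma card_signedRange (hfix : ∀ x ∈ S, -x ≠ x) {w : Fin m → G}
    (hw : w ∈ signedInjections S m) : #(signedRange w) = 2 * m := by
  obtain ⟨hS, hpair⟩ := mem_signedInjections.1 hw
  have hinj := injective_of_mem_signedInjections hw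
  have hdisj : Disjoint (univ.image w) (univ.image (-w)) := by
    simp only [disjoint_left, mem_image, mem_univ, true_and, Pi.neg_apply, not_exists,
      forall_exists_index, forall_apply_eq_imp_iff]
    intro i j h
    rcases eq_or_ne j i with rfl | hne
    · exact hfix _ (hS j) h
    · exact (hpair i j hne.symm).2 h.symm
  have hinj_neg : Function.Injective (-w) := neg_injective.comp hinj
  rw [signedRange, card_union_of_disjoint hdisj, card_image_of_injective _ hinj,
    card_image_of_injective _ hinj_neg, card_univ, Fintype.card_fin, two_mul]

lemma card_signedInjections_succ (m : ℕ) :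
    #(signedInjections S (m + 1)) =
      ∑ w ∈ signedInjections S m, #(S \ signedRange w) := by
  rw [← card_sigma]
  refine card_nbij' (fun z => ⟨Fin.removeNth 0 z, z 0⟩) (fun p => Fin.insertNth 0 p.2 p.1)
    ?_ ?_ ?_ ?_
  · intro z hz
    simpa using (mem_signedInjections_iff_removeNth 0).1 hz
  · rintro ⟨w, a⟩ hp
    simp only [coe_sigma, Set.mem_sigma_iff, mem_coe, mem_sdiff] at hp
    simpa [mem_signedInjections_iff_removeNth 0] using hp
  · intro z _
    simp
  · rintro ⟨w, a⟩ _
    simp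

theorem card_signedInjections (hneg : ∀ x ∈ S, -x ∈ S) (hfix : ∀ x ∈ S, -x ≠ x) (m : ℕ) :
    (#(signedInjections S m) : ℤ) = ∏ i ∈ range m, ((#S : ℤ) - 2 * i) := by
  induction m with
  | zero => simp [signedInjections]
  | succ m ih =>
    have hfiber : ∀ w ∈ signedInjections S m, (#(S \ signedRange w) : ℤ) = #S - 2 * m := by
      intro w hw
      have hsub := signedRange_subset hneg hw
      rw [card_sdiff_of_subset hsub, Nat.cast_sub (card_le_card hsub), card_signedRange hfix hw,
        Nat.cast_mul, Nat.cast_ofNat]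
    rw [card_signedInjections_succ, Nat.cast_sum, sum_congr rfl hfiber, sum_const, nsmul_eq_mul,
      ih, prod_range_succ]

lemma mem_signedInjections_insert_and_ne_iff {c : G} (hc : c ∉ S) {z : Fin m → G} :
    z ∈ signedInjections (insert c S) m ∧ (∀ i, z i ≠ c) ↔ z ∈ signedInjections S m := by
  simp only [mem_signedInjections, mem_insert]
  constructor
  · rintro ⟨⟨hT, hpair⟩, hne⟩
    exact ⟨fun i => (hT i).resolve_left (hne i), hpair⟩
  · rintro ⟨hS, hpair⟩
    exact ⟨⟨fun i => Or.inr (hS i), hpair⟩, fun i h => hc (h ▸ hS i)⟩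

lemma insertNth_mem_signedInjections_insert_iff {c : G} (hc : c ∉ S) (hcc : -c = c)
    (k : Fin (m + 1)) {w : Fin m → G} :
    k.insertNth c w ∈ signedInjections (insert c S) (m + 1) ↔ w ∈ signedInjections S m := by
  rw [mem_signedInjections_iff_removeNth k, ← mem_signedInjections_insert_and_ne_iff hc]
  simp [mem_signedRange, neg_eq_iff_eq_neg, hcc]

lemma card_filter_exists_eq_signedInjections_insert {c : G} (hc : c ∉ S) (hcc : -c = c)
    (m : ℕ) :
    #{z ∈ signedInjections (insert c S) (m + 1) | ∃ k, z k = c} =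
      (m + 1) * #(signedInjections S m) := by
  have hmaps : ∀ p ∈ (univ : Finset (Fin (m + 1))) ×ˢ signedInjections S m,
      p.1.insertNth c p.2 ∈ signedInjections (insert c S) (m + 1) := fun p hp =>
    (insertNth_mem_signedInjections_insert_iff hc hcc p.1).2 (mem_product.1 hp).2
  rw [show (m + 1) * #(signedInjections S m) =
      #((univ : Finset (Fin (m + 1))) ×ˢ signedInjections S m) by simp [card_product]]
  symm
  refine card_nbij (fun p => p.1.insertNth c p.2) ?_ ?_ ?_
  · exact fun p hp => mem_filter.2 ⟨hmaps p hp, p.1, by simp⟩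
  · rintro ⟨k, w⟩ hp ⟨k', w'⟩ - h
    have hkk' : k = k' := injective_of_mem_signedInjections (hmaps _ hp) <| by
      simpa using (congr_fun h k').symm
    subst hkk'
    simpa using h
  · intro z hz
    obtain ⟨hz, k, rfl⟩ := mem_filter.1 hz
    refine ⟨⟨k, k.removeNth z⟩, ?_, Fin.insertNth_self_removeNth k z⟩
    rw [mem_coe, mem_product, ← insertNth_mem_signedInjections_insert_iff hc hcc k,
      Fin.insertNth_self_removeNth]
    exact ⟨mem_univ k, hz⟩

theorem card_signedInjections_insert {c : G} (hc : c ∉ S) (hcc : -c = c) (m : ℕ) :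
    #(signedInjections (insert c S) (m + 1)) =
      #(signedInjections S (m + 1)) + (m + 1) * #(signedInjections S m) := by
  rw [← card_filter_add_card_filter_not (s := signedInjections (insert c S) (m + 1))
    (fun z => ∃ k, z k = c), add_comm, card_filter_exists_eq_signedInjections_insert hc hcc]
  congr 2
  ext z
  simpa using mem_signedInjections_insert_and_ne_iff hc

end SignedInjections

lemma natCard_eq_card_signedInjections {G : Type*} [AddCommGroup G] [Fintype G] [DecidableEq G]
    (m : ℕ) :
    Nat.card {z : Fin m → G //
        (∀ i, z i ≠ 0) ∧ ∀ i j : Fin m, i < j → z i ≠ z j ∧ z i + z j ≠ 0} =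
      #(signedInjections (univ.erase (0 : G)) m) := by
  rw [Nat.card_eq_fintype_card, Fintype.card_subtype]
  congr 1
  ext z
  simp only [mem_filter, mem_univ, true_and, mem_signedInjections, mem_erase, and_true,
    ne_eq, add_eq_zero_iff_eq_neg]
  refine and_congr_right fun _ => ⟨fun h i j hij => ?_, fun h i j hij => h i j hij.ne⟩
  rcases Ne.lt_or_gt hij with hlt | hgt
  · exact h i j hlt
  · obtain ⟨hne, hne_neg⟩ := h j i hgt
    exact ⟨Ne.symm hne, fun e => hne_neg (by rw [e, neg_neg])⟩

namespace ZMod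

lemma natCast_half_ne_zero {q : ℕ} (hq : 2 ≤ q) : ((q / 2 : ℕ) : ZMod q) ≠ 0 := by
  rw [Ne, natCast_eq_zero_iff]
  exact fun h => (Nat.div_pos hq two_pos).ne' (Nat.eq_zero_of_dvd_of_lt h (by omega))

lemma neg_eq_self_iff_of_odd {q : ℕ} (hq : q % 2 = 1) {x : ZMod q} : -x = x ↔ x = 0 := by
  rw [neg_eq_self_iff, or_iff_left (by omega)]

variable {q : ℕ} [NeZero q]

lemma neg_eq_self_iff_of_even (hq : q % 2 = 0) {x : ZMod q} :
    -x = x ↔ x = 0 ∨ x = ((q / 2 : ℕ) : ZMod q) := by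
  have hq0 : 0 < q := Nat.pos_of_neZero q
  rw [neg_eq_self_iff]
  refine or_congr_right ⟨fun h => ?_, fun h => ?_⟩
  · rw [← natCast_zmod_val x]
    congr 1
    omega
  · rw [h, val_natCast, Nat.mod_eq_of_lt (by omega)]
    omega

lemma card_univ_erase_zero : (#(univ.erase (0 : ZMod q)) : ℤ) = q - 1 := by
  rw [card_erase_of_mem (mem_univ _), card_univ, ZMod.card,
    Nat.cast_sub (Nat.one_le_iff_ne_zero.2 (NeZero.ne q)), Nat.cast_one]

lemma card_signedInjections_erase_zero_of_odd (hq : q % 2 = 1) (m : ℕ) :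
    (#(signedInjections (univ.erase (0 : ZMod q)) m) : ℤ) =
      ∏ i ∈ range m, ((q : ℤ) - (2 * i + 1)) := by
  rw [card_signedInjections (fun x hx => by simpa using hx)
    (fun x hx => by simpa [neg_eq_self_iff_of_odd hq] using hx), card_univ_erase_zero]
  exact prod_congr rfl fun i _ => by ring

lemma card_signedInjections_erase_zero_of_even (hq : q % 2 = 0) (n : ℕ) :
    (#(signedInjections (univ.erase (0 : ZMod q)) (n + 1)) : ℤ) =
      (∏ i ∈ range n, ((q : ℤ) - 2 * (i + 1))) * ((q : ℤ) - (n + 1)) := by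
  have h2q : 2 ≤ q := by have := NeZero.pos q; omega
  set c : ZMod q := ((q / 2 : ℕ) : ZMod q)
  have hc : c ∈ univ.erase 0 := mem_erase.2 ⟨natCast_half_ne_zero h2q, mem_univ c⟩
  have hcc : -c = c := (neg_eq_self_iff_of_even hq).2 (Or.inr rfl)
  set S := (univ.erase (0 : ZMod q)).erase c
  have hS : ∀ x, x ∈ S ↔ x ≠ 0 ∧ x ≠ c := by simp [S, and_comm]
  have hneg : ∀ x ∈ S, -x ∈ S := by
    simp only [hS, ne_eq, neg_eq_zero]
    exact fun x ⟨hx0, hxc⟩ => ⟨hx0, fun h => hxc (by rw [← neg_neg x, h, hcc])⟩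
  have hfix : ∀ x ∈ S, -x ≠ x := fun x hx h =>
    ((neg_eq_self_iff_of_even hq).1 h).elim ((hS x).1 hx).1 ((hS x).1 hx).2
  have hcardS : (#S : ℤ) = q - 2 := by
    rw [card_erase_of_mem hc, Nat.cast_sub (card_pos.2 ⟨c, hc⟩), card_univ_erase_zero]
    ring
  rw [← insert_erase hc, card_signedInjections_insert (notMem_erase c _) hcc]
  push_cast
  rw [card_signedInjections hneg hfix, card_signedInjections hneg hfix, hcardS, prod_range_succ,
    prod_congr rfl fun (i : ℕ) _ => show (q : ℤ) - 2 - 2 * (i : ℤ) = q - 2 * ((i : ℤ) + 1) by ring]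
  ring

end ZMod

/-- The value of the characteristic quasi-polynomial of the root system `B_m`:
for a positive integer `q`, the number of `z ∈ (ℤ/qℤ)^m` with `z i ≠ 0` for all `i`
and `z i ≠ z j`, `z i + z j ≠ 0` for all `i < j` equals
`(q−1)(q−3)⋯(q−2m+1)` if `q` is odd and `(q−2)(q−4)⋯(q−2m+2)(q−m)` if `q` is even. -/
theorem stmt_11 (m : ℕ) (hm : 2 ≤ m) (q : ℕ) (hq : 0 < q) :
    (Nat.card {z : Fin m → ZMod q //
        (∀ i, z i ≠ 0) ∧ ∀ i j : Fin m, i < j → z i ≠ z j ∧ z i + z j ≠ 0} : ℤ) =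
      if q % 2 = 1 then
        ∏ i ∈ Finset.range m, ((q : ℤ) - (2 * i + 1))
      else
        (∏ i ∈ Finset.range (m - 1), ((q : ℤ) - 2 * (i + 1))) * ((q : ℤ) - m) := by
  have : NeZero q := ⟨hq.ne'⟩
  rw [natCard_eq_card_signedInjections]
  split_ifs with hodd
  · exact ZMod.card_signedInjections_erase_zero_of_odd hodd m
  · obtain ⟨n, rfl⟩ : ∃ n, m = n + 1 := ⟨m - 1, by omega⟩
    rw [ZMod.card_signedInjections_erase_zero_of_even (by omega) n]
    simp
end

section
/- Let m ≥ 2. For every positive integer q, χ_{B_m}(q) = χ_{C_m}(q); that is, the characteristic quasi-polynomials of the root systems B_m and C_m coincide. -/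
/-!
Both counts are instances of one problem. Let `σ` be an involution of a finite set `α` and `F` a
`σ`-stable set containing all fixed points of `σ`. The sequences `w` of length `n` with `w i ∉ F`
and `w i ∉ {w j, σ (w j)}` for `i ≠ j` number `∏_{j<n} (|α| - |F| - 2j)`, since every entry uses
up one two-element orbit of `σ`.

For `B_m` this is `σ x = -x`, `F = {0}`; when `q` is even, the fixed point `q/2` is admissible but
can occur at most once, which adds a second term.

For `C_m`, write `s_i = z_i + ⋯ + z_{m-1}` (so `s_m = 0`) and `t = z_m`. The conditions become
`s_i ≠ s_j`, `s_i + s_j + t ≠ 0` and `2 s_i + t ≠ 0`: the same problem for `σ x = -t - x` with `F`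
the fixed points `{x | 2x + t = 0}`. Pinning `s_m = 0` forces `t ≠ 0` and adds the orbit
`{0, -t}` to `F`, so `χ_{C_m}(q)` is a sum over `t ≠ 0` of such products, in which `|F|` only
depends on whether `-t` is a double. Comparing with `χ_{B_m}(q)` is then arithmetic.
-/

open Finset Function

theorem Nat.card_subtype_eq_sum_card_fiber {β γ : Type*} [Finite β] [Fintype γ]
    (P : β → Prop) (f : β → γ) :
    Nat.card {x // P x} = ∑ c, Nat.card {x // P x ∧ f x = c} := by
  rw [← Nat.card_congr (Equiv.sigmaFiberEquiv fun x : {x // P x} => f x), Nat.card_sigma]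
  exact sum_congr rfl fun c _ =>
    Nat.card_congr (Equiv.subtypeSubtypeEquivSubtypeInter P (f · = c))

theorem Nat.card_subtype_eq_card_and_add_card_and_not {β : Type*} [Finite β]
    (P Q : β → Prop) :
    Nat.card {x // P x} = Nat.card {x // P x ∧ Q x} + Nat.card {x // P x ∧ ¬Q x} := by
  classical
  rw [← Nat.card_sum]
  exact Nat.card_congr ((Equiv.sumCompl fun x : {x // P x} => Q x).symm.trans
    (Equiv.sumCongr (Equiv.subtypeSubtypeEquivSubtypeInter P Q)
      (Equiv.subtypeSubtypeEquivSubtypeInter P (¬Q ·))))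

theorem prod_range_succ_sub_two_mul (N n : ℕ) :
    ∏ j ∈ range (n + 1), (N - 2 * j) = N * ∏ j ∈ range n, (N - 2 - 2 * j) := by
  rw [prod_range_succ', mul_comm]
  congr 1
  exact prod_congr rfl fun j _ => by omega

def OrbitSeparated {α : Type*} (σ : α → α) (F : Finset α) {n : ℕ} (w : Fin n → α) : Prop :=
  (∀ i, w i ∉ F) ∧ Pairwise fun i j => w i ≠ w j ∧ w i ≠ σ (w j)

section OrbitSeparated

variable {α : Type*} {σ : α → α} {F : Finset α} {n : ℕ}

theorem orbitSeparated_iff_lt (hσ : Involutive σ) {w : Fin n → α} :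
    OrbitSeparated σ F w ↔ (∀ i, w i ∉ F) ∧ ∀ i j, i < j → w i ≠ w j ∧ w i ≠ σ (w j) := by
  have : Std.Symm fun i j => w i ≠ w j ∧ w i ≠ σ (w j) :=
    ⟨fun i j h => ⟨h.1.symm, fun h' => h.2 (by rw [h', hσ])⟩⟩
  exact and_congr_right fun _ => pairwise_iff_lt

theorem orbitSeparated_insertNth_iff [DecidableEq α] (hσ : Involutive σ) (i : Fin (n + 1))
    (a : α) (w : Fin n → α) :
    OrbitSeparated σ F (Fin.insertNth i a w) ↔
      a ∉ F ∧ OrbitSeparated σ (insert a (insert (σ a) F)) w := by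
  have hσa : ∀ x, a = σ x ↔ x = σ a := fun x => eq_comm.trans hσ.eq_iff
  simp only [OrbitSeparated, Pairwise, Fin.forall_iff_succAbove i, Fin.insertNth_apply_same,
    Fin.insertNth_apply_succAbove, ne_eq, not_true_eq_false, Fin.succAbove_ne,
    (Fin.succAbove_ne _ _).symm, Fin.succAbove_right_inj, mem_insert, hσa, @eq_comm _ a,
    not_false_eq_true, forall_const, false_implies, true_and, not_or, forall_and]
  tauto

theorem forall_mem_insert_insert_of_involutive [DecidableEq α] (hσ : Involutive σ)
    (hF : ∀ x ∈ F, σ x ∈ F) (a : α) :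
    ∀ x ∈ insert a (insert (σ a) F), σ x ∈ insert a (insert (σ a) F) := by
  intro x hx
  simp only [mem_insert] at hx ⊢
  rcases hx with rfl | rfl | hx
  · exact .inr (.inl rfl)
  · exact .inl (hσ a)
  · exact .inr (.inr (hF x hx))

theorem card_orbitSeparated_apply_eq [DecidableEq α] (hσ : Involutive σ) (i : Fin (n + 1))
    {a : α} (ha : a ∉ F) :
    Nat.card {w : Fin (n + 1) → α // OrbitSeparated σ F w ∧ w i = a} =
      Nat.card {w : Fin n → α // OrbitSeparated σ (insert a (insert (σ a) F)) w} := by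
  refine Nat.card_congr
    { toFun := fun w => ⟨Fin.removeNth i w.1, ?_⟩
      invFun := fun w => ⟨Fin.insertNth i a w.1,
        (orbitSeparated_insertNth_iff hσ i a w.1).2 ⟨ha, w.2⟩, Fin.insertNth_apply_same ..⟩
      left_inv := fun w => Subtype.ext (by simp [← w.2.2])
      right_inv := fun w => Subtype.ext (by simp) }
  obtain ⟨w, hw, rfl⟩ := w
  rw [← Fin.insertNth_self_removeNth i w, orbitSeparated_insertNth_iff hσ] at hw
  exact hw.2

theorem card_orbitSeparated [Fintype α] [DecidableEq α] (hσ : Involutive σ)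
    (hF : ∀ x ∈ F, σ x ∈ F) (hfix : ∀ x, σ x = x → x ∈ F) (n : ℕ) :
    Nat.card {w : Fin n → α // OrbitSeparated σ F w} =
      ∏ j ∈ range n, (Fintype.card α - #F - 2 * j) := by
  induction n generalizing F with
  | zero => simp [OrbitSeparated, Pairwise]
  | succ n ih =>
    have hfiber (a : α) : Nat.card {w : Fin (n + 1) → α // OrbitSeparated σ F w ∧ w 0 = a} =
        if a ∈ F then 0 else ∏ j ∈ range n, (Fintype.card α - #F - 2 - 2 * j) := by
      split_ifs with ha
      · exact Nat.card_eq_zero.2 (.inl ⟨fun w => (w.2.2 ▸ w.2.1.1 0) ha⟩)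
      have hσa : σ a ∉ F := fun h => ha (hσ a ▸ hF _ h)
      have hcard : #(insert a (insert (σ a) F)) = #F + 2 := by
        rw [card_insert_of_notMem, card_insert_of_notMem hσa]
        simpa [not_or] using ⟨fun h => ha (hfix a h.symm), ha⟩
      rw [card_orbitSeparated_apply_eq hσ 0 ha,
        ih (forall_mem_insert_insert_of_involutive hσ hF a)
          fun x hx => mem_insert_of_mem (mem_insert_of_mem (hfix x hx)), hcard]
      exact prod_congr rfl fun j _ => by omega
    rw [Nat.card_subtype_eq_sum_card_fiber _ (· 0), sum_congr rfl fun a _ => hfiber a,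
      sum_ite, sum_const_zero, zero_add, sum_const, smul_eq_mul, filter_not, filter_mem_eq_inter,
      univ_inter, card_sdiff_of_subset (subset_univ _), card_univ, prod_range_succ_sub_two_mul]

theorem card_orbitSeparated_of_fixedPoint [Fintype α] [DecidableEq α] (hσ : Involutive σ)
    {e : α} (he : σ e = e) (heF : e ∉ F) (n : ℕ) :
    Nat.card {w : Fin (n + 1) → α // OrbitSeparated σ F w} =
      Nat.card {w : Fin (n + 1) → α // OrbitSeparated σ (insert e F) w} +
        (n + 1) * Nat.card {w : Fin n → α // OrbitSeparated σ (insert e F) w} := by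
  have hsplit (w : Fin (n + 1) → α) :
      OrbitSeparated σ (insert e F) w ↔ OrbitSeparated σ F w ∧ ¬∃ i, w i = e := by
    simp only [OrbitSeparated, mem_insert, not_or, forall_and, not_exists]
    tauto
  have hpos : Nat.card {w : Fin (n + 1) → α // OrbitSeparated σ F w ∧ ∃ i, w i = e} =
      ∑ i, Nat.card {w : Fin (n + 1) → α // OrbitSeparated σ F w ∧ w i = e} := by
    rw [← Nat.card_sigma]
    refine (Nat.card_eq_of_bijective (fun p => ⟨p.2.1, p.2.2.1, p.1, p.2.2.2⟩) ⟨?_, ?_⟩).symm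
    · rintro ⟨i, w, hw, hi⟩ ⟨j, w', hw', hj⟩ h
      obtain rfl : w = w' := congrArg Subtype.val h
      obtain rfl : i = j := by_contra fun hij => (hw.2 hij).1 (hi.trans hj.symm)
      rfl
    · rintro ⟨w, hw, i, hi⟩
      exact ⟨⟨i, w, hw, hi⟩, rfl⟩
  rw [Nat.card_subtype_eq_card_and_add_card_and_not _ (∃ i, · i = e), hpos, add_comm,
    Nat.card_congr (Equiv.subtypeEquivRight hsplit)]
  congr 1
  rw [sum_congr rfl fun i _ => card_orbitSeparated_apply_eq hσ i heF, he, insert_idem,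
    sum_const, card_univ, Fintype.card_fin, smul_eq_mul]

end OrbitSeparated

section TypeB

variable {R : Type*} [AddCommGroup R]

def NonvanishingB {m : ℕ} (z : Fin m → R) : Prop :=
  (∀ i, z i ≠ 0) ∧ ∀ i j : Fin m, i < j → z i ≠ z j ∧ z i + z j ≠ 0

theorem nonvanishingB_iff {m : ℕ} (z : Fin m → R) :
    NonvanishingB z ↔ OrbitSeparated Neg.neg {0} z := by
  simp [NonvanishingB, orbitSeparated_iff_lt neg_involutive, add_eq_zero_iff_eq_neg]

theorem card_nonvanishingB [Fintype R] [DecidableEq R] (h : ∀ x : R, -x = x → x = 0)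
    (m : ℕ) :
    Nat.card {z : Fin m → R // NonvanishingB z} =
      ∏ j ∈ range m, (Fintype.card R - 1 - 2 * j) := by
  simp_rw [nonvanishingB_iff]
  rw [card_orbitSeparated neg_involutive (by simp) (by simpa using h), card_singleton]

theorem card_nonvanishingB_of_neg_eq_self_iff [Fintype R] [DecidableEq R] {e : R}
    (he0 : e ≠ 0) (he : ∀ x : R, -x = x ↔ x = 0 ∨ x = e) (n : ℕ) :
    Nat.card {z : Fin (n + 1) → R // NonvanishingB z} =
      ∏ j ∈ range (n + 1), (Fintype.card R - 2 - 2 * j) +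
        (n + 1) * ∏ j ∈ range n, (Fintype.card R - 2 - 2 * j) := by
  have hF : ∀ x ∈ ({e, 0} : Finset R), -x ∈ ({e, 0} : Finset R) := by
    simp [(he e).2 (.inr rfl)]
  have hfix : ∀ x : R, -x = x → x ∈ ({e, 0} : Finset R) := by
    simpa [or_comm] using fun x => (he x).1
  simp_rw [nonvanishingB_iff]
  rw [card_orbitSeparated_of_fixedPoint neg_involutive ((he e).2 (.inr rfl)) (by simpa using he0),
    card_orbitSeparated neg_involutive hF hfix, card_orbitSeparated neg_involutive hF hfix,
    card_pair he0]

end TypeB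

section SuffixSum

variable {R : Type*} [AddCommGroup R] {n : ℕ}

def suffixSum (z : Fin (n + 1) → R) (i : Fin (n + 1)) : R := ∑ k ∈ Ico i (Fin.last n), z k

theorem sum_Ico_eq_suffixSum_sub (z : Fin (n + 1) → R) {i j : Fin (n + 1)} (hij : i ≤ j) :
    ∑ k ∈ Ico i j, z k = suffixSum z i - suffixSum z j := by
  rw [eq_sub_iff_add_eq, suffixSum, suffixSum, ← sum_union (Ico_disjoint_Ico_consecutive _ _ _),
    Ico_union_Ico_eq_Ico hij (Fin.le_last j)]

@[simp]
theorem suffixSum_last (z : Fin (n + 1) → R) : suffixSum z (Fin.last n) = 0 := by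
  simp [suffixSum]

theorem suffixSum_castSucc (z : Fin (n + 1) → R) (i : Fin n) :
    suffixSum z i.castSucc = z i.castSucc + suffixSum z i.succ := by
  have : Ico i.castSucc i.succ = {i.castSucc} := by
    ext k
    simp only [mem_Ico, mem_singleton, Fin.le_def, Fin.lt_def, Fin.ext_iff, Fin.val_castSucc,
      Fin.val_succ]
    omega
  rw [← sub_eq_iff_eq_add, ← sum_Ico_eq_suffixSum_sub z Fin.castSucc_lt_succ.le, this,
    sum_singleton]

theorem suffixSum_eq_snoc (z : Fin (n + 1) → R) :
    suffixSum z = Fin.snoc (fun i : Fin n => suffixSum z i.castSucc) 0 := by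
  ext i
  induction i using Fin.lastCases <;> simp

theorem injective_last_suffixSum :
    Injective fun z : Fin (n + 1) → R =>
      (z (Fin.last n), fun i : Fin n => suffixSum z i.castSucc) := by
  intro z z' h
  obtain ⟨hlast, hsuffix⟩ := Prod.mk.inj h
  have hS : suffixSum z = suffixSum z' := by rw [suffixSum_eq_snoc, suffixSum_eq_snoc z', hsuffix]
  ext k
  induction k using Fin.lastCases with
  | last => exact hlast
  | cast i =>
    have h := suffixSum_castSucc z' i
    rw [← hS, suffixSum_castSucc z i] at h
    exact add_right_cancel h

end SuffixSum

section TypeC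

variable {R : Type*} [CommRing R] [Fintype R] [DecidableEq R] {n : ℕ}

def NonvanishingC (z : Fin (n + 1) → R) : Prop :=
  (∀ i j : Fin (n + 1), i < j → ∑ k ∈ Ico i j, z k ≠ 0) ∧
  (∀ i : Fin (n + 1), 2 * ∑ k ∈ Ico i (Fin.last n), z k + z (Fin.last n) ≠ 0) ∧
  (∀ i j : Fin (n + 1), i < j →
    ∑ k ∈ Ico i j, z k + 2 * ∑ k ∈ Ico j (Fin.last n), z k + z (Fin.last n) ≠ 0)

theorem nonvanishingC_iff (z : Fin (n + 1) → R) :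
    NonvanishingC z ↔ OrbitSeparated (fun x => -z (Fin.last n) - x)
      {x | 2 * x + z (Fin.last n) = 0} (suffixSum z) := by
  set t := z (Fin.last n)
  have hdiff {i j : Fin (n + 1)} (hij : i < j) :
      ∑ k ∈ Ico i j, z k ≠ 0 ↔ suffixSum z i ≠ suffixSum z j := by
    rw [sum_Ico_eq_suffixSum_sub z hij.le, sub_ne_zero]
  have hsum {i j : Fin (n + 1)} (hij : i < j) :
      ∑ k ∈ Ico i j, z k + 2 * suffixSum z j + t ≠ 0 ↔ suffixSum z i ≠ -t - suffixSum z j := by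
    rw [sum_Ico_eq_suffixSum_sub z hij.le, not_iff_not]
    constructor <;> intro h <;> linear_combination h
  rw [orbitSeparated_iff_lt fun x => sub_sub_cancel (-t) x]
  simp only [mem_filter, mem_univ, true_and]
  exact ⟨fun ⟨h1, h2, h3⟩ =>
      ⟨h2, fun i j hij => ⟨(hdiff hij).1 (h1 i j hij), (hsum hij).1 (h3 i j hij)⟩⟩,
    fun ⟨h2, h13⟩ => ⟨fun i j hij => (hdiff hij).2 (h13 i j hij).1, h2,
      fun i j hij => (hsum hij).2 (h13 i j hij).2⟩⟩

theorem card_orbitSeparated_snoc_zero {t : R} (ht : t ≠ 0) :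
    Nat.card {w : Fin n → R //
        OrbitSeparated (fun x => -t - x) {x | 2 * x + t = 0} (Fin.snoc w 0 : Fin (n + 1) → R)} =
      ∏ j ∈ range n, (Fintype.card R - (#{x : R | 2 * x + t = 0} + 2) - 2 * j) := by
  have hσ : Involutive fun x : R => -t - x := fun x => sub_sub_cancel (-t) x
  have h0 : (0 : R) ∉ ({x | 2 * x + t = 0} : Finset R) := by simpa using ht
  have hF : ∀ x ∈ ({x | 2 * x + t = 0} : Finset R), -t - x ∈ ({x | 2 * x + t = 0} : Finset R) := by
    simp only [mem_filter, mem_univ, true_and]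
    exact fun x hx => by linear_combination -hx
  simp_rw [← Fin.insertNth_last', orbitSeparated_insertNth_iff hσ, and_iff_right h0]
  rw [card_orbitSeparated hσ (forall_mem_insert_insert_of_involutive hσ hF 0),
    card_insert_of_notMem, card_insert_of_notMem]
  · simp only [sub_zero, mem_filter, mem_univ, true_and]
    exact fun h => ht (by linear_combination -h)
  · simp [ht]
  · intro x hx
    simp only [mem_insert, mem_filter, mem_univ, true_and]
    exact .inr (.inr (by linear_combination -hx))

theorem card_nonvanishingC_eq_sum :
    Nat.card {z : Fin (n + 1) → R // NonvanishingC z} =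
      ∑ t ∈ univ.erase 0,
        ∏ j ∈ range n, (Fintype.card R - (#{x : R | 2 * x + t = 0} + 2) - 2 * j) := by
  have hbij : Bijective fun z : Fin (n + 1) → R =>
      (z (Fin.last n), fun i : Fin n => suffixSum z i.castSucc) :=
    (Fintype.bijective_iff_injective_and_card _).2 ⟨injective_last_suffixSum,
      by simp [Fintype.card_prod, pow_succ, mul_comm]⟩
  have e : {z : Fin (n + 1) → R // NonvanishingC z} ≃ Σ t : R, {w : Fin n → R //
      OrbitSeparated (fun x => -t - x) {x | 2 * x + t = 0} (Fin.snoc w 0 : Fin (n + 1) → R)} :=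
    ((Equiv.ofBijective _ hbij).subtypeEquiv fun z => by
      rw [nonvanishingC_iff, suffixSum_eq_snoc]; rfl).trans
    (Equiv.subtypeProdEquivSigmaSubtype fun t w =>
      OrbitSeparated (fun x => -t - x) {x | 2 * x + t = 0} (Fin.snoc w 0 : Fin (n + 1) → R))
  have h0 : Nat.card {w : Fin n → R // OrbitSeparated (fun x => -0 - x) {x | 2 * x + 0 = 0}
      (Fin.snoc w 0 : Fin (n + 1) → R)} = 0 :=
    Nat.card_eq_zero.2 (.inl ⟨fun w => w.2.1 (Fin.last n) (by simp)⟩)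
  rw [Nat.card_congr e, Nat.card_sigma, ← add_sum_erase _ _ (mem_univ 0), h0, zero_add]
  exact sum_congr rfl fun t ht => card_orbitSeparated_snoc_zero (ne_of_mem_erase ht)

theorem card_filter_two_mul_add_eq_zero {t x₀ : R} (hx₀ : 2 * x₀ + t = 0) :
    #{x : R | 2 * x + t = 0} = #{x : R | -x = x} := by
  have key (y : R) : -y = y ↔ 2 * y = 0 := by rw [neg_eq_iff_add_eq_zero, two_mul]
  refine card_nbij' (· - x₀) (· + x₀) ?_ ?_ (fun x _ => sub_add_cancel x x₀)
    (fun y _ => add_sub_cancel_right y x₀)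
  · intro x hx
    simp only [coe_filter, mem_univ, true_and, Set.mem_ofPred_eq, key] at hx ⊢
    linear_combination hx - hx₀
  · intro y hy
    simp only [coe_filter, mem_univ, true_and, Set.mem_ofPred_eq, key] at hy ⊢
    linear_combination hy + hx₀

theorem card_filter_exists_mul_card_filter_neg_eq_self :
    #{t : R | ∃ x, 2 * x + t = 0} * #{x : R | -x = x} = Fintype.card R := by
  rw [← card_univ, card_eq_sum_card_fiberwise (f := fun x : R => -(2 * x)) (s := univ)
    (t := {t : R | ∃ x, 2 * x + t = 0}) fun x _ => by simpa using ⟨x, by ring⟩,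
    ← smul_eq_mul, ← sum_const]
  refine sum_congr rfl fun t ht => ?_
  obtain ⟨x₀, hx₀⟩ := (mem_filter.1 ht).2
  rw [← card_filter_two_mul_add_eq_zero hx₀]
  congr 1
  ext x
  simp [neg_eq_iff_add_eq_zero]

theorem card_nonvanishingC :
    Nat.card {z : Fin (n + 1) → R // NonvanishingC z} =
      (#{t : R | ∃ x, 2 * x + t = 0} - 1) *
          ∏ j ∈ range n, (Fintype.card R - (#{x : R | -x = x} + 2) - 2 * j) +
        (Fintype.card R - #{t : R | ∃ x, 2 * x + t = 0}) *
          ∏ j ∈ range n, (Fintype.card R - 2 - 2 * j) := by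
  have h0 : (0 : R) ∈ ({t | ∃ x, 2 * x + t = 0} : Finset R) := by simpa using ⟨0, by ring⟩
  have h0' : (0 : R) ∉ ({t | ¬∃ x, 2 * x + t = 0} : Finset R) := by simpa using h0
  rw [card_nonvanishingC_eq_sum, ← sum_filter_add_sum_filter_not _ fun t : R => ∃ x, 2 * x + t = 0,
    filter_erase, filter_erase]
  congr 1
  · rw [sum_congr rfl fun t ht => ?_, sum_const, smul_eq_mul, card_erase_of_mem h0]
    obtain ⟨x₀, hx₀⟩ := (mem_filter.1 (mem_of_mem_erase ht)).2
    rw [card_filter_two_mul_add_eq_zero hx₀]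
  · rw [erase_eq_of_notMem h0', sum_congr rfl fun t ht => ?_, sum_const, smul_eq_mul,
      filter_not, card_sdiff_of_subset (filter_subset _ _), card_univ]
    rw [filter_eq_empty_iff.2 fun x _ hx => (mem_filter.1 ht).2 ⟨x, hx⟩, card_empty, zero_add]

end TypeC

theorem mul_prod_add_succ_mul_prod (a n : ℕ) :
    a * ∏ j ∈ range n, (2 * a - 2 - 2 * j) + (a + 1) * ∏ j ∈ range n, (2 * a - 2 * j) =
      ∏ j ∈ range (n + 1), (2 * a - 2 * j) + (n + 1) * ∏ j ∈ range n, (2 * a - 2 * j) := by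
  have hRP := (prod_range_succ_sub_two_mul (2 * a) n).symm.trans (prod_range_succ _ n)
  rw [prod_range_succ_sub_two_mul]
  set P := ∏ j ∈ range n, (2 * a - 2 * j)
  set R := ∏ j ∈ range n, (2 * a - 2 - 2 * j)
  rcases le_or_gt n a with hn | hn
  · obtain ⟨b, rfl⟩ := Nat.exists_eq_add_of_le hn
    rw [show 2 * (n + b) - 2 * n = 2 * b by omega] at hRP
    linarith
  · have hP : P = 0 := prod_eq_zero (mem_range.2 hn) (by omega)
    rw [hP, zero_mul] at hRP
    rw [hP]
    linarith

section ZMod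

variable {q : ℕ}

theorem ZMod.neg_eq_self_iff_of_odd_s12 (hq : Odd q) {x : ZMod q} : -x = x ↔ x = 0 := by
  obtain ⟨k, rfl⟩ := hq
  rw [ZMod.neg_eq_self_iff, or_iff_left (by omega)]

theorem ZMod.val_natCast_of_eq_two_mul [NeZero q] {k : ℕ} (hq : q = 2 * k) :
    (k : ZMod q).val = k := by
  rw [ZMod.val_natCast, Nat.mod_eq_of_lt]
  have := NeZero.pos q
  omega

theorem ZMod.neg_eq_self_iff_of_eq_two_mul [NeZero q] {k : ℕ} (hq : q = 2 * k) {x : ZMod q} :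
    -x = x ↔ x = 0 ∨ x = k := by
  have : 2 * x.val = q ↔ x.val = k := by omega
  rw [ZMod.neg_eq_self_iff, this, ← (ZMod.val_injective q).eq_iff (b := (k : ZMod q)),
    ZMod.val_natCast_of_eq_two_mul hq]

theorem ZMod.natCast_ne_zero_of_eq_two_mul [NeZero q] {k : ℕ} (hq : q = 2 * k) :
    (k : ZMod q) ≠ 0 := by
  intro h
  have := ZMod.val_natCast_of_eq_two_mul hq
  rw [h, ZMod.val_zero] at this
  exact NeZero.ne q (by omega)

theorem card_nonvanishingC_zmod_of_odd [NeZero q] (hq : Odd q) (n : ℕ) :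
    Nat.card {z : Fin (n + 1) → ZMod q // NonvanishingC z} =
      ∏ j ∈ range (n + 1), (q - 1 - 2 * j) := by
  have hK : #{x : ZMod q | -x = x} = 1 :=
    card_eq_one.2 ⟨0, by ext; simp [ZMod.neg_eq_self_iff_of_odd_s12 hq]⟩
  have hD : #{t : ZMod q | ∃ x, 2 * x + t = 0} = q := by
    simpa [hK] using card_filter_exists_mul_card_filter_neg_eq_self (R := ZMod q)
  rw [card_nonvanishingC, hK, hD, ZMod.card, Nat.sub_self, zero_mul, add_zero,
    prod_range_succ_sub_two_mul, Nat.sub_sub]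

theorem card_nonvanishingC_zmod_of_eq_two_mul [NeZero q] {a : ℕ} (hq : q = 2 * (a + 1))
    (n : ℕ) :
    Nat.card {z : Fin (n + 1) → ZMod q // NonvanishingC z} =
      ∏ j ∈ range (n + 1), (q - 2 - 2 * j) + (n + 1) * ∏ j ∈ range n, (q - 2 - 2 * j) := by
  have hK : #{x : ZMod q | -x = x} = 2 := by
    rw [← card_pair (ZMod.natCast_ne_zero_of_eq_two_mul hq).symm]
    congr 1
    ext
    simp [ZMod.neg_eq_self_iff_of_eq_two_mul hq]
  have hD : #{t : ZMod q | ∃ x, 2 * x + t = 0} = a + 1 := by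
    have := card_filter_exists_mul_card_filter_neg_eq_self (R := ZMod q)
    rw [hK, ZMod.card] at this
    omega
  rw [card_nonvanishingC, hK, hD, ZMod.card, show q - 2 = 2 * a by omega,
    show q - (2 + 2) = 2 * a - 2 by omega, show q - (a + 1) = a + 1 by omega, Nat.add_sub_cancel,
    mul_prod_add_succ_mul_prod]

end ZMod

/-- The characteristic quasi-polynomials of the root systems `B_m` and `C_m` coincide:
for every positive integer `q`, the number of `z ∈ (ℤ/qℤ)^m` with `z i ≠ 0` for all `i`
and `z i ≠ z j`, `z i + z j ≠ 0` for all `i < j` (the count for `B_m`) equals the number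
of `z ∈ (ℤ/qℤ)^m` satisfying the nonvanishing conditions of the coefficient matrix of
the positive roots of `C_m` with respect to its simple roots (here indices are
`0`-based, so `z ⟨m−1⟩` plays the role of `z_m`). -/
theorem stmt_12 (m : ℕ) (hm : 2 ≤ m) (q : ℕ) (hq : 0 < q) :
    Nat.card {z : Fin m → ZMod q //
        (∀ i, z i ≠ 0) ∧ ∀ i j : Fin m, i < j → z i ≠ z j ∧ z i + z j ≠ 0} =
      Nat.card {z : Fin m → ZMod q //
        (∀ i j : Fin m, i < j → ∑ k ∈ Finset.Ico i j, z k ≠ 0) ∧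
        (∀ i : Fin m,
          2 * ∑ k ∈ Finset.Ico i ⟨m - 1, by omega⟩, z k + z ⟨m - 1, by omega⟩ ≠ 0) ∧
        (∀ i j : Fin m, i < j →
          ∑ k ∈ Finset.Ico i j, z k +
            2 * ∑ k ∈ Finset.Ico j ⟨m - 1, by omega⟩, z k + z ⟨m - 1, by omega⟩ ≠ 0)} := by
  have : NeZero q := ⟨hq.ne'⟩
  obtain ⟨n, rfl⟩ : ∃ n, m = n + 1 := ⟨m - 1, by omega⟩
  change Nat.card {z // NonvanishingB z} = Nat.card {z // NonvanishingC z}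
  rcases Nat.even_or_odd' q with ⟨k, hk | hk⟩
  · obtain ⟨a, rfl⟩ : ∃ a, k = a + 1 := ⟨k - 1, by omega⟩
    rw [card_nonvanishingB_of_neg_eq_self_iff (ZMod.natCast_ne_zero_of_eq_two_mul hk)
      (fun x => ZMod.neg_eq_self_iff_of_eq_two_mul hk), ZMod.card,
      card_nonvanishingC_zmod_of_eq_two_mul hk]
  · rw [card_nonvanishingB fun x => (ZMod.neg_eq_self_iff_of_odd_s12 ⟨k, hk⟩).1, ZMod.card,
      card_nonvanishingC_zmod_of_odd ⟨k, hk⟩]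
end

section
/- Let m ≥ 4. For every positive integer q, χ_{B_m}(2q) = χ_{D_m}(2q − 1); that is, the even constituent of the characteristic quasi-polynomial of B_m is obtained from the odd constituent of that of D_m by the shift q ↦ q − 1. -/
/-!
The map `a ↦ (a.val - 1) + q` identifies the nonzero residues mod `2q` with the residues mod
`2q - 1` and commutes with negation, since `(a.val - 1) + ((-a).val - 1) + 2q = 2(2q - 1)`.
Hence `χ_{B_m}(2q)` counts the `x ∈ (ℤ/(2q-1))^m` with `x_i ≠ ±x_j` for `i < j`.

Since `2` is invertible mod `2q - 1`, a point `z` given in simple-root coordinates of `D_m` can be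
rewritten in the orthonormal coordinates `x_i` (the value on `e_i` of the functional taking `α_k`
to `z_k`). The roots `e_i ± e_j` then evaluate to `x_i ± x_j`, so `χ_{D_m}(2q - 1)` counts the
same set.
-/

open Finset Function

theorem Fin.Ico_eq_singleton {m : ℕ} {i j : Fin m} (h : (i : ℕ) + 1 = j) : Ico i j = {i} := by
  ext k
  simp only [mem_Ico, mem_singleton, Fin.lt_def, Fin.le_def, Fin.ext_iff]
  omega

def AvoidsDArrangement {ι R : Type*} [LT ι] [Add R] [Zero R] (x : ι → R) : Prop :=
  ∀ i j, i < j → x i ≠ x j ∧ x i + x j ≠ 0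

section TypeB

variable {ι A B : Type*} [LT ι] [AddGroup A] [AddGroup B]

theorem card_nonzero_avoidsDArrangement (e : {a : A // a ≠ 0} ≃ B)
    (he : ∀ a (ha : a ≠ 0), e ⟨-a, neg_ne_zero.2 ha⟩ = -e ⟨a, ha⟩) :
    Nat.card {z : ι → A // (∀ i, z i ≠ 0) ∧ AvoidsDArrangement z} =
      Nat.card {x : ι → B // AvoidsDArrangement x} := by
  have hne (a b : {a : A // a ≠ 0}) : a.1 ≠ b.1 ↔ e a ≠ e b :=
    Subtype.coe_ne_coe.trans e.injective.ne_iff.symm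
  have hsum (a b : {a : A // a ≠ 0}) : a.1 + b.1 = 0 ↔ e a + e b = 0 := by
    rw [add_eq_zero_iff_eq_neg, add_eq_zero_iff_eq_neg, ← he _ b.2, e.apply_eq_iff_eq,
      Subtype.ext_iff]
  refine Nat.card_congr <| (Equiv.subtypeSubtypeEquivSubtypeInter _ _).symm.trans <|
    (Equiv.subtypePiEquivPi.trans (Equiv.arrowCongr (Equiv.refl ι) e)).subtypeEquiv fun w =>
      forall₃_congr fun i j _ =>
        and_congr (hne ⟨_, w.2 i⟩ ⟨_, w.2 j⟩) (hsum ⟨_, w.2 i⟩ ⟨_, w.2 j⟩).not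

end TypeB

section ZModNonzero

variable (q : ℕ) [NeZero q]

instance : NeZero (2 * q - 1) := ⟨by have := NeZero.pos q; omega⟩

def nonzeroToZModPred (a : {a : ZMod (2 * q) // a ≠ 0}) : ZMod (2 * q - 1) :=
  ((a.1.val - 1 : ℕ) : ZMod (2 * q - 1)) + q

theorem nonzeroToZModPred_injective : Injective (nonzeroToZModPred q) := by
  intro a b h
  have ha := (ZMod.val_ne_zero _).2 a.2
  have hb := (ZMod.val_ne_zero _).2 b.2
  have hlt (c : ZMod (2 * q)) : c.val - 1 < 2 * q - 1 := by have := c.val_lt; omega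
  replace h := congrArg ZMod.val (add_right_cancel h)
  rw [ZMod.val_natCast_of_lt (hlt a), ZMod.val_natCast_of_lt (hlt b)] at h
  exact Subtype.ext (ZMod.val_injective _ (by omega))

theorem nonzeroToZModPred_neg (a : ZMod (2 * q)) (ha : a ≠ 0) :
    nonzeroToZModPred q ⟨-a, neg_ne_zero.2 ha⟩ = -nonzeroToZModPred q ⟨a, ha⟩ := by
  have ha' := (ZMod.val_ne_zero a).2 ha
  have := a.val_lt
  rw [eq_neg_iff_add_eq_zero, nonzeroToZModPred, nonzeroToZModPred, ZMod.neg_val, if_neg ha]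
  have : (2 * q - a.val - 1) + q + ((a.val - 1) + q) = 2 * (2 * q - 1) := by omega
  exact_mod_cast (congrArg (Nat.cast (R := ZMod (2 * q - 1))) this).trans (by simp)

theorem nonzeroToZModPred_bijective : Bijective (nonzeroToZModPred q) := by
  refine (Nat.bijective_iff_injective_and_card _).2 ⟨nonzeroToZModPred_injective q, ?_⟩
  simp [Nat.card_eq_fintype_card, Fintype.card_subtype_compl, ZMod.card]

noncomputable def nonzeroEquivZModPred : {a : ZMod (2 * q) // a ≠ 0} ≃ ZMod (2 * q - 1) :=
  Equiv.ofBijective _ (nonzeroToZModPred_bijective q)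

theorem two_mul_natCast_eq_one : (2 : ZMod (2 * q - 1)) * q = 1 := by
  have : 2 * q = (2 * q - 1) + 1 := by have := NeZero.pos q; omega
  exact_mod_cast (congrArg (Nat.cast (R := ZMod (2 * q - 1))) this).trans (by simp)

end ZModNonzero

section TypeD

variable {R : Type*} [CommRing R] [Invertible (2 : R)] {m : ℕ}

/-- The coordinate `x_i` of the functional taking `α_k = e_k - e_{k+1}` (`k < b`) to `z k` and
`α_b = e_a + e_b` to `z b`, where `a`, `b` are the last two indices. -/
def dCoords (a b : Fin m) (z : Fin m → R) (i : Fin m) : R :=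
  ⅟2 * (z b - z a) + ∑ k ∈ Ico i b, z k

variable {a b : Fin m}

theorem sum_Ico_eq_dCoords_sub (z : Fin m → R) {i j : Fin m} (hij : i ≤ j) (hjb : j ≤ b) :
    ∑ k ∈ Ico i j, z k = dCoords a b z i - dCoords a b z j := by
  rw [dCoords, dCoords, ← Ico_union_Ico_eq_Ico hij hjb,
    sum_union (Ico_disjoint_Ico_consecutive i j b)]
  ring

theorem dCoords_sub_dCoords_succ (z : Fin m → R) {i j : Fin m} (h : (i : ℕ) + 1 = j)
    (hjb : j ≤ b) : dCoords a b z i - dCoords a b z j = z i := by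
  rw [← sum_Ico_eq_dCoords_sub z (Fin.le_def.2 (by omega)) hjb, Fin.Ico_eq_singleton h,
    sum_singleton]

theorem dCoords_add_dCoords (z : Fin m → R) (hab : (a : ℕ) + 1 = b) :
    dCoords a b z a + dCoords a b z b = z b := by
  have hb : dCoords a b z b = ⅟2 * (z b - z a) := by simp [dCoords]
  have ha : dCoords a b z a - dCoords a b z b = z a := dCoords_sub_dCoords_succ z hab le_rfl
  linear_combination ha + 2 * hb + (z b - z a) * mul_invOf_self (2 : R)

theorem dCoords_injective (hab : (a : ℕ) + 1 = b) (hb : (b : ℕ) + 1 = m) :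
    Injective (dCoords a b : (Fin m → R) → Fin m → R) := by
  intro z w h
  funext i
  obtain hib | rfl := (Fin.le_def.2 (by omega : (i : ℕ) ≤ b)).lt_or_eq
  · have hsucc : (i : ℕ) + 1 = (⟨i + 1, by omega⟩ : Fin m) := rfl
    rw [← dCoords_sub_dCoords_succ z hsucc (Fin.le_def.2 (by simpa using hib)),
      ← dCoords_sub_dCoords_succ w hsucc (Fin.le_def.2 (by simpa using hib)), h]
  · rw [← dCoords_add_dCoords z hab, ← dCoords_add_dCoords w hab, h]

theorem dConditions_iff_avoidsDArrangement (hab : (a : ℕ) + 1 = b) (hb : (b : ℕ) + 1 = m)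
    (z : Fin m → R) :
    ((∀ i j : Fin m, i < j → ∑ k ∈ Ico i j, z k ≠ 0) ∧
      (∀ i : Fin m, i < b → ∑ k ∈ Ico i a, z k + z b ≠ 0) ∧
      (∀ i j : Fin m, i < j → j < b →
        ∑ k ∈ Ico i j, z k + 2 * ∑ k ∈ Ico j a, z k + z a + z b ≠ 0)) ↔
      AvoidsDArrangement (dCoords a b z) := by
  set x := dCoords a b z
  have hle (i : Fin m) : i ≤ b := Fin.le_def.2 (by omega)
  have hlt (i : Fin m) : i < b ↔ i ≤ a := by rw [Fin.lt_def, Fin.le_def]; omega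
  have hsub (i j : Fin m) (hij : i ≤ j) : ∑ k ∈ Ico i j, z k = x i - x j :=
    sum_Ico_eq_dCoords_sub z hij (hle j)
  have hxa_sub : x a - x b = z a := dCoords_sub_dCoords_succ z hab le_rfl
  have hxa_add : x a + x b = z b := dCoords_add_dCoords z hab
  have hlast (i : Fin m) (hi : i ≤ a) : ∑ k ∈ Ico i a, z k + z b = x i + x b := by
    linear_combination hsub i a hi - hxa_add
  have hother (i j : Fin m) (hij : i ≤ j) (hj : j ≤ a) :
      ∑ k ∈ Ico i j, z k + 2 * ∑ k ∈ Ico j a, z k + z a + z b = x i + x j := by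
    linear_combination hsub i j hij + 2 * hsub j a hj - hxa_sub - hxa_add
  simp only [AvoidsDArrangement, imp_and, forall_and]
  refine and_congr (forall₃_congr fun i j hij => by rw [hsub i j hij.le, sub_ne_zero]) ⟨?_, ?_⟩
  · rintro ⟨hlast_ne, hother_ne⟩ i j hij
    obtain hjb | rfl := (hle j).lt_or_eq
    · rw [← hother i j hij.le ((hlt j).1 hjb)]
      exact hother_ne i j hij hjb
    · rw [← hlast i ((hlt i).1 hij)]
      exact hlast_ne i hij
  · intro h
    refine ⟨fun i hi => ?_, fun i j hij hj => ?_⟩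
    · rw [hlast i ((hlt i).1 hi)]
      exact h i b hi
    · rw [hother i j hij.le ((hlt j).1 hj)]
      exact h i j hij

theorem card_dConditions [Finite R] (hab : (a : ℕ) + 1 = b) (hb : (b : ℕ) + 1 = m) :
    Nat.card {z : Fin m → R //
        (∀ i j : Fin m, i < j → ∑ k ∈ Ico i j, z k ≠ 0) ∧
        (∀ i : Fin m, i < b → ∑ k ∈ Ico i a, z k + z b ≠ 0) ∧
        (∀ i j : Fin m, i < j → j < b →
          ∑ k ∈ Ico i j, z k + 2 * ∑ k ∈ Ico j a, z k + z a + z b ≠ 0)} =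
      Nat.card {x : Fin m → R // AvoidsDArrangement x} :=
  Nat.card_congr <|
    (Equiv.ofBijective _ (dCoords_injective hab hb).bijective_of_finite).subtypeEquiv
      (dConditions_iff_avoidsDArrangement hab hb)

end TypeD

/-- For `m ≥ 4` and every positive integer `q`, `χ_{B_m}(2q) = χ_{D_m}(2q − 1)`: the
even constituent of the characteristic quasi-polynomial of `B_m` is obtained from the
odd constituent of that of `D_m` by the shift `q ↦ q − 1` (indices on the `D_m` side
are `0`-based, so `z ⟨m−2⟩`, `z ⟨m−1⟩` play the roles of `z_{m−1}`, `z_m`). -/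
theorem stmt_14 (m : ℕ) (hm : 4 ≤ m) (q : ℕ) (hq : 0 < q) :
    Nat.card {z : Fin m → ZMod (2 * q) //
        (∀ i, z i ≠ 0) ∧ ∀ i j : Fin m, i < j → z i ≠ z j ∧ z i + z j ≠ 0} =
      Nat.card {z : Fin m → ZMod (2 * q - 1) //
        (∀ i j : Fin m, i < j → ∑ k ∈ Finset.Ico i j, z k ≠ 0) ∧
        (∀ i : Fin m, (i : ℕ) < m - 1 →
          ∑ k ∈ Finset.Ico i ⟨m - 2, by omega⟩, z k + z ⟨m - 1, by omega⟩ ≠ 0) ∧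
        (∀ i j : Fin m, i < j → (j : ℕ) < m - 1 →
          ∑ k ∈ Finset.Ico i j, z k + 2 * ∑ k ∈ Finset.Ico j ⟨m - 2, by omega⟩, z k +
            z ⟨m - 2, by omega⟩ + z ⟨m - 1, by omega⟩ ≠ 0)} := by
  have : NeZero q := ⟨hq.ne'⟩
  let : Invertible (2 : ZMod (2 * q - 1)) :=
    invertibleOfRightInverse _ _ (two_mul_natCast_eq_one q)
  exact (card_nonzero_avoidsDArrangement (nonzeroEquivZModPred q) (nonzeroToZModPred_neg q)).trans
    (card_dConditions (a := ⟨m - 2, by omega⟩) (b := ⟨m - 1, by omega⟩) (by simp; omega)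
      (by simp; omega)).symm
end

section
/- Let m ≥ 2. As formal power series in t, Σ_{q=1}^{∞} χ_{B_m}(q) t^q = 2^{m−1} · m! · t^{2m} / ((1 − t)² (1 − t²)^{m−1}). -/
/-!
Build a point one coordinate at a time. Given `w : Fin n → G` with nonzero coordinates and
`w i ≠ ± w j`, a new coordinate `a` is admissible iff `a ∉ {0} ∪ {± w i}`, a set of `2n + 1`
elements minus the number of coordinates equal to their own negative. In `ZMod q` the only nonzero
element equal to its negative is `q/2` (for even `q`), so the count `A n` satisfies
`A (n+1) = (q - 2n) A n - B n`, where `B n = 2^n (⌊(q-1)/2⌋)_n` (a falling factorial) counts the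
points with no coordinate equal to its own negative. Solving gives
`χ(q) = 2^{m-1} m! (C(⌊q/2⌋, m) + C(⌊(q-1)/2⌋, m))`, whose generating function is
`2^{m-1} m! (1 + t)^2 Σ_k C(k, m) t^{2k} = 2^{m-1} m! (1 + t)^2 t^{2m} / (1 - t^2)^{m+1}`.
-/

section SignedInjOff

open Finset

theorem card_filter_fin_succ {α : Type*} [Fintype α] {n : ℕ} (P : (Fin (n + 1) → α) → Prop)
    [DecidablePred P] :
    #{z | P z} = ∑ w : Fin n → α, #{a | P (Fin.cons a w)} := by
  simp only [← Fintype.card_subtype]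
  rw [← Fintype.card_sigma]
  exact Fintype.card_congr
    { toFun := fun z => ⟨Fin.tail z.1, z.1 0, by simpa using z.2⟩
      invFun := fun p => ⟨Fin.cons p.2.1 p.1, p.2.2⟩
      left_inv := fun z => by simp
      right_inv := fun _ => rfl }

variable {G : Type*} [AddCommGroup G] {n : ℕ} {X : Finset G}

/-- With `X = {0}` these are the points counted by `χ_{B_n}`; with `X = twoTorsion G` they are
the points with no coordinate equal to its own negative. -/
def SignedInjOff (X : Finset G) (z : Fin n → G) : Prop :=
  (∀ i, z i ∉ X) ∧ ∀ i j, i < j → z i ≠ z j ∧ z i + z j ≠ 0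

theorem SignedInjOff.injective {w : Fin n → G} (h : SignedInjOff X w) : Function.Injective w := by
  intro i j hij
  by_contra hne
  rcases lt_or_gt_of_ne hne with hlt | hlt
  · exact (h.2 i j hlt).1 hij
  · exact (h.2 j i hlt).1 hij.symm

theorem SignedInjOff.mono {Y : Finset G} {w : Fin n → G} (h : SignedInjOff Y w) (hXY : X ⊆ Y) :
    SignedInjOff X w :=
  ⟨fun i hi => h.1 i (hXY hi), h.2⟩

variable [DecidableEq G]

instance (X : Finset G) : DecidablePred (SignedInjOff (n := n) X) := fun _ => by
  unfold SignedInjOff; infer_instance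

open Pointwise

theorem signedInjOff_cons_iff {w : Fin n → G} {a : G} :
    SignedInjOff X (Fin.cons a w) ↔
      SignedInjOff X w ∧ a ∉ X ∪ (univ.image w ∪ -univ.image w) := by
  simp only [SignedInjOff, Fin.forall_fin_succ, Fin.cons_zero, Fin.cons_succ,
    Fin.succ_lt_succ_iff, Fin.not_lt_zero, Fin.succ_pos, mem_union, mem_neg', mem_image, mem_univ,
    true_and, false_imp_iff, true_imp_iff, not_or, not_exists, eq_neg_iff_add_eq_zero,
    add_comm (w _) a, ne_comm (a := a), forall_and]
  tauto

theorem SignedInjOff.card_union_add_card_inter (hX : -X = X) {w : Fin n → G}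
    (h : SignedInjOff X w) :
    #(X ∪ (univ.image w ∪ -univ.image w)) + #(univ.image w ∩ -univ.image w) = #X + 2 * n := by
  have hdisj : Disjoint X (univ.image w ∪ -univ.image w) := by
    rw [disjoint_union_right]
    constructor
    · exact disjoint_left.2 fun a haX ha => by
        obtain ⟨i, -, rfl⟩ := mem_image.1 ha
        exact h.1 i haX
    · exact disjoint_left.2 fun a haX ha => by
        obtain ⟨i, -, hi⟩ := mem_image.1 (mem_neg'.1 ha)
        exact h.1 i (by rw [hi, ← mem_neg', hX]; exact haX)
  rw [card_union_of_disjoint hdisj, add_assoc, Finset.card_union_add_card_inter, card_neg,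
    card_image_of_injective _ h.injective, card_univ, Fintype.card_fin, two_mul]

variable [Fintype G]

variable (G) in
def twoTorsion : Finset G := {x | -x = x}

theorem neg_twoTorsion : -twoTorsion G = twoTorsion G := by
  ext x
  simp [twoTorsion, eq_comm]

theorem SignedInjOff.image_inter_neg_image_subset {w : Fin n → G} (h : SignedInjOff X w) :
    univ.image w ∩ -univ.image w ⊆ twoTorsion G \ X := by
  intro x hx
  simp only [mem_inter, mem_neg', mem_image, mem_univ, true_and] at hx
  obtain ⟨⟨i, rfl⟩, j, hj⟩ := hx
  have hij : i = j := by
    by_contra hne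
    rcases lt_or_gt_of_ne hne with hlt | hlt
    · exact (h.2 i j hlt).2 (by rw [hj, add_neg_cancel])
    · exact (h.2 j i hlt).2 (by rw [hj, neg_add_cancel])
  subst hij
  exact mem_sdiff.2 ⟨by simpa [twoTorsion] using hj.symm, h.1 i⟩

theorem card_signedInjOff_succ (hX : -X = X) (n : ℕ) :
    (#{z : Fin (n + 1) → G | SignedInjOff X z} : ℤ) =
      ∑ w : Fin n → G with SignedInjOff X w,
        ((Fintype.card G : ℤ) - #X - 2 * n + #(univ.image w ∩ -univ.image w)) := by
  rw [card_filter_fin_succ, Nat.cast_sum, sum_filter]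
  refine sum_congr rfl fun w _ => ?_
  simp only [signedInjOff_cons_iff]
  split_ifs with hw
  · have hcard := hw.card_union_add_card_inter hX
    have hle := card_le_univ (X ∪ (univ.image w ∪ -univ.image w))
    rw [filter_and, filter_true_of_mem fun _ _ => hw, univ_inter, filter_notMem_eq_sdiff,
      card_univ_sdiff]
    omega
  · simp [hw]

theorem card_signedInjOff_twoTorsion_succ (n : ℕ) :
    (#{z : Fin (n + 1) → G | SignedInjOff (twoTorsion G) z} : ℤ) =
      (Fintype.card G - #(twoTorsion G) - 2 * n) *
        #{z : Fin n → G | SignedInjOff (twoTorsion G) z} := by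
  have hempty : ∀ w ∈ ({w | SignedInjOff (twoTorsion G) w} : Finset (Fin n → G)),
      univ.image w ∩ -univ.image w = ∅ := fun w hw =>
    subset_empty.1 (by simpa using (mem_filter.1 hw).2.image_inter_neg_image_subset)
  rw [card_signedInjOff_succ neg_twoTorsion, sum_congr rfl fun w hw => by rw [hempty w hw],
    sum_const, nsmul_eq_mul, card_empty, Nat.cast_zero, add_zero, mul_comm]

theorem SignedInjOff.card_inter_add_ite_eq_one (hT : #(twoTorsion G) ≤ 2) {w : Fin n → G}
    (h : SignedInjOff {0} w) :
    #(univ.image w ∩ -univ.image w) + (if SignedInjOff (twoTorsion G) w then 1 else 0) = 1 := by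
  split_ifs with hw
  · simpa using hw.image_inter_neg_image_subset
  · have hle : #(univ.image w ∩ -univ.image w) ≤ 1 := by
      have := card_le_card h.image_inter_neg_image_subset
      rw [card_sdiff_of_subset (by simp [twoTorsion]), card_singleton] at this
      omega
    obtain ⟨i, hi⟩ : ∃ i, w i ∈ twoTorsion G := by
      by_contra! hT
      exact hw ⟨hT, h.2⟩
    have hmem : w i ∈ univ.image w ∩ -univ.image w := by
      simp only [twoTorsion, mem_filter, mem_univ, true_and] at hi
      simp [mem_neg', hi]
    have := card_pos.2 ⟨_, hmem⟩
    omega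

theorem card_signedInjOff_zero_succ (hT : #(twoTorsion G) ≤ 2) (n : ℕ) :
    (#{z : Fin (n + 1) → G | SignedInjOff {0} z} : ℤ) =
      (Fintype.card G - 2 * n) * #{z : Fin n → G | SignedInjOff {0} z} -
        #{z : Fin n → G | SignedInjOff (twoTorsion G) z} := by
  have h0 : ({0} : Finset G) ⊆ twoTorsion G := by simp [twoTorsion]
  have hB : #{z : Fin n → G | SignedInjOff (twoTorsion G) z} =
      ∑ w : Fin n → G with SignedInjOff {0} w,
        if SignedInjOff (twoTorsion G) w then 1 else 0 := by
    rw [← card_filter, filter_filter]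
    congr 1
    ext w
    simp only [mem_filter, mem_univ, true_and]
    exact ⟨fun h => ⟨h.mono h0, h⟩, And.right⟩
  rw [card_signedInjOff_succ (by simp), hB, sum_filter, sum_filter, Nat.cast_sum, card_filter,
    Nat.cast_sum, mul_sum, ← sum_sub_distrib]
  refine sum_congr rfl fun w _ => ?_
  by_cases hA : SignedInjOff {0} w
  · have := hA.card_inter_add_ite_eq_one hT
    simp only [if_pos hA, card_singleton]
    split_ifs at this ⊢ <;> push_cast <;> omega
  · simp [hA]

end SignedInjOff

section ZMod

open Finset Polynomial

theorem card_twoTorsion_zmod_add_two_mul (q : ℕ) [NeZero q] :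
    #(twoTorsion (ZMod q)) + 2 * ((q - 1) / 2) = q := by
  obtain ⟨k, rfl | rfl⟩ := Nat.even_or_odd' q
  · have hk : k ≠ 0 := by rintro rfl; exact NeZero.ne (2 * 0) rfl
    have hval : ((k : ℕ) : ZMod (2 * k)).val = k := ZMod.val_cast_of_lt (by omega)
    have : twoTorsion (ZMod (2 * k)) = {0, (k : ZMod (2 * k))} := by
      ext a
      simp only [twoTorsion, mem_filter, mem_univ, true_and, ZMod.neg_eq_self_iff, mem_insert,
        mem_singleton]
      exact or_congr_right ⟨fun h => ZMod.val_injective _ (by omega), fun h => by rw [h, hval]⟩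
    rw [this, card_pair fun h => hk (by rw [← hval, ← h, ZMod.val_zero])]
    omega
  · have : twoTorsion (ZMod (2 * k + 1)) = {0} := by
      ext a
      simp only [twoTorsion, mem_filter, mem_univ, true_and, ZMod.neg_eq_self_iff,
        mem_singleton]
      exact or_iff_left (by omega)
    rw [this, card_singleton]
    omega

theorem card_signedInjOff_twoTorsion_zmod (q : ℕ) [NeZero q] (n : ℕ) :
    (#{z : Fin n → ZMod q | SignedInjOff (twoTorsion (ZMod q)) z} : ℤ) =
      2 ^ n * (descPochhammer ℤ n).eval (((q - 1) / 2 : ℕ) : ℤ) := by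
  induction n with
  | zero => simp [SignedInjOff]
  | succ n ih =>
    have hq : ((#(twoTorsion (ZMod q)) : ℕ) : ℤ) + 2 * ((q - 1) / 2 : ℕ) = q := by
      exact_mod_cast card_twoTorsion_zmod_add_two_mul q
    rw [card_signedInjOff_twoTorsion_succ, ih, ZMod.card, descPochhammer_succ_eval, pow_succ]
    linear_combination (-2 ^ n * (descPochhammer ℤ n).eval (((q - 1) / 2 : ℕ) : ℤ)) * hq

theorem two_mul_card_signedInjOff_zero_zmod (q : ℕ) [NeZero q] (n : ℕ) :
    2 * (#{z : Fin n → ZMod q | SignedInjOff {0} z} : ℤ) =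
      2 ^ n * ((descPochhammer ℤ n).eval ((q / 2 : ℕ) : ℤ) +
        (descPochhammer ℤ n).eval (((q - 1) / 2 : ℕ) : ℤ)) := by
  have hT : #(twoTorsion (ZMod q)) ≤ 2 := by
    have := card_twoTorsion_zmod_add_two_mul q
    omega
  have hq0 := NeZero.ne q
  induction n with
  | zero => simp [SignedInjOff]
  | succ n ih =>
    rw [card_signedInjOff_zero_succ hT, card_signedInjOff_twoTorsion_zmod, ZMod.card,
      descPochhammer_succ_eval, descPochhammer_succ_eval, pow_succ]
    generalize hb : (q - 1) / 2 = b at ih ⊢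
    obtain ⟨h, hq⟩ | ⟨h, hq⟩ :
        q / 2 = b ∧ (q : ℤ) = 2 * b + 1 ∨ q / 2 = b + 1 ∧ (q : ℤ) = 2 * b + 2 := by
      omega
    · rw [h] at ih ⊢
      linear_combination (q - 2 * n : ℤ) * ih +
        2 ^ (n + 1) * (descPochhammer ℤ n).eval (b : ℤ) * hq
    · rw [h] at ih ⊢
      push_cast at ih ⊢
      linear_combination (q - 2 * n : ℤ) * ih +
        2 ^ n * ((descPochhammer ℤ n).eval (b + 1 : ℤ) + (descPochhammer ℤ n).eval (b : ℤ)) *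
          hq

theorem card_signedInjOff_zero_zmod (q : ℕ) [NeZero q] {m : ℕ} (hm : m ≠ 0) :
    (#{z : Fin m → ZMod q | SignedInjOff {0} z} : ℤ) =
      2 ^ (m - 1) * m.factorial * ((q / 2).choose m + ((q - 1) / 2).choose m) := by
  obtain ⟨k, rfl⟩ : ∃ k, m = k + 1 := ⟨m - 1, by omega⟩
  have h := two_mul_card_signedInjOff_zero_zmod q (k + 1)
  rw [descPochhammer_eval_eq_descFactorial, descPochhammer_eval_eq_descFactorial,
    Nat.descFactorial_eq_factorial_mul_choose, Nat.descFactorial_eq_factorial_mul_choose,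
    pow_succ] at h
  push_cast at h
  rw [Nat.add_sub_cancel]
  linarith

end ZMod

section PowerSeries

open PowerSeries

variable {R : Type*} [CommRing R]

theorem mk_choose_mul_one_sub_pow (m : ℕ) :
    (mk fun k => (k.choose m : R)) * (1 - X) ^ (m + 1) = X ^ m := by
  have hshift : (mk fun k => (k.choose m : R)) = X ^ m * mk fun k => ((m + k).choose m : R) := by
    ext k
    rw [coeff_mk, coeff_X_pow_mul']
    split_ifs with h
    · rw [coeff_mk, Nat.add_sub_cancel' h]
    · rw [Nat.choose_eq_zero_of_lt (not_le.1 h), Nat.cast_zero]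
  rw [hshift, mul_assoc, mk_add_choose_mul_one_sub_pow_eq_one, mul_one]

theorem expand_mk_choose_mul_one_sub_sq_pow (m : ℕ) :
    expand 2 two_ne_zero (mk fun k => (k.choose m : R)) * (1 - X ^ 2) ^ (m + 1) =
      X ^ (2 * m) := by
  rw [← expand_X 2 two_ne_zero, ← map_one (expand 2 two_ne_zero), ← map_sub, ← map_pow,
    ← map_mul, mk_choose_mul_one_sub_pow, map_pow, expand_X, pow_mul]

theorem one_add_X_mul_expand_mk_choose (m : ℕ) :
    (1 + X) * expand 2 two_ne_zero (mk fun k => (k.choose m : R)) =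
      mk fun q => ((q / 2).choose m : R) := by
  refine PowerSeries.ext fun q => ?_
  rcases q with _ | q
  · simp
  · rw [add_mul, one_mul, map_add, coeff_succ_X_mul, coeff_expand, coeff_expand]
    simp only [coeff_mk]
    rcases Nat.even_or_odd' q with ⟨k, rfl | rfl⟩
    · rw [if_neg (by omega), if_pos (by omega), zero_add]
      congr 2
      omega
    · rw [if_pos (by omega), if_neg (by omega), add_zero]

theorem one_add_X_sq_mul_expand_mk_choose {m : ℕ} (hm : m ≠ 0) :
    (1 + X) ^ 2 * expand 2 two_ne_zero (mk fun k => (k.choose m : R)) =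
      mk fun q => ((q / 2).choose m + ((q - 1) / 2).choose m : R) := by
  rw [sq, mul_assoc, one_add_X_mul_expand_mk_choose]
  refine PowerSeries.ext fun q => ?_
  rcases q with _ | q
  · simp [Nat.choose_eq_zero_of_lt (Nat.pos_of_ne_zero hm)]
  · rw [add_mul, one_mul, map_add, coeff_succ_X_mul]
    simp

end PowerSeries

open PowerSeries in
/-- The generating function of the characteristic quasi-polynomial of `B_m`:
`Σ_{q≥1} χ_{B_m}(q) t^q = 2^{m−1} m! t^{2m} / ((1 − t)² (1 − t²)^{m−1})`, stated here
with denominators cleared, as an identity of formal power series over `ℤ`. -/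
theorem stmt_15 (m : ℕ) (hm : 2 ≤ m) :
    (PowerSeries.mk fun q =>
        if q = 0 then 0 else
          (Nat.card {z : Fin m → ZMod q //
            (∀ i, z i ≠ 0) ∧ ∀ i j : Fin m, i < j → z i ≠ z j ∧ z i + z j ≠ 0} : ℤ)) *
        ((1 - PowerSeries.X) ^ 2 * (1 - PowerSeries.X ^ 2) ^ (m - 1)) =
      (PowerSeries.C (R := ℤ)) (2 ^ (m - 1) * (Nat.factorial m : ℤ)) * PowerSeries.X ^ (2 * m) := by
  have hm0 : m ≠ 0 := by omega
  have hden : ((1 + X) ^ 2 * ((1 - X) ^ 2 * (1 - X ^ 2) ^ (m - 1)) : ℤ⟦X⟧) =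
      (1 - X ^ 2) ^ (m + 1) := by
    rw [← mul_assoc, ← mul_pow, show m + 1 = 2 + (m - 1) by omega, pow_add]
    ring
  calc _ = C (2 ^ (m - 1) * (m.factorial : ℤ)) *
        (mk fun q => ((q / 2).choose m + ((q - 1) / 2).choose m : ℤ)) *
        ((1 - X) ^ 2 * (1 - X ^ 2) ^ (m - 1)) := by
        congr 1
        ext q
        rw [coeff_C_mul, coeff_mk, coeff_mk]
        split_ifs with hq
        · simp [hq, Nat.choose_eq_zero_of_lt (Nat.pos_of_ne_zero hm0)]
        · have : NeZero q := ⟨hq⟩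
          rw [Nat.card_eq_fintype_card, Fintype.card_subtype,
            ← card_signedInjOff_zero_zmod q hm0]
          simp [SignedInjOff]
    _ = C (2 ^ (m - 1) * (m.factorial : ℤ)) *
        (expand 2 two_ne_zero (mk fun k => (k.choose m : ℤ)) * (1 - X ^ 2) ^ (m + 1)) := by
        rw [← one_add_X_sq_mul_expand_mk_choose hm0, ← hden]
        ring
    _ = _ := by rw [expand_mk_choose_mul_one_sub_sq_pow]
end

section
/- Let q be a positive integer and let χ_{M_4}(q) be the number of z = (z_1, z_2, z_3, z_4) ∈ (ℤ/qℤ)^4 such that z_i ≠ z_j for all 1 ≤ i < j ≤ 4 and z_1 + z_2 ≠ z_3 + z_4, z_1 + z_3 ≠ z_2 + z_4, z_1 + z_4 ≠ z_2 + z_3. Then χ_{M_4}(q) = q(q−1)(q−3)(q−5) if q is odd, and χ_{M_4}(q) = q(q−2)(q−3)(q−4) if q is even. -/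
/-!
Translating by `z 0` identifies the complement with `G × T`, where `T` is the set of triples
`(a, b, c) = (z 1 - z 0, z 2 - z 0, z 3 - z 0)` of distinct nonzero elements none of which is
the sum of the other two; this works in any finite abelian group `G`. The three conditions
`c = a + b`, `a = b + c`, `b = c + a` are permuted cyclically, so inclusion–exclusion needs only
three counts: one condition leaves a pair `(a, b)` with `a + b ≠ 0`, two of them force `2a = 0`,
and all three force `2a = 2b = 0`. With `n = |G|` and `t = #{x | 2x = 0}` this gives
`|T| = (n-1)(n-2)(n-3) - 3((n-1)(n-2) - (n-t)) + 3(t-1)(n-2) - (t-1)(t-2)`,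
and for `ℤ/qℤ` we have `t = 1` or `t = 2` according to the parity of `q`.
-/

open Finset

lemma ite_and_not_not_not (d x y z : Prop) [Decidable d] [Decidable x] [Decidable y]
    [Decidable z] :
    (if d ∧ ¬x ∧ ¬y ∧ ¬z then 1 else 0 : ℤ) =
      (if d then 1 else 0) - (if d ∧ x then 1 else 0) - (if d ∧ y then 1 else 0)
        - (if d ∧ z then 1 else 0) + (if d ∧ x ∧ y then 1 else 0)
        + (if d ∧ y ∧ z then 1 else 0) + (if d ∧ z ∧ x then 1 else 0)
        - (if d ∧ x ∧ y ∧ z then 1 else 0) := by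
  by_cases d <;> by_cases x <;> by_cases y <;> by_cases z <;> simp [*]

namespace Finset

variable {α : Type*}

lemma card_filter_inclusion_exclusion_cyclic [Fintype α] (σ : α ≃ α)
    (hσ : ∀ t, σ (σ (σ t)) = t) (D H : α → Prop) [DecidablePred D] [DecidablePred H]
    (hD : ∀ t, D (σ t) ↔ D t) :
    (#{t | D t ∧ ¬H t ∧ ¬H (σ t) ∧ ¬H (σ (σ t))} : ℤ) =
      #{t | D t} - 3 * #{t | D t ∧ H t} + 3 * #{t | D t ∧ H t ∧ H (σ t)}
        - #{t | D t ∧ H t ∧ H (σ t) ∧ H (σ (σ t))} := by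
  have shift (f : α → ℤ) : ∑ t, f (σ t) = ∑ t, f t := σ.sum_comp f
  simp only [natCast_card_filter, ite_and_not_not_not, sum_add_distrib, sum_sub_distrib]
  have h₁ := shift fun t => if D t ∧ H t then 1 else 0
  have h₂ := shift fun t => if D t ∧ H (σ t) then 1 else 0
  have h₁₂ := shift fun t => if D t ∧ H t ∧ H (σ t) then 1 else 0
  have h₂₃ := shift fun t => if D t ∧ H (σ t) ∧ H (σ (σ t)) then 1 else 0
  simp only [hD, hσ] at h₁ h₂ h₁₂ h₂₃
  linarith

lemma card_filter_ne_product [DecidableEq α] {s u : Finset α} (h : s ⊆ u) :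
    (#((s ×ˢ u).filter fun p => p.1 ≠ p.2) : ℤ) = #s * (#u - 1) := by
  have hdiag : (s ×ˢ u).filter (fun p => p.1 = p.2) = s.diag := by
    ext ⟨a, b⟩
    simp only [mem_filter, mem_product, mem_diag]
    constructor
    · rintro ⟨⟨ha, -⟩, rfl⟩
      exact ⟨ha, rfl⟩
    · rintro ⟨ha, rfl⟩
      exact ⟨⟨ha, h ha⟩, rfl⟩
  have hsplit := card_filter_add_card_filter_not (s := s ×ˢ u) (fun p => p.1 = p.2)
  rw [hdiag, diag_card, card_product] at hsplit
  zify at hsplit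
  simp only [ne_eq]
  linear_combination hsplit

end Finset

namespace MidHyperplane

open scoped Classical

variable {G : Type*} [AddCommGroup G]

def cycle (α : Type*) : α × α × α ≃ α × α × α where
  toFun t := (t.2.2, t.1, t.2.1)
  invFun t := (t.2.1, t.2.2, t.1)
  left_inv _ := rfl
  right_inv _ := rfl

def IsDistinctNonzero (t : G × G × G) : Prop :=
  t.1 ≠ 0 ∧ t.2.1 ≠ 0 ∧ t.2.2 ≠ 0 ∧ t.1 ≠ t.2.1 ∧ t.2.1 ≠ t.2.2 ∧ t.2.2 ≠ t.1

def IsSumTriple (t : G × G × G) : Prop := t.2.2 = t.1 + t.2.1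

def IsMidTriple (t : G × G × G) : Prop :=
  IsDistinctNonzero t ∧ ¬IsSumTriple t ∧ ¬IsSumTriple (cycle G t) ∧
    ¬IsSumTriple (cycle G (cycle G t))

lemma isDistinctNonzero_cycle (t : G × G × G) :
    IsDistinctNonzero (cycle G t) ↔ IsDistinctNonzero t := by
  simp only [IsDistinctNonzero, cycle, Equiv.coe_fn_mk]
  tauto

lemma eq_add_add_self_iff (a b : G) : b = a + b + a ↔ a + a = 0 := by
  rw [show a + b + a = b + (a + a) by abel, left_eq_add]

lemma eq_add_self_add_iff (a b : G) : a = b + (a + b) ↔ b + b = 0 := by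
  rw [show b + (a + b) = a + (b + b) by abel, left_eq_add]

lemma add_eq_zero_iff_eq_of_add_self_eq_zero {a b : G} (ha : a + a = 0) :
    a + b = 0 ↔ a = b := by
  rw [add_eq_zero_iff_eq_neg', neg_eq_of_add_eq_zero_right ha, eq_comm]

lemma midComplement_iff_isMidTriple (z : Fin 4 → G) :
    ((∀ i j : Fin 4, i < j → z i ≠ z j) ∧ z 0 + z 1 ≠ z 2 + z 3 ∧ z 0 + z 2 ≠ z 1 + z 3 ∧
      z 0 + z 3 ≠ z 1 + z 2) ↔ IsMidTriple (z 1 - z 0, z 2 - z 0, z 3 - z 0) := by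
  have hsum (x y u v : G) : y - x = (u - x) + (v - x) ↔ x + y = u + v := by
    rw [← sub_eq_zero, show y - x - (u - x + (v - x)) = x + y - (u + v) by abel, sub_eq_zero]
  have hpairs : (∀ i j : Fin 4, i < j → z i ≠ z j) ↔
      z 0 ≠ z 1 ∧ z 0 ≠ z 2 ∧ z 0 ≠ z 3 ∧ z 1 ≠ z 2 ∧ z 1 ≠ z 3 ∧ z 2 ≠ z 3 := by
    constructor
    · intro h
      exact ⟨h 0 1 (by decide), h 0 2 (by decide), h 0 3 (by decide), h 1 2 (by decide),
        h 1 3 (by decide), h 2 3 (by decide)⟩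
    · intro h i j hij
      fin_cases i <;> fin_cases j <;> simp_all
  simp only [IsMidTriple, IsDistinctNonzero, IsSumTriple, cycle, Equiv.coe_fn_mk, hpairs, hsum,
    sub_ne_zero, ne_eq, sub_left_inj]
  rw [add_comm (z 3) (z 1)]
  tauto

variable [Fintype G]

lemma natCard_midComplement_eq :
    Nat.card {z : Fin 4 → G // (∀ i j : Fin 4, i < j → z i ≠ z j) ∧
        z 0 + z 1 ≠ z 2 + z 3 ∧ z 0 + z 2 ≠ z 1 + z 3 ∧ z 0 + z 3 ≠ z 1 + z 2} =
      Fintype.card G * #{t : G × G × G | IsMidTriple t} := by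
  let e : (Fin 4 → G) ≃ (G × G × G) × G :=
    { toFun z := ((z 1 - z 0, z 2 - z 0, z 3 - z 0), z 0)
      invFun w := ![w.2, w.2 + w.1.1, w.2 + w.1.2.1, w.2 + w.1.2.2]
      left_inv z := by funext i; fin_cases i <;> simp
      right_inv w := by simp }
  rw [Nat.card_congr ((e.subtypeEquiv midComplement_iff_isMidTriple).trans
      Equiv.prodSubtypeFstEquivSubtypeProd), Nat.card_prod, Nat.card_eq_fintype_card,
    Nat.card_eq_fintype_card, Fintype.card_subtype, mul_comm]

lemma card_filter_of_imp_isSumTriple (Q : G × G × G → Prop) [DecidablePred Q]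
    (hQ : ∀ t, Q t → IsSumTriple t) :
    #{t | Q t} = #{p : G × G | Q (p.1, p.2, p.1 + p.2)} := by
  refine card_nbij' (fun t => (t.1, t.2.1)) (fun p => (p.1, p.2, p.1 + p.2)) ?_ ?_ ?_
    (fun _ _ => rfl) <;>
    simp only [Set.MapsTo, Set.LeftInvOn, mem_coe, mem_filter, mem_univ, true_and]
  · rintro ⟨a, b, c⟩ h
    obtain rfl : c = a + b := hQ _ h
    exact h
  · exact fun _ h => h
  · rintro ⟨a, b, c⟩ h
    obtain rfl : c = a + b := hQ _ h
    rfl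

variable [DecidableEq G]

lemma card_add_self_ne_zero :
    (#{x : G | x + x ≠ 0} : ℤ) = Fintype.card G - #{x : G | x + x = 0} := by
  have hsplit := card_filter_add_card_filter_not (s := (univ : Finset G)) (fun x => x + x = 0)
  rw [card_univ] at hsplit
  simp only [ne_eq]
  omega

lemma card_pairs_ne_zero_of_subset {s u : Finset G} (hsu : s ⊆ u) (hs : (0 : G) ∈ s) :
    (#{p : G × G | p.1 ∈ s ∧ p.2 ∈ u ∧ p.1 ≠ 0 ∧ p.2 ≠ 0 ∧ p.1 ≠ p.2} : ℤ) =
      (#s - 1) * (#u - 2) := by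
  have hfilter : ({p : G × G | p.1 ∈ s ∧ p.2 ∈ u ∧ p.1 ≠ 0 ∧ p.2 ≠ 0 ∧ p.1 ≠ p.2} : Finset _) =
      (s.erase 0 ×ˢ u.erase 0).filter fun p => p.1 ≠ p.2 := by
    ext p
    simp only [mem_filter, mem_univ, true_and, mem_product, mem_erase]
    tauto
  have hs' := card_erase_add_one hs
  have hu' := card_erase_add_one (hsu hs)
  rw [hfilter, card_filter_ne_product (erase_subset_erase 0 hsu)]
  zify at hs' hu'
  rw [← hs', ← hu']
  ring

lemma card_pairs_ne_zero :
    (#{p : G × G | p.1 ≠ 0 ∧ p.2 ≠ 0 ∧ p.1 ≠ p.2} : ℤ) =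
      (Fintype.card G - 1) * (Fintype.card G - 2) := by
  simpa using card_pairs_ne_zero_of_subset (subset_refl univ) (mem_univ (0 : G))

lemma card_pairs_ne_zero_add_self_eq_zero :
    (#{p : G × G | p.1 + p.1 = 0 ∧ p.1 ≠ 0 ∧ p.2 ≠ 0 ∧ p.1 ≠ p.2} : ℤ) =
      (#{x : G | x + x = 0} - 1) * (Fintype.card G - 2) := by
  simpa using card_pairs_ne_zero_of_subset (subset_univ ({x : G | x + x = 0} : Finset G))
    (by simp)

lemma card_pairs_ne_zero_both_add_self_eq_zero :
    (#{p : G × G | p.1 + p.1 = 0 ∧ p.2 + p.2 = 0 ∧ p.1 ≠ 0 ∧ p.2 ≠ 0 ∧ p.1 ≠ p.2} : ℤ) =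
      (#{x : G | x + x = 0} - 1) * (#{x : G | x + x = 0} - 2) := by
  simpa using card_pairs_ne_zero_of_subset (subset_refl ({x : G | x + x = 0} : Finset G))
    (by simp)

lemma card_pairs_ne_zero_add_eq_zero :
    #{p : G × G | p.1 ≠ 0 ∧ p.2 ≠ 0 ∧ p.1 ≠ p.2 ∧ p.1 + p.2 = 0} = #{x : G | x + x ≠ 0} := by
  refine card_nbij' (fun p => p.1) (fun a => (a, -a)) ?_ ?_ ?_ (fun _ _ => rfl) <;>
    simp only [Set.MapsTo, Set.LeftInvOn, mem_coe, mem_filter, mem_univ, true_and]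
  · rintro ⟨a, b⟩ ⟨-, -, hab, hsum⟩
    obtain rfl : b = -a := eq_neg_of_add_eq_zero_right hsum
    exact fun h => hab (eq_neg_iff_add_eq_zero.mpr h)
  · intro a ha
    refine ⟨?_, ?_, fun h => ha (eq_neg_iff_add_eq_zero.mp h), add_neg_cancel a⟩ <;>
    · rintro h
      simp_all
  · rintro ⟨a, b⟩ ⟨-, -, -, hsum⟩
    simp [neg_eq_of_add_eq_zero_right hsum]

lemma card_isDistinctNonzero :
    (#{t : G × G × G | IsDistinctNonzero t} : ℤ) =
      (Fintype.card G - 1) * (Fintype.card G - 2) * (Fintype.card G - 3) := by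
  set PF : Finset (G × G) := {p | p.1 ≠ 0 ∧ p.2 ≠ 0 ∧ p.1 ≠ p.2}
  have hsigma : #{t : G × G × G | IsDistinctNonzero t} =
      #(PF.sigma fun p => univ \ {0, p.1, p.2}) := by
    refine card_nbij' (fun t => ⟨(t.1, t.2.1), t.2.2⟩) (fun x => (x.1.1, x.1.2, x.2)) ?_ ?_
      (fun _ _ => rfl) (fun _ _ => rfl) <;>
    · simp only [Set.MapsTo, mem_coe, mem_filter, mem_sigma, mem_univ, true_and, mem_sdiff,
        mem_insert, mem_singleton, PF]
      simp only [IsDistinctNonzero]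
      tauto
  have hfiber : ∀ p ∈ PF, (#(univ \ {0, p.1, p.2}) : ℤ) = Fintype.card G - 3 := by
    rintro ⟨a, b⟩ hp
    obtain ⟨ha, hb, hab⟩ : a ≠ 0 ∧ b ≠ 0 ∧ a ≠ b := by simpa [PF] using hp
    rw [card_univ_sdiff, Nat.cast_sub (card_le_univ _),
      card_insert_of_notMem (by simp [ha.symm, hb.symm]), card_pair hab]
    push_cast
    ring
  rw [hsigma, card_sigma, Nat.cast_sum, sum_congr rfl hfiber, sum_const, nsmul_eq_mul,
    card_pairs_ne_zero]

lemma card_isDistinctNonzero_isSumTriple :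
    (#{t : G × G × G | IsDistinctNonzero t ∧ IsSumTriple t} : ℤ) =
      (Fintype.card G - 1) * (Fintype.card G - 2) -
        (Fintype.card G - #{x : G | x + x = 0}) := by
  rw [card_filter_of_imp_isSumTriple _ fun _ h => h.2]
  have hsplit := card_filter_add_card_filter_not
    (s := ({p | p.1 ≠ 0 ∧ p.2 ≠ 0 ∧ p.1 ≠ p.2} : Finset (G × G))) (fun p => p.1 + p.2 = 0)
  simp only [filter_filter, and_assoc] at hsplit
  rw [card_pairs_ne_zero_add_eq_zero] at hsplit
  have hfilter : ({p : G × G | IsDistinctNonzero (p.1, p.2, p.1 + p.2) ∧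
      IsSumTriple (p.1, p.2, p.1 + p.2)} : Finset (G × G)) =
      ({p : G × G | p.1 ≠ 0 ∧ p.2 ≠ 0 ∧ p.1 ≠ p.2 ∧ ¬p.1 + p.2 = 0} : Finset (G × G)) := by
    ext p
    simp only [mem_filter, mem_univ, true_and]
    simp only [IsDistinctNonzero, IsSumTriple, ne_eq, right_eq_add, add_eq_left, and_true]
    tauto
  rw [hfilter, ← card_pairs_ne_zero, ← hsplit]
  push_cast
  rw [card_add_self_ne_zero]
  ring

lemma card_isDistinctNonzero_isSumTriple_cycle :
    (#{t : G × G × G | IsDistinctNonzero t ∧ IsSumTriple t ∧ IsSumTriple (cycle G t)} : ℤ) =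
      (#{x : G | x + x = 0} - 1) * (Fintype.card G - 2) := by
  rw [card_filter_of_imp_isSumTriple _ fun _ h => h.2.1, ← card_pairs_ne_zero_add_self_eq_zero]
  congr 2
  ext ⟨a, b⟩
  simp only [mem_filter, mem_univ, true_and]
  simp only [IsDistinctNonzero, IsSumTriple, cycle, Equiv.coe_fn_mk, ne_eq, right_eq_add,
    add_eq_left, eq_add_add_self_iff, true_and]
  constructor
  · tauto
  · rintro ⟨h2a, ha, hb, hab⟩
    have := (add_eq_zero_iff_eq_of_add_self_eq_zero h2a).not.mpr hab
    tauto

lemma card_isDistinctNonzero_isSumTriple_cycle_cycle :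
    (#{t : G × G × G | IsDistinctNonzero t ∧ IsSumTriple t ∧ IsSumTriple (cycle G t) ∧
        IsSumTriple (cycle G (cycle G t))} : ℤ) =
      (#{x : G | x + x = 0} - 1) * (#{x : G | x + x = 0} - 2) := by
  rw [card_filter_of_imp_isSumTriple _ fun _ h => h.2.1,
    ← card_pairs_ne_zero_both_add_self_eq_zero]
  congr 2
  ext ⟨a, b⟩
  simp only [mem_filter, mem_univ, true_and]
  simp only [IsDistinctNonzero, IsSumTriple, cycle, Equiv.coe_fn_mk, ne_eq, right_eq_add,
    add_eq_left, eq_add_add_self_iff, eq_add_self_add_iff, true_and]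
  constructor
  · tauto
  · rintro ⟨h2a, h2b, ha, hb, hab⟩
    have := (add_eq_zero_iff_eq_of_add_self_eq_zero h2a).not.mpr hab
    tauto

lemma card_isMidTriple :
    (#{t : G × G × G | IsMidTriple t} : ℤ) =
      (Fintype.card G - 1) * (Fintype.card G - 2) * (Fintype.card G - 3)
        - 3 * ((Fintype.card G - 1) * (Fintype.card G - 2)
          - (Fintype.card G - #{x : G | x + x = 0}))
        + 3 * ((#{x : G | x + x = 0} - 1) * (Fintype.card G - 2))
        - (#{x : G | x + x = 0} - 1) * (#{x : G | x + x = 0} - 2) := by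
  have hmid : #{t : G × G × G | IsMidTriple t} = #{t : G × G × G | IsDistinctNonzero t ∧
      ¬IsSumTriple t ∧ ¬IsSumTriple (cycle G t) ∧ ¬IsSumTriple (cycle G (cycle G t))} := by
    simp only [IsMidTriple]
    congr
  rw [hmid, card_filter_inclusion_exclusion_cyclic (cycle G) (fun _ => rfl) _ _
      isDistinctNonzero_cycle, card_isDistinctNonzero, card_isDistinctNonzero_isSumTriple,
    card_isDistinctNonzero_isSumTriple_cycle, card_isDistinctNonzero_isSumTriple_cycle_cycle]

end MidHyperplane

lemma ZMod.add_self_eq_zero_iff_val {q : ℕ} [NeZero q] (x : ZMod q) :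
    x + x = 0 ↔ x.val = 0 ∨ x.val + x.val = q := by
  have hlt := x.val_lt
  rw [← natCast_zmod_val x, ← Nat.cast_add, natCast_eq_zero_iff, natCast_zmod_val]
  constructor
  · rintro ⟨k, hk⟩
    have : k < 2 := by nlinarith
    interval_cases k <;> omega
  · rintro (h | h)
    · simp [h]
    · rw [h]

lemma ZMod.card_add_self_eq_zero (q : ℕ) [NeZero q] :
    #{x : ZMod q | x + x = 0} = if q % 2 = 1 then 1 else 2 := by
  have heq_natCast (x : ZMod q) {m : ℕ} (hm : m < q) : x = m ↔ x.val = m := by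
    constructor
    · rintro rfl
      exact val_natCast_of_lt hm
    · intro h
      rw [← h, natCast_zmod_val]
  split_ifs with hq
  · rw [card_eq_one]
    refine ⟨0, ?_⟩
    ext x
    simp only [mem_filter, mem_univ, true_and, mem_singleton, add_self_eq_zero_iff_val]
    rw [← val_eq_zero]
    omega
  · have hhalf : q / 2 < q := Nat.div_lt_self (Nat.pos_of_neZero q) one_lt_two
    rw [card_eq_two]
    refine ⟨0, ((q / 2 : ℕ) : ZMod q), ?_, ?_⟩
    · rw [ne_comm, Ne, ← val_eq_zero, val_natCast_of_lt hhalf]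
      omega
    ext x
    simp only [mem_filter, mem_univ, true_and, mem_insert, mem_singleton,
      add_self_eq_zero_iff_val, heq_natCast x hhalf]
    rw [← val_eq_zero]
    omega

/-- The characteristic quasi-polynomial of the mid-hyperplane arrangement `M_4`:
for a positive integer `q`, the number of `z ∈ (ℤ/qℤ)^4` with pairwise distinct
coordinates and `z_1 + z_2 ≠ z_3 + z_4`, `z_1 + z_3 ≠ z_2 + z_4`,
`z_1 + z_4 ≠ z_2 + z_3` equals `q(q−1)(q−3)(q−5)` if `q` is odd and
`q(q−2)(q−3)(q−4)` if `q` is even. -/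
theorem stmt_17 (q : ℕ) (hq : 0 < q) :
    (Nat.card {z : Fin 4 → ZMod q //
        (∀ i j : Fin 4, i < j → z i ≠ z j) ∧
        z 0 + z 1 ≠ z 2 + z 3 ∧ z 0 + z 2 ≠ z 1 + z 3 ∧ z 0 + z 3 ≠ z 1 + z 2} : ℤ) =
      if q % 2 = 1 then
        (q : ℤ) * ((q : ℤ) - 1) * ((q : ℤ) - 3) * ((q : ℤ) - 5)
      else
        (q : ℤ) * ((q : ℤ) - 2) * ((q : ℤ) - 3) * ((q : ℤ) - 4) := by
  have : NeZero q := ⟨hq.ne'⟩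
  rw [MidHyperplane.natCard_midComplement_eq, Nat.cast_mul, MidHyperplane.card_isMidTriple,
    ZMod.card, ZMod.card_add_self_eq_zero]
  split_ifs <;> push_cast <;> ring
end

section
/- As formal power series in t, Σ_{q=1}^{∞} χ_{M_4}(q) t^q = 48 t^6 (t + 3) / ((1 − t)^5 (1 + t)^3), where χ_{M_4}(q) is the number of z ∈ (ℤ/qℤ)^4 with z_i ≠ z_j for all 1 ≤ i < j ≤ 4 and z_1 + z_2 ≠ z_3 + z_4, z_1 + z_3 ≠ z_2 + z_4, z_1 + z_4 ≠ z_2 + z_3. -/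
/-!
Translating by `-z 3` identifies the points of `G⁴` off `M_4` with `|G|` copies of the triples
`(a, b, c)` for which `0, a, b, c` are distinct and none of `a, b, c` is the sum of the other two.
Relabelling the triple permutes these three relations, so inclusion–exclusion needs one count for
each number of relations imposed. Once `a = b + c` holds, a second relation forces `2 • b = 0` or
`2 • c = 0`; hence, with `n = |G|` and `s = #{x | 2 • x = 0}`, there are
`(n-1)(n-2)(n-3) - 3((n-1)(n-3) + s - 1) + 3(s-1)(n-2) - (s-1)(s-2)` such triples.
In `ZMod q` we have `s = gcd(q, 2)`, so `χ(q) = q(q-2)(q-3)(q-4)` for even `q` and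
`q(q-1)(q-3)(q-5)` for odd `q`; the power-series identity is then a coefficient check.
-/

open Finset

section Counting

variable {α β : Type*}

lemma card_filter_notMem_of_subset [DecidableEq α] {s t : Finset α} (h : t ⊆ s) :
    (#{x ∈ s | x ∉ t} : ℤ) = #s - #t := by
  rw [filter_notMem_eq_sdiff, card_sdiff_of_subset h, Nat.cast_sub (card_le_card h)]

variable [Fintype α] [Fintype β]

lemma card_filter_notMem [DecidableEq α] (t : Finset α) :
    (#{x | x ∉ t} : ℤ) = Fintype.card α - #t := by
  rw [card_filter_notMem_of_subset (subset_univ t), card_univ]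

lemma card_filter_and_not_three (d p q r : α → Prop) [DecidablePred d] [DecidablePred p]
    [DecidablePred q] [DecidablePred r] :
    (#{x | d x ∧ ¬p x ∧ ¬q x ∧ ¬r x} : ℤ) =
      #{x | d x} - #{x | d x ∧ p x} - #{x | d x ∧ q x} - #{x | d x ∧ r x}
        + #{x | d x ∧ p x ∧ q x} + #{x | d x ∧ p x ∧ r x} + #{x | d x ∧ q x ∧ r x}
        - #{x | d x ∧ p x ∧ q x ∧ r x} := by
  simp only [card_filter, Nat.cast_sum, Nat.cast_ite, Nat.cast_one, Nat.cast_zero,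
    ← sum_add_distrib, ← sum_sub_distrib]
  refine sum_congr rfl fun x _ => ?_
  by_cases d x <;> by_cases p x <;> by_cases q x <;> by_cases r x <;> simp [*]

lemma card_filter_congr_involutive {f : α → α} (hf : Function.Involutive f) {P Q : α → Prop}
    [DecidablePred P] [DecidablePred Q] (h : ∀ x, P x ↔ Q (f x)) : #{x | P x} = #{x | Q x} :=
  card_equiv (hf.toPerm f) (by simp [h])

lemma card_filter_prod_eq_sum (P : α → Prop) (Q : α → β → Prop) [DecidablePred P]
    [∀ a, DecidablePred (Q a)] :
    #{x : α × β | P x.1 ∧ Q x.1 x.2} = ∑ a ∈ {a | P a}, #{b | Q a b} := by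
  rw [card_filter, Fintype.sum_prod_type, sum_filter]
  refine sum_congr rfl fun a _ => ?_
  by_cases h : P a <;>
    simp only [h, true_and, false_and, card_filter, if_true, if_false, sum_const_zero]

lemma card_filter_prod_of_card_fiber (P : α → Prop) (Q : α → β → Prop) [DecidablePred P]
    [∀ a, DecidablePred (Q a)] {m : ℤ} (h : ∀ a, P a → (#{b | Q a b} : ℤ) = m) :
    (#{x : α × β | P x.1 ∧ Q x.1 x.2} : ℤ) = #{a | P a} * m := by
  rw [card_filter_prod_eq_sum, Nat.cast_sum, sum_congr rfl fun a ha => h a (mem_filter.1 ha).2,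
    sum_const, nsmul_eq_mul]

lemma card_filter_graph [DecidableEq α] (f : β → α) (P : β → Prop) [DecidablePred P] :
    #{x : α × β | x.1 = f x.2 ∧ P x.2} = #{b | P b} :=
  card_nbij' Prod.snd (fun b => (f b, b)) (fun x hx => by simp_all) (fun b hb => by simp_all)
    (fun x hx => by simp_all [Prod.ext_iff]) (fun b _ => rfl)

end Counting

section MidArrangement

variable {G : Type*} [AddCommGroup G]

def AvoidsMid (z : Fin 4 → G) : Prop :=
  (∀ i j : Fin 4, i < j → z i ≠ z j) ∧
    z 0 + z 1 ≠ z 2 + z 3 ∧ z 0 + z 2 ≠ z 1 + z 3 ∧ z 0 + z 3 ≠ z 1 + z 2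

def DistinctWithZero (p : G × G × G) : Prop :=
  p.1 ≠ 0 ∧ p.2.1 ≠ 0 ∧ p.2.2 ≠ 0 ∧ p.1 ≠ p.2.1 ∧ p.1 ≠ p.2.2 ∧ p.2.1 ≠ p.2.2

def IsGenericTriple (p : G × G × G) : Prop :=
  DistinctWithZero p ∧ p.2.2 ≠ p.1 + p.2.1 ∧ p.2.1 ≠ p.1 + p.2.2 ∧ p.1 ≠ p.2.1 + p.2.2

lemma avoidsMid_iff (z : Fin 4 → G) :
    AvoidsMid z ↔ IsGenericTriple (z 0 - z 3, z 1 - z 3, z 2 - z 3) := by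
  simp only [AvoidsMid, IsGenericTriple, DistinctWithZero, Fin.forall_fin_succ, IsEmpty.forall_iff,
    and_true]
  grind

def avoidsMidEquiv :
    {z : Fin 4 → G // AvoidsMid z} ≃ G × {p : G × G × G // IsGenericTriple p} where
  toFun z := (z.1 3, ⟨_, (avoidsMid_iff z.1).1 z.2⟩)
  invFun x := ⟨![x.2.1.1 + x.1, x.2.1.2.1 + x.1, x.2.1.2.2 + x.1, x.1],
    (avoidsMid_iff _).2 (by simpa using x.2.2)⟩
  left_inv z := Subtype.ext (funext fun i => by fin_cases i <;> simp)
  right_inv x := by simp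

variable [DecidableEq G]

instance : DecidablePred (DistinctWithZero (G := G)) :=
  fun _ => inferInstanceAs (Decidable (_ ∧ _))

instance : DecidablePred (IsGenericTriple (G := G)) :=
  fun _ => inferInstanceAs (Decidable (_ ∧ _))

lemma card_zero_self_neg {a : G} (ha : a ≠ 0) :
    (#({0, a, -a} : Finset G) : ℤ) = 3 - if 2 • a = 0 then 1 else 0 := by
  have hneg : -a = a ↔ 2 • a = 0 := by rw [neg_eq_iff_add_eq_zero, two_nsmul]
  by_cases h : 2 • a = 0
  · simp [h, hneg.2 h, Ne.symm ha]
  · rw [card_insert_of_notMem (by simp [ha, Ne.symm ha]), card_pair (Ne.symm (mt hneg.1 h))]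
    simp [h]

variable [Fintype G]

lemma card_two_torsion_notMem_zero :
    (#{a : G | 2 • a = 0 ∧ a ∉ ({0} : Finset G)} : ℤ) = #{a : G | 2 • a = 0} - 1 := by
  rw [← filter_filter, card_filter_notMem_of_subset (by simp), card_singleton, Nat.cast_one]

lemma card_distinctWithZero :
    (#{p : G × G × G | DistinctWithZero p} : ℤ) =
      (Fintype.card G - 1) * (Fintype.card G - 2) * (Fintype.card G - 3) := by
  have hD : ∀ p : G × G × G, DistinctWithZero p ↔ p.1 ∉ ({0} : Finset G) ∧
      p.2.1 ∉ ({0, p.1} : Finset G) ∧ p.2.2 ∉ ({0, p.1, p.2.1} : Finset G) := by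
    intro p; simp only [DistinctWithZero, mem_insert, mem_singleton]; grind
  have hfiber : ∀ a : G, a ≠ 0 → (#{x : G × G | x.1 ∉ ({0, a} : Finset G) ∧
      x.2 ∉ ({0, a, x.1} : Finset G)} : ℤ) = (Fintype.card G - 2) * (Fintype.card G - 3) := by
    intro a ha
    rw [card_filter_prod_of_card_fiber (fun b => b ∉ ({0, a} : Finset G))
      (fun b c => c ∉ ({0, a, b} : Finset G)) (m := Fintype.card G - 3) fun b hb => ?_,
      card_filter_notMem, card_pair (Ne.symm ha)]
    · push_cast; ring
    simp only [mem_insert, mem_singleton, not_or] at hb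
    rw [card_filter_notMem, card_insert_of_notMem (by simp [Ne.symm ha, Ne.symm hb.1]),
      card_pair (Ne.symm hb.2)]
    push_cast; ring
  rw [filter_congr fun p _ => hD p, card_filter_prod_of_card_fiber (fun a => a ∉ ({0} : Finset G))
    _ fun a ha => hfiber a (by simpa using ha), card_filter_notMem, card_singleton]
  push_cast; ring

lemma card_distinctWithZero_fst_eq_add :
    (#{p : G × G × G | DistinctWithZero p ∧ p.1 = p.2.1 + p.2.2} : ℤ) =
      (Fintype.card G - 1) * (Fintype.card G - 3) + (#{a : G | 2 • a = 0} - 1) := by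
  have hgraph : ∀ p : G × G × G, (DistinctWithZero p ∧ p.1 = p.2.1 + p.2.2) ↔
      p.1 = p.2.1 + p.2.2 ∧
        (p.2.1 ∉ ({0} : Finset G) ∧ p.2.2 ∉ ({0, p.2.1, -p.2.1} : Finset G)) := by
    intro p; simp only [DistinctWithZero, mem_insert, mem_singleton]; grind
  rw [filter_congr fun p _ => hgraph p, card_filter_graph (fun x : G × G => x.1 + x.2)
    (fun x => x.1 ∉ ({0} : Finset G) ∧ x.2 ∉ ({0, x.1, -x.1} : Finset G)),
    card_filter_prod_eq_sum (fun a => a ∉ ({0} : Finset G))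
      (fun a b => b ∉ ({0, a, -a} : Finset G)), Nat.cast_sum]
  calc ∑ a ∈ {a : G | a ∉ ({0} : Finset G)}, (#{b | b ∉ ({0, a, -a} : Finset G)} : ℤ)
      = ∑ a ∈ {a : G | a ∉ ({0} : Finset G)},
          ((Fintype.card G - 3 : ℤ) + if 2 • a = 0 then 1 else 0) := by
        refine sum_congr rfl fun a ha => ?_
        rw [card_filter_notMem, card_zero_self_neg (by simpa using ha)]
        ring
    _ = _ := by
        rw [sum_add_distrib, sum_const, sum_boole, filter_comm, filter_filter,
          card_two_torsion_notMem_zero, nsmul_eq_mul, card_filter_notMem, card_singleton]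
        push_cast; ring

lemma card_distinctWithZero_two_relations :
    (#{p : G × G × G | DistinctWithZero p ∧ p.2.2 = p.1 + p.2.1 ∧ p.1 = p.2.1 + p.2.2} : ℤ) =
      (#{a : G | 2 • a = 0} - 1) * (Fintype.card G - 2) := by
  have hgraph : ∀ p : G × G × G,
      (DistinctWithZero p ∧ p.2.2 = p.1 + p.2.1 ∧ p.1 = p.2.1 + p.2.2) ↔ p.1 = p.2.1 + p.2.2 ∧
        ((2 • p.2.1 = 0 ∧ p.2.1 ∉ ({0} : Finset G)) ∧ p.2.2 ∉ ({0, p.2.1} : Finset G)) := by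
    intro p
    simp only [DistinctWithZero, mem_insert, mem_singleton, two_nsmul]
    grind [add_eq_left, add_eq_right]
  rw [filter_congr fun p _ => hgraph p, card_filter_graph (fun x : G × G => x.1 + x.2)
    (fun x => (2 • x.1 = 0 ∧ x.1 ∉ ({0} : Finset G)) ∧ x.2 ∉ ({0, x.1} : Finset G)),
    card_filter_prod_of_card_fiber (fun a => 2 • a = 0 ∧ a ∉ ({0} : Finset G))
      (fun a b => b ∉ ({0, a} : Finset G)) (m := Fintype.card G - 2) fun a ha => ?_,
    card_two_torsion_notMem_zero]
  rw [card_filter_notMem, card_pair (by simpa [eq_comm] using ha.2)]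
  rfl

lemma card_distinctWithZero_three_relations :
    (#{p : G × G × G | DistinctWithZero p ∧ p.2.2 = p.1 + p.2.1 ∧ p.2.1 = p.1 + p.2.2 ∧
        p.1 = p.2.1 + p.2.2} : ℤ) =
      (#{a : G | 2 • a = 0} - 1) * (#{a : G | 2 • a = 0} - 2) := by
  have hgraph : ∀ p : G × G × G, (DistinctWithZero p ∧ p.2.2 = p.1 + p.2.1 ∧
      p.2.1 = p.1 + p.2.2 ∧ p.1 = p.2.1 + p.2.2) ↔ p.1 = p.2.1 + p.2.2 ∧
        ((2 • p.2.1 = 0 ∧ p.2.1 ∉ ({0} : Finset G)) ∧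
          (2 • p.2.2 = 0 ∧ p.2.2 ∉ ({0, p.2.1} : Finset G))) := by
    intro p
    simp only [DistinctWithZero, mem_insert, mem_singleton, two_nsmul]
    grind [add_eq_left, add_eq_right]
  rw [filter_congr fun p _ => hgraph p, card_filter_graph (fun x : G × G => x.1 + x.2)
    (fun x => (2 • x.1 = 0 ∧ x.1 ∉ ({0} : Finset G)) ∧
      2 • x.2 = 0 ∧ x.2 ∉ ({0, x.1} : Finset G)),
    card_filter_prod_of_card_fiber (fun a => 2 • a = 0 ∧ a ∉ ({0} : Finset G))
      (fun a b => 2 • b = 0 ∧ b ∉ ({0, a} : Finset G)) (m := #{a : G | 2 • a = 0} - 2)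
      fun a ha => ?_,
    card_two_torsion_notMem_zero]
  rw [← filter_filter, card_filter_notMem_of_subset (by simp [insert_subset_iff, ha.1]),
    card_pair (by simpa [eq_comm] using ha.2)]
  rfl

lemma card_isGenericTriple :
    (#{p : G × G × G | IsGenericTriple p} : ℤ) =
      (Fintype.card G - 1) * (Fintype.card G - 2) * (Fintype.card G - 3)
        - 3 * ((Fintype.card G - 1) * (Fintype.card G - 3) + (#{a : G | 2 • a = 0} - 1))
        + 3 * ((#{a : G | 2 • a = 0} - 1) * (Fintype.card G - 2))
        - (#{a : G | 2 • a = 0} - 1) * (#{a : G | 2 • a = 0} - 2) := by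
  have swapAC : Function.Involutive fun p : G × G × G => (p.2.2, p.2.1, p.1) := fun _ => rfl
  have swapAB : Function.Involutive fun p : G × G × G => (p.2.1, p.1, p.2.2) := fun _ => rfl
  have swapBC : Function.Involutive fun p : G × G × G => (p.1, p.2.2, p.2.1) := fun _ => rfl
  have hA := card_filter_congr_involutive swapAC
    (P := fun p => DistinctWithZero p ∧ p.2.2 = p.1 + p.2.1)
    (Q := fun p => DistinctWithZero p ∧ p.1 = p.2.1 + p.2.2)
    fun p => by simp only [DistinctWithZero]; grind
  have hB := card_filter_congr_involutive swapAB
    (P := fun p => DistinctWithZero p ∧ p.2.1 = p.1 + p.2.2)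
    (Q := fun p => DistinctWithZero p ∧ p.1 = p.2.1 + p.2.2)
    fun p => by simp only [DistinctWithZero]; grind
  have hAB := card_filter_congr_involutive swapAB
    (P := fun p => DistinctWithZero p ∧ p.2.2 = p.1 + p.2.1 ∧ p.2.1 = p.1 + p.2.2)
    (Q := fun p => DistinctWithZero p ∧ p.2.2 = p.1 + p.2.1 ∧ p.1 = p.2.1 + p.2.2)
    fun p => by simp only [DistinctWithZero]; grind
  have hBC := card_filter_congr_involutive swapBC
    (P := fun p => DistinctWithZero p ∧ p.2.1 = p.1 + p.2.2 ∧ p.1 = p.2.1 + p.2.2)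
    (Q := fun p => DistinctWithZero p ∧ p.2.2 = p.1 + p.2.1 ∧ p.1 = p.2.1 + p.2.2)
    fun p => by simp only [DistinctWithZero]; grind
  rw [show #{p : G × G × G | IsGenericTriple p} = #{p : G × G × G | DistinctWithZero p ∧
      ¬p.2.2 = p.1 + p.2.1 ∧ ¬p.2.1 = p.1 + p.2.2 ∧ ¬p.1 = p.2.1 + p.2.2} from rfl,
    card_filter_and_not_three, hA, hB, hAB, hBC, card_distinctWithZero,
    card_distinctWithZero_fst_eq_add, card_distinctWithZero_two_relations,
    card_distinctWithZero_three_relations]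
  ring

lemma card_avoidsMid :
    (Nat.card {z : Fin 4 → G // AvoidsMid z} : ℤ) =
      Fintype.card G * #{p : G × G × G | IsGenericTriple p} := by
  rw [Nat.card_congr avoidsMidEquiv, Nat.card_prod, Nat.card_eq_fintype_card,
    Nat.card_eq_fintype_card, Fintype.card_subtype]
  push_cast; rfl

end MidArrangement

lemma ZMod.card_two_nsmul_eq_zero (q : ℕ) [NeZero q] :
    #{x : ZMod q | 2 • x = 0} = if Even q then 2 else 1 := by
  have h := IsAddCyclic.card_nsmulAddMonoidHom_ker (ZMod q) 2
  rw [Nat.card_zmod, Nat.card_eq_fintype_card, Fintype.card_subtype] at h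
  simp only [AddMonoidHom.mem_ker, nsmulAddMonoidHom_apply] at h
  rw [h]
  split_ifs with he
  · exact Nat.gcd_eq_right (even_iff_two_dvd.mp he)
  · exact Nat.Coprime.symm (Nat.coprime_two_left.mpr (Nat.not_even_iff_odd.mp he))

def midQuasiPoly (q : ℕ) : ℤ :=
  if Even q then q * (q - 2) * (q - 3) * (q - 4) else q * (q - 1) * (q - 3) * (q - 5)

lemma card_avoidsMid_zmod (q : ℕ) [NeZero q] :
    (Nat.card {z : Fin 4 → ZMod q // AvoidsMid z} : ℤ) = midQuasiPoly q := by
  rw [card_avoidsMid, card_isGenericTriple, ZMod.card_two_nsmul_eq_zero, ZMod.card, midQuasiPoly]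
  split_ifs <;> push_cast <;> ring

open PowerSeries

lemma coeff_mk_mul_C_mul_X_pow (c : ℕ → ℤ) (a : ℤ) (k n : ℕ) :
    coeff n (mk c * (C a * X ^ k)) = if k ≤ n then a * c (n - k) else 0 := by
  rw [mul_left_comm, coeff_C_mul, coeff_mul_X_pow', coeff_mk]
  split_ifs <;> simp

lemma mk_midQuasiPoly_mul :
    mk midQuasiPoly * ((1 - X) ^ 5 * (1 + X) ^ 3) =
      C (R := ℤ) 48 * X ^ 6 * (X + C (R := ℤ) 3) := by
  have hD : ((1 - X) ^ 5 * (1 + X) ^ 3 : PowerSeries ℤ) =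
      C 1 * X ^ 0 + C (-2) * X ^ 1 + C (-2) * X ^ 2 + C 6 * X ^ 3 + C (-6) * X ^ 5
        + C 2 * X ^ 6 + C 2 * X ^ 7 + C (-1) * X ^ 8 := by
    simp only [map_neg, map_one, map_ofNat]; ring
  have hR : (C (R := ℤ) 48 * X ^ 6 * (X + C 3) : PowerSeries ℤ) =
      C 144 * X ^ 6 + C 48 * X ^ 7 := by
    simp only [map_ofNat]; ring
  rw [hD, hR]
  ext n
  simp only [mul_add, map_add, coeff_mk_mul_C_mul_X_pow, coeff_C_mul_X_pow]
  rcases Nat.lt_or_ge n 8 with hn | hn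
  · interval_cases n <;> decide
  · obtain ⟨m, rfl⟩ := Nat.exists_eq_add_of_le' hn
    simp only [show ∀ k ≤ 8, k ≤ m + 8 from fun k hk => by omega, if_true, if_false,
      show m + 8 ≠ 6 by omega, show m + 8 ≠ 7 by omega, Nat.reduceLeDiff, Nat.reduceSubDiff,
      Nat.sub_zero, midQuasiPoly, Nat.even_add, parity_simps]
    by_cases h : Even m <;> simp [h] <;> ring

/-- The generating function of the characteristic quasi-polynomial of the
mid-hyperplane arrangement `M_4`:
`Σ_{q≥1} χ_{M_4}(q) t^q = 48 t^6 (t + 3) / ((1 − t)^5 (1 + t)^3)`, stated here with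
denominators cleared, as an identity of formal power series over `ℤ`. -/
theorem stmt_18 :
    (PowerSeries.mk fun q =>
        if q = 0 then 0 else
          (Nat.card {z : Fin 4 → ZMod q //
            (∀ i j : Fin 4, i < j → z i ≠ z j) ∧
            z 0 + z 1 ≠ z 2 + z 3 ∧ z 0 + z 2 ≠ z 1 + z 3 ∧
              z 0 + z 3 ≠ z 1 + z 2} : ℤ)) *
        ((1 - PowerSeries.X) ^ 5 * (1 + PowerSeries.X) ^ 3) =
      PowerSeries.C (R := ℤ) 48 * PowerSeries.X ^ 6 *
        (PowerSeries.X + PowerSeries.C (R := ℤ) 3) := by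
  convert mk_midQuasiPoly_mul using 3
  funext q
  rcases eq_or_ne q 0 with rfl | hq
  · rfl
  · have : NeZero q := ⟨hq⟩
    rw [if_neg hq]
    exact card_avoidsMid_zmod q
end
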